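/- arXiv:2205.06559 — 10 statements merged into one kernel-verified Lean document; each statement's English description precedes it below -/
import Mathlib

section
/- Let F be a field of characteristic 3 and let C be the split Cayley algebra over F. Let σ be the F-linear map on C fixing e1, e2, u1, u2, v1, v3 and with σ(u3) = u3 + u2, σ(v2) = v2 − v3. Then σ is an algebra automorphism of C of order 3 (σ ≠ id, σ³ = id) preserving the norm n (n(σ(x)) = n(x) for all x), and (σ − id)² = 0. Moreover, setting δ = σ − id, B₀ = span{e1,e2,u1,v1} and B₁ = span{u3,v2}, one has the direct sum decomposition C = B₀ ⊕ B₁ ⊕ δ(B₁), and the superalgebra with even part B₀, odd part B₁, and product x•y defined by: x•y = proj_{B₀}(xy) for x,y ∈ B₀; x•y = proj_{B₁}(xy) for x ∈ B₀, y ∈ B₁ or x ∈ B₁, y ∈ B₀; and x•y = proj_{B₀}(x·δ(y)) for x,y ∈ B₁ (projections along this decomposition), is the composition superalgebra B(4,2): it is unital with unit e1+e2, the product of two even elements equals their product in C, and the remaining products are e1•u3 = u3, e2•u3 = 0, u1•u3 = −v2, v1•u3 = 0, e1•v2 = 0, e2•v2 = v2, u1•v2 = 0, v1•v2 = u3, u3•e1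 = 0, u3•e2 = u3, u3•u1 = v2, u3•v1 = 0, v2•e1 = v2, v2•e2 = 0, v2•u1 = 0, v2•v1 = −u3, u3•u3 = −v1, u3•v2 = e1, v2•u3 = −e2, v2•v2 = −u1. Furthermore the bilinear form nˢ defined by nˢ(x,y) = b(x,y) for x,y ∈ B₀, nˢ(x,y) = b(x,δ(y)) for x,y ∈ B₁, and nˢ(B₀,B₁) = nˢ(B₁,B₀) = 0 (b the polar form of n) satisfies nˢ(u3,v2) = −1 = −nˢ(v2,u3). -/
set_option maxHeartbeats 4000000 in
/-- In the split Cayley algebra over a field of characteristic 3, the linear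
map fixing `e1, e2, u1, u2, v1, v3` with `σ u3 = u3 + u2`, `σ v2 = v2 - v3` is an order 3
algebra automorphism preserving the norm, with `(σ - id)² = 0`; the associated
direct sum decomposition `C = B₀ ⊕ B₁ ⊕ δ(B₁)` (`B₀ = span{e1,e2,u1,v1}`,
`B₁ = span{u3,v2}`) yields, via the recipe, the composition superalgebra `B(4,2)`,
whose multiplication table and norm are given explicitly. -/
theorem split_cayley_order3_case1_gives_B42
    {F : Type*} [Field F] [CharP F 3]
    {C : Type*} [NonAssocRing C] [Module F C] [SMulCommClass F C C] [IsScalarTower F C C]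
    (e1 e2 u1 u2 u3 v1 v2 v3 : C)
    (hind : LinearIndependent F ![e1, e2, u1, u2, u3, v1, v2, v3])
    (hspan : Submodule.span F {e1, e2, u1, u2, u3, v1, v2, v3} = ⊤)
    (hone : (1 : C) = e1 + e2)
    -- multiplication table of the split Cayley algebra
    (t1 : e1 * e1 = e1) (t2 : e1 * e2 = 0) (t3 : e1 * u1 = u1) (t4 : e1 * u2 = u2)
    (t5 : e1 * u3 = u3) (t6 : e1 * v1 = 0) (t7 : e1 * v2 = 0) (t8 : e1 * v3 = 0)
    (t9 : e2 * e1 = 0) (t10 : e2 * e2 = e2) (t11 : e2 * u1 = 0) (t12 : e2 * u2 = 0)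
    (t13 : e2 * u3 = 0) (t14 : e2 * v1 = v1) (t15 : e2 * v2 = v2) (t16 : e2 * v3 = v3)
    (t17 : u1 * e1 = 0) (t18 : u1 * e2 = u1) (t19 : u1 * u1 = 0) (t20 : u1 * u2 = v3)
    (t21 : u1 * u3 = -v2) (t22 : u1 * v1 = -e1) (t23 : u1 * v2 = 0) (t24 : u1 * v3 = 0)
    (t25 : u2 * e1 = 0) (t26 : u2 * e2 = u2) (t27 : u2 * u1 = -v3) (t28 : u2 * u2 = 0)
    (t29 : u2 * u3 = v1) (t30 : u2 * v1 = 0) (t31 : u2 * v2 = -e1) (t32 : u2 * v3 = 0)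
    (t33 : u3 * e1 = 0) (t34 : u3 * e2 = u3) (t35 : u3 * u1 = v2) (t36 : u3 * u2 = -v1)
    (t37 : u3 * u3 = 0) (t38 : u3 * v1 = 0) (t39 : u3 * v2 = 0) (t40 : u3 * v3 = -e1)
    (t41 : v1 * e1 = v1) (t42 : v1 * e2 = 0) (t43 : v1 * u1 = -e2) (t44 : v1 * u2 = 0)
    (t45 : v1 * u3 = 0) (t46 : v1 * v1 = 0) (t47 : v1 * v2 = u3) (t48 : v1 * v3 = -u2)
    (t49 : v2 * e1 = v2) (t50 : v2 * e2 = 0) (t51 : v2 * u1 = 0) (t52 : v2 * u2 = -e2)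
    (t53 : v2 * u3 = 0) (t54 : v2 * v1 = -u3) (t55 : v2 * v2 = 0) (t56 : v2 * v3 = u1)
    (t57 : v3 * e1 = v3) (t58 : v3 * e2 = 0) (t59 : v3 * u1 = 0) (t60 : v3 * u2 = 0)
    (t61 : v3 * u3 = -e2) (t62 : v3 * v1 = u2) (t63 : v3 * v2 = -u1) (t64 : v3 * v3 = 0)
    -- the norm: a quadratic form vanishing on the basis, with hyperbolic polar form
    (n : QuadraticForm F C)
    (n1 : n e1 = 0) (n2 : n e2 = 0) (n3 : n u1 = 0) (n4 : n u2 = 0) (n5 : n u3 = 0)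
    (n6 : n v1 = 0) (n7 : n v2 = 0) (n8 : n v3 = 0)
    (b1 : QuadraticMap.polar n e1 e2 = 1)
    (b2 : QuadraticMap.polar n u1 v1 = 1)
    (b3 : QuadraticMap.polar n u2 v2 = 1)
    (b4 : QuadraticMap.polar n u3 v3 = 1)
    (z1 : QuadraticMap.polar n e1 u1 = 0) (z2 : QuadraticMap.polar n e1 u2 = 0)
    (z3 : QuadraticMap.polar n e1 u3 = 0) (z4 : QuadraticMap.polar n e1 v1 = 0)
    (z5 : QuadraticMap.polar n e1 v2 = 0) (z6 : QuadraticMap.polar n e1 v3 = 0)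
    (z7 : QuadraticMap.polar n e2 u1 = 0) (z8 : QuadraticMap.polar n e2 u2 = 0)
    (z9 : QuadraticMap.polar n e2 u3 = 0) (z10 : QuadraticMap.polar n e2 v1 = 0)
    (z11 : QuadraticMap.polar n e2 v2 = 0) (z12 : QuadraticMap.polar n e2 v3 = 0)
    (z13 : QuadraticMap.polar n u1 u2 = 0) (z14 : QuadraticMap.polar n u1 u3 = 0)
    (z15 : QuadraticMap.polar n u2 u3 = 0) (z16 : QuadraticMap.polar n v1 v2 = 0)
    (z17 : QuadraticMap.polar n v1 v3 = 0) (z18 : QuadraticMap.polar n v2 v3 = 0)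
    (z19 : QuadraticMap.polar n u1 v2 = 0) (z20 : QuadraticMap.polar n u1 v3 = 0)
    (z21 : QuadraticMap.polar n u2 v1 = 0) (z22 : QuadraticMap.polar n u2 v3 = 0)
    (z23 : QuadraticMap.polar n u3 v1 = 0) (z24 : QuadraticMap.polar n u3 v2 = 0)
    -- the order 3 automorphism of case (1)
    (σ : C →ₗ[F] C)
    (hs1 : σ e1 = e1) (hs2 : σ e2 = e2) (hs3 : σ u1 = u1) (hs4 : σ u2 = u2)
    (hs5 : σ u3 = u3 + u2) (hs6 : σ v1 = v1) (hs7 : σ v2 = v2 - v3) (hs8 : σ v3 = v3)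
    (δ : C →ₗ[F] C) (hδ : ∀ x : C, δ x = σ x - x) :
    -- σ is an algebra automorphism of order 3 preserving the norm, with (σ - id)² = 0
    (∀ x y : C, σ (x * y) = σ x * σ y) ∧
    σ ∘ₗ σ ∘ₗ σ = LinearMap.id ∧
    σ ≠ LinearMap.id ∧
    (∀ x : C, n (σ x) = n x) ∧
    δ ∘ₗ δ = 0 ∧
    -- the direct sum decomposition C = B₀ ⊕ B₁ ⊕ δ(B₁)
    DirectSum.IsInternal
      ![Submodule.span F {e1, e2, u1, v1}, Submodule.span F {u3, v2},
        (Submodule.span F {u3, v2}).map δ] ∧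
    -- the recipe superalgebra is B(4,2)
    (∀ p q : C →ₗ[F] C,
      (∀ x ∈ Submodule.span F {e1, e2, u1, v1}, p x = x) →
      (∀ x ∈ Submodule.span F {u3, v2} ⊔ (Submodule.span F {u3, v2}).map δ, p x = 0) →
      (∀ x ∈ Submodule.span F {u3, v2}, q x = x) →
      (∀ x ∈ Submodule.span F {e1, e2, u1, v1} ⊔ (Submodule.span F {u3, v2}).map δ, q x = 0) →
      -- even · even: the recipe product is the product in C
      ((∀ x ∈ Submodule.span F {e1, e2, u1, v1}, ∀ y ∈ Submodule.span F {e1, e2, u1, v1},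
          p (x * y) = x * y) ∧
       -- e1 + e2 is the unit of the superalgebra
       (∀ x ∈ Submodule.span F {e1, e2, u1, v1},
          p ((e1 + e2) * x) = x ∧ p (x * (e1 + e2)) = x) ∧
       (∀ x ∈ Submodule.span F {u3, v2},
          q ((e1 + e2) * x) = x ∧ q (x * (e1 + e2)) = x) ∧
       -- even · odd and odd · even products
       q (e1 * u3) = u3 ∧ q (e2 * u3) = 0 ∧ q (u1 * u3) = -v2 ∧ q (v1 * u3) = 0 ∧
       q (e1 * v2) = 0 ∧ q (e2 * v2) = v2 ∧ q (u1 * v2) = 0 ∧ q (v1 * v2) = u3 ∧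
       q (u3 * e1) = 0 ∧ q (u3 * e2) = u3 ∧ q (u3 * u1) = v2 ∧ q (u3 * v1) = 0 ∧
       q (v2 * e1) = v2 ∧ q (v2 * e2) = 0 ∧ q (v2 * u1) = 0 ∧ q (v2 * v1) = -u3 ∧
       -- odd · odd products: x • y = proj_{B₀} (x · δ(y))
       p (u3 * δ u3) = -v1 ∧ p (u3 * δ v2) = e1 ∧
       p (v2 * δ u3) = -e2 ∧ p (v2 * δ v2) = -u1)) ∧
    -- the super norm
    QuadraticMap.polar n u3 (δ v2) = -1 ∧
    QuadraticMap.polar n v2 (δ u3) = 1 := by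
  classical
  have mem_all : ∀ x : C, x ∈ Submodule.span F ({e1, e2, u1, u2, u3, v1, v2, v3} : Set C) := by
    intro x; rw [hspan]; trivial
  have hδe1 : δ e1 = 0 := by rw [hδ, hs1, sub_self]
  have hδe2 : δ e2 = 0 := by rw [hδ, hs2, sub_self]
  have hδu1 : δ u1 = 0 := by rw [hδ, hs3, sub_self]
  have hδu2 : δ u2 = 0 := by rw [hδ, hs4, sub_self]
  have hδu3 : δ u3 = u2 := by rw [hδ, hs5, add_sub_cancel_left]
  have hδv1 : δ v1 = 0 := by rw [hδ, hs6, sub_self]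
  have hδv2 : δ v2 = -v3 := by rw [hδ, hs7]; abel
  have hδv3 : δ v3 = 0 := by rw [hδ, hs8, sub_self]
  have h3C : ∀ w : C, w + w + w = 0 := by
    intro w
    have h : (3 : ℕ) • w = w + w + w := by rw [succ_nsmul, two_nsmul]
    rw [← h, ← Nat.cast_smul_eq_nsmul F, CharP.cast_eq_zero, zero_smul]
  have h3F : ∀ w : F, w + w + w = 0 := by
    intro w
    have h : (3 : ℕ) • w = w + w + w := by rw [succ_nsmul, two_nsmul]
    rw [← h, ← Nat.cast_smul_eq_nsmul F, CharP.cast_eq_zero, zero_smul]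
  -- multiplicativity
  have hmul : ∀ x y : C, σ (x * y) = σ x * σ y := by
    intro x y
    induction mem_all x, mem_all y using Submodule.span_induction₂ with
    | mem_mem a b ha hb =>
      simp only [Set.mem_insert_iff, Set.mem_singleton_iff] at ha hb
      rcases ha with rfl|rfl|rfl|rfl|rfl|rfl|rfl|rfl <;>
        rcases hb with rfl|rfl|rfl|rfl|rfl|rfl|rfl|rfl <;>
        simp only [t1,t2,t3,t4,t5,t6,t7,t8,t9,t10,t11,t12,t13,t14,t15,t16,t17,t18,t19,t20,
          t21,t22,t23,t24,t25,t26,t27,t28,t29,t30,t31,t32,t33,t34,t35,t36,t37,t38,t39,t40,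
          t41,t42,t43,t44,t45,t46,t47,t48,t49,t50,t51,t52,t53,t54,t55,t56,t57,t58,t59,t60,
          t61,t62,t63,t64, hs1,hs2,hs3,hs4,hs5,hs6,hs7,hs8, map_add, map_sub, map_neg,
          map_zero, mul_add, add_mul, mul_sub, sub_mul, neg_neg] <;>
        abel
    | zero_left y hy => simp
    | zero_right x hx => simp
    | add_left x y z hx hy hz h1 h2 => rw [add_mul, map_add, map_add, add_mul, h1, h2]
    | add_right x y z hx hy hz h1 h2 => rw [mul_add, map_add, map_add, mul_add, h1, h2]
    | smul_left r x y hx hy h => rw [smul_mul_assoc, map_smul, map_smul, smul_mul_assoc, h]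
    | smul_right r x y hx hy h => rw [mul_smul_comm, map_smul, map_smul, mul_smul_comm, h]
  -- order three
  have hcube : σ ∘ₗ σ ∘ₗ σ = LinearMap.id := by
    apply LinearMap.ext_on hspan
    intro x hx
    simp only [Set.mem_insert_iff, Set.mem_singleton_iff] at hx
    rcases hx with rfl|rfl|rfl|rfl|rfl|rfl|rfl|rfl
    · simp only [LinearMap.comp_apply, LinearMap.id_apply, hs1]
    · simp only [LinearMap.comp_apply, LinearMap.id_apply, hs2]
    · simp only [LinearMap.comp_apply, LinearMap.id_apply, hs3]
    · simp only [LinearMap.comp_apply, LinearMap.id_apply, hs4]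
    · simp only [LinearMap.comp_apply, LinearMap.id_apply, map_add, hs5, hs4]
      rw [show x + u2 + u2 + u2 = x + (u2 + u2 + u2) by abel, h3C, add_zero]
    · simp only [LinearMap.comp_apply, LinearMap.id_apply, hs6]
    · simp only [LinearMap.comp_apply, LinearMap.id_apply, map_sub, hs7, hs8]
      rw [show x - v3 - v3 - v3 = x - (v3 + v3 + v3) by abel, h3C, sub_zero]
    · simp only [LinearMap.comp_apply, LinearMap.id_apply, hs8]
  have hne : σ ≠ LinearMap.id := by
    intro h
    have h5 : σ u3 = u3 := by rw [h]; rfl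
    rw [hs5] at h5
    have : u2 = 0 := by
      have := h5
      rwa [add_eq_left] at this
    exact hind.ne_zero 3 (by simpa using this)
  -- norm preservation
  have hδspan : ∀ x : C, δ x ∈ Submodule.span F ({u2, v3} : Set C) := by
    intro x
    induction mem_all x using Submodule.span_induction with
    | mem a ha =>
      have hu2 : u2 ∈ Submodule.span F ({u2, v3} : Set C) := Submodule.subset_span (by simp)
      have hv3 : v3 ∈ Submodule.span F ({u2, v3} : Set C) := Submodule.subset_span (by simp)
      simp only [Set.mem_insert_iff, Set.mem_singleton_iff] at ha
      rcases ha with rfl|rfl|rfl|rfl|rfl|rfl|rfl|rfl <;>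
        simp only [hδe1, hδe2, hδu1, hδu2, hδu3, hδv1, hδv2, hδv3] <;>
        first
          | exact Submodule.zero_mem _
          | exact hu2
          | exact neg_mem hv3
    | zero => rw [map_zero]; exact Submodule.zero_mem _
    | add x y hx hy h1 h2 => rw [map_add]; exact add_mem h1 h2
    | smul a x hx h => rw [map_smul]; exact Submodule.smul_mem _ _ h
  have hnδ : ∀ x : C, n (δ x) = 0 := by
    intro x
    obtain ⟨a, b, hab⟩ := Submodule.mem_span_pair.mp (hδspan x)
    rw [← hab, QuadraticMap.map_add (⇑n) (a • u2) (b • v3), QuadraticMap.map_smul,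
      QuadraticMap.map_smul, QuadraticMap.polar_smul_left, QuadraticMap.polar_smul_right,
      n4, n8, z22]
    simp
  have hpol : ∀ x y : C, QuadraticMap.polar n x (δ y) + QuadraticMap.polar n y (δ x) = 0 := by
    have b2' : QuadraticMap.polar n v1 u1 = 1 := by rw [QuadraticMap.polar_comm]; exact b2
    have b3' : QuadraticMap.polar n v2 u2 = 1 := by rw [QuadraticMap.polar_comm]; exact b3
    have b4' : QuadraticMap.polar n v3 u3 = 1 := by rw [QuadraticMap.polar_comm]; exact b4
    have z15' : QuadraticMap.polar n u3 u2 = 0 := by rw [QuadraticMap.polar_comm]; exact z15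
    have z21' : QuadraticMap.polar n v1 u2 = 0 := by rw [QuadraticMap.polar_comm]; exact z21
    have z22' : QuadraticMap.polar n v3 u2 = 0 := by rw [QuadraticMap.polar_comm]; exact z22
    have z18' : QuadraticMap.polar n v3 v2 = 0 := by rw [QuadraticMap.polar_comm]; exact z18
    have z24' : QuadraticMap.polar n v2 u3 = 0 := by rw [QuadraticMap.polar_comm]; exact z24
    have z14' : QuadraticMap.polar n u3 u1 = 0 := by rw [QuadraticMap.polar_comm]; exact z14
    have z23' : QuadraticMap.polar n v1 u3 = 0 := by rw [QuadraticMap.polar_comm]; exact z23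
    have z16' : QuadraticMap.polar n v2 v1 = 0 := by rw [QuadraticMap.polar_comm]; exact z16
    have z19' : QuadraticMap.polar n v2 u1 = 0 := by rw [QuadraticMap.polar_comm]; exact z19
    have z3' : QuadraticMap.polar n u3 e1 = 0 := by rw [QuadraticMap.polar_comm]; exact z3
    have z9' : QuadraticMap.polar n u3 e2 = 0 := by rw [QuadraticMap.polar_comm]; exact z9
    have z5' : QuadraticMap.polar n v2 e1 = 0 := by rw [QuadraticMap.polar_comm]; exact z5
    have z11' : QuadraticMap.polar n v2 e2 = 0 := by rw [QuadraticMap.polar_comm]; exact z11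
    have pself : ∀ w : C, n w = 0 → QuadraticMap.polar n w w = 0 := by
      intro w hw; rw [QuadraticMap.polar_self, hw, smul_zero]
    have ps1 : QuadraticMap.polar n u2 u2 = 0 := pself u2 n4
    have ps2 : QuadraticMap.polar n v3 v3 = 0 := pself v3 n8
    have ps3 : QuadraticMap.polar n u3 u2 = 0 := z15'
    have ps4 : QuadraticMap.polar n v2 v3 = 0 := z18
    intro x y
    induction mem_all x, mem_all y using Submodule.span_induction₂ with
    | mem_mem a b ha hb =>
      simp only [Set.mem_insert_iff, Set.mem_singleton_iff] at ha hb
      rcases ha with rfl|rfl|rfl|rfl|rfl|rfl|rfl|rfl <;>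
        rcases hb with rfl|rfl|rfl|rfl|rfl|rfl|rfl|rfl <;>
        simp only [hδe1, hδe2, hδu1, hδu2, hδu3, hδv1, hδv2, hδv3,
          QuadraticMap.polar_zero_right, QuadraticMap.polar_neg_right,
          b2, b3, b4, b2', b3', b4', z1,z2,z3,z4,z5,z6,z7,z8,z9,z10,z11,z12,z13,z14,z15,
          z16,z17,z18,z19,z20,z21,z22,z23,z24, z15',z21',z22',z18',z24',z14',z23',z16',
          z19',z3',z9',z5',z11', ps1, ps2, ps3, ps4] <;>
        ring
    | zero_left y hy =>
      simp [QuadraticMap.polar_zero_left, QuadraticMap.polar_zero_right]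
    | zero_right x hx =>
      simp [QuadraticMap.polar_zero_left, QuadraticMap.polar_zero_right]
    | add_left x y z hx hy hz h1 h2 =>
      rw [map_add, QuadraticMap.polar_add_left, QuadraticMap.polar_add_right]
      linear_combination h1 + h2
    | add_right x y z hx hy hz h1 h2 =>
      rw [map_add, QuadraticMap.polar_add_left, QuadraticMap.polar_add_right]
      linear_combination h1 + h2
    | smul_left r x y hx hy h =>
      rw [map_smul, QuadraticMap.polar_smul_left, QuadraticMap.polar_smul_right, smul_eq_mul,
        smul_eq_mul]
      linear_combination r * h
    | smul_right r x y hx hy h =>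
      rw [map_smul, QuadraticMap.polar_smul_left, QuadraticMap.polar_smul_right, smul_eq_mul,
        smul_eq_mul]
      linear_combination r * h
  have hpolself : ∀ x : C, QuadraticMap.polar n x (δ x) = 0 := by
    intro x
    have h2 := hpol x x
    have h3 := h3F (QuadraticMap.polar n x (δ x))
    linear_combination h3 - h2
  have hnorm : ∀ x : C, n (σ x) = n x := by
    intro x
    have hx : σ x = x + δ x := by rw [hδ]; abel
    rw [hx, QuadraticMap.map_add (⇑n) x (δ x), hnδ, hpolself, add_zero, add_zero]
  -- δ ∘ δ = 0
  have hδδ : δ ∘ₗ δ = 0 := by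
    apply LinearMap.ext_on hspan
    intro x hx
    simp only [Set.mem_insert_iff, Set.mem_singleton_iff] at hx
    rcases hx with rfl|rfl|rfl|rfl|rfl|rfl|rfl|rfl <;>
      simp only [LinearMap.comp_apply, LinearMap.zero_apply, hδe1, hδe2, hδu1, hδu2, hδu3,
        hδv1, hδv2, hδv3, map_zero, map_neg, neg_zero]
  -- the image of B₁ under δ
  have hmap : (Submodule.span F ({u3, v2} : Set C)).map δ
      = Submodule.span F ({u2, v3} : Set C) := by
    rw [Submodule.map_span]
    have himg : δ '' {u3, v2} = ({u2, -v3} : Set C) := by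
      rw [Set.image_insert_eq, Set.image_singleton, hδu3, hδv2]
    rw [himg]
    apply le_antisymm
    · rw [Submodule.span_le]
      rintro x hx
      simp only [Set.mem_insert_iff, Set.mem_singleton_iff] at hx
      rcases hx with rfl | rfl
      · exact Submodule.subset_span (by simp)
      · exact neg_mem (Submodule.subset_span (by simp))
    · rw [Submodule.span_le]
      rintro x hx
      simp only [Set.mem_insert_iff, Set.mem_singleton_iff] at hx
      rcases hx with rfl | rfl
      · exact Submodule.subset_span (by simp)
      · exact neg_mem_iff.mp (Submodule.subset_span (by simp))
  -- direct sum decomposition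
  have hinternal : DirectSum.IsInternal
      ![Submodule.span F {e1, e2, u1, v1}, Submodule.span F {u3, v2},
        (Submodule.span F {u3, v2}).map δ] := by
    have hV4 : (![e1,e2,u1,u2,u3,v1,v2,v3]) 4 = u3 := rfl
    have hV5 : (![e1,e2,u1,u2,u3,v1,v2,v3]) 5 = v1 := rfl
    have hV6 : (![e1,e2,u1,u2,u3,v1,v2,v3]) 6 = v2 := rfl
    have hV7 : (![e1,e2,u1,u2,u3,v1,v2,v3]) 7 = v3 := rfl
    have hI0 : (![e1,e2,u1,u2,u3,v1,v2,v3]) '' ({0,1,2,5} : Set (Fin 8))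
        = ({e1,e2,u1,v1} : Set C) := by simp [Set.image_insert_eq, hV4, hV5, hV6, hV7]
    have hI1 : (![e1,e2,u1,u2,u3,v1,v2,v3]) '' ({4,6} : Set (Fin 8))
        = ({u3,v2} : Set C) := by simp [Set.image_insert_eq, hV4, hV5, hV6, hV7]
    have hI2 : (![e1,e2,u1,u2,u3,v1,v2,v3]) '' ({3,7} : Set (Fin 8))
        = ({u2,v3} : Set C) := by simp [Set.image_insert_eq, hV4, hV5, hV6, hV7]
    have hI0c : (![e1,e2,u1,u2,u3,v1,v2,v3]) '' ({3,4,6,7} : Set (Fin 8))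
        = ({u2,u3,v2,v3} : Set C) := by simp [Set.image_insert_eq, hV4, hV5, hV6, hV7]
    have hI1c : (![e1,e2,u1,u2,u3,v1,v2,v3]) '' ({0,1,2,3,5,7} : Set (Fin 8))
        = ({e1,e2,u1,u2,v1,v3} : Set C) := by simp [Set.image_insert_eq, hV4, hV5, hV6, hV7]
    have hI2c : (![e1,e2,u1,u2,u3,v1,v2,v3]) '' ({0,1,2,4,5,6} : Set (Fin 8))
        = ({e1,e2,u1,u3,v1,v2} : Set C) := by simp [Set.image_insert_eq, hV4, hV5, hV6, hV7]
    have hdisjF : ∀ s t : Set (Fin 8), (∀ a ∈ s, a ∉ t) → Disjoint s t := by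
      intro s t h; exact Set.disjoint_left.mpr h
    have hd0 : Disjoint (Submodule.span F ({e1,e2,u1,v1} : Set C))
        (Submodule.span F ({u2,u3,v2,v3} : Set C)) := by
      have := hind.disjoint_span_image (s := {0,1,2,5}) (t := {3,4,6,7}) (by
        apply hdisjF; intro a ha
        simp only [Set.mem_insert_iff, Set.mem_singleton_iff] at ha ⊢
        rcases ha with rfl|rfl|rfl|rfl <;> decide)
      rwa [hI0, hI0c] at this
    have hd1 : Disjoint (Submodule.span F ({u3,v2} : Set C))
        (Submodule.span F ({e1,e2,u1,u2,v1,v3} : Set C)) := by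
      have := hind.disjoint_span_image (s := {4,6}) (t := {0,1,2,3,5,7}) (by
        apply hdisjF; intro a ha
        simp only [Set.mem_insert_iff, Set.mem_singleton_iff] at ha ⊢
        rcases ha with rfl|rfl <;> decide)
      rwa [hI1, hI1c] at this
    have hd2 : Disjoint (Submodule.span F ({u2,v3} : Set C))
        (Submodule.span F ({e1,e2,u1,u3,v1,v2} : Set C)) := by
      have := hind.disjoint_span_image (s := {3,7}) (t := {0,1,2,4,5,6}) (by
        apply hdisjF; intro a ha
        simp only [Set.mem_insert_iff, Set.mem_singleton_iff] at ha ⊢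
        rcases ha with rfl|rfl <;> decide)
      rwa [hI2, hI2c] at this
    have hint : ∀ A : Fin 3 → Submodule F C,
        A 0 = Submodule.span F ({e1,e2,u1,v1} : Set C) →
        A 1 = Submodule.span F ({u3,v2} : Set C) →
        A 2 = Submodule.span F ({u2,v3} : Set C) → DirectSum.IsInternal A := by
      intro A h0 h1 h2
      rw [DirectSum.isInternal_submodule_iff_iSupIndep_and_iSup_eq_top]
      have hfin : ∀ j : Fin 3, j = 0 ∨ j = 1 ∨ j = 2 := by decide
      have hsub : ∀ (s t : Set C), s ⊆ t →
          Submodule.span F s ≤ Submodule.span F t := fun s t h => Submodule.span_mono h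
      constructor
      · intro i
        rcases hfin i with rfl | rfl | rfl
        · refine Disjoint.mono_right (c := Submodule.span F ({u2,u3,v2,v3} : Set C))
            (iSup_le fun j => iSup_le fun hj => ?_) ?_
          · rcases hfin j with rfl | rfl | rfl
            · exact absurd rfl hj
            · rw [h1]
              exact hsub _ ({u2,u3,v2,v3} : Set C) (by
                intro z hz
                simp only [Set.mem_insert_iff, Set.mem_singleton_iff] at hz ⊢
                tauto)
            · rw [h2]
              exact hsub _ ({u2,u3,v2,v3} : Set C) (by
                intro z hz
                simp only [Set.mem_insert_iff, Set.mem_singleton_iff] at hz ⊢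
                tauto)
          · rw [h0]; exact hd0
        · refine Disjoint.mono_right (c := Submodule.span F ({e1,e2,u1,u2,v1,v3} : Set C))
            (iSup_le fun j => iSup_le fun hj => ?_) ?_
          · rcases hfin j with rfl | rfl | rfl
            · rw [h0]
              exact hsub _ ({e1,e2,u1,u2,v1,v3} : Set C) (by
                intro z hz
                simp only [Set.mem_insert_iff, Set.mem_singleton_iff] at hz ⊢
                tauto)
            · exact absurd rfl hj
            · rw [h2]
              exact hsub _ ({e1,e2,u1,u2,v1,v3} : Set C) (by
                intro z hz
                simp only [Set.mem_insert_iff, Set.mem_singleton_iff] at hz ⊢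
                tauto)
          · rw [h1]; exact hd1
        · refine Disjoint.mono_right (c := Submodule.span F ({e1,e2,u1,u3,v1,v2} : Set C))
            (iSup_le fun j => iSup_le fun hj => ?_) ?_
          · rcases hfin j with rfl | rfl | rfl
            · rw [h0]
              exact hsub _ ({e1,e2,u1,u3,v1,v2} : Set C) (by
                intro z hz
                simp only [Set.mem_insert_iff, Set.mem_singleton_iff] at hz ⊢
                tauto)
            · rw [h1]
              exact hsub _ ({e1,e2,u1,u3,v1,v2} : Set C) (by
                intro z hz
                simp only [Set.mem_insert_iff, Set.mem_singleton_iff] at hz ⊢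
                tauto)
            · exact absurd rfl hj
          · rw [h2]; exact hd2
      · apply eq_top_iff.mpr
        rw [← hspan]
        apply Submodule.span_le.mpr
        intro z hz
        have m0 : A 0 ≤ ⨆ j, A j := le_iSup A 0
        have m1 : A 1 ≤ ⨆ j, A j := le_iSup A 1
        have m2 : A 2 ≤ ⨆ j, A j := le_iSup A 2
        simp only [Set.mem_insert_iff, Set.mem_singleton_iff] at hz
        rcases hz with rfl|rfl|rfl|rfl|rfl|rfl|rfl|rfl
        · refine m0 ?_; rw [h0]; exact Submodule.subset_span (by simp)
        · refine m0 ?_; rw [h0]; exact Submodule.subset_span (by simp)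
        · refine m0 ?_; rw [h0]; exact Submodule.subset_span (by simp)
        · refine m2 ?_; rw [h2]; exact Submodule.subset_span (by simp)
        · refine m1 ?_; rw [h1]; exact Submodule.subset_span (by simp)
        · refine m0 ?_; rw [h0]; exact Submodule.subset_span (by simp)
        · refine m1 ?_; rw [h1]; exact Submodule.subset_span (by simp)
        · refine m2 ?_; rw [h2]; exact Submodule.subset_span (by simp)
    exact hint _ rfl rfl (by
      rw [show (![Submodule.span F {e1, e2, u1, v1}, Submodule.span F {u3, v2},
        (Submodule.span F {u3, v2}).map δ]) 2 = (Submodule.span F ({u3, v2} : Set C)).map δ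
        from rfl, hmap])
  refine ⟨hmul, hcube, hne, hnorm, hδδ, hinternal, ?_, ?_, ?_⟩
  · -- the recipe
    intro p q hp1 hp0 hq1 hq0
    have me1 : e1 ∈ Submodule.span F ({e1, e2, u1, v1} : Set C) :=
      Submodule.subset_span (by simp)
    have me2 : e2 ∈ Submodule.span F ({e1, e2, u1, v1} : Set C) :=
      Submodule.subset_span (by simp)
    have mu1 : u1 ∈ Submodule.span F ({e1, e2, u1, v1} : Set C) :=
      Submodule.subset_span (by simp)
    have mv1 : v1 ∈ Submodule.span F ({e1, e2, u1, v1} : Set C) :=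
      Submodule.subset_span (by simp)
    have mu3 : u3 ∈ Submodule.span F ({u3, v2} : Set C) := Submodule.subset_span (by simp)
    have mv2 : v2 ∈ Submodule.span F ({u3, v2} : Set C) := Submodule.subset_span (by simp)
    have hclosed : ∀ x ∈ Submodule.span F ({e1, e2, u1, v1} : Set C),
        ∀ y ∈ Submodule.span F ({e1, e2, u1, v1} : Set C),
        x * y ∈ Submodule.span F ({e1, e2, u1, v1} : Set C) := by
      intro x hx y hy
      induction hx, hy using Submodule.span_induction₂ with
      | mem_mem a b ha hb =>
        simp only [Set.mem_insert_iff, Set.mem_singleton_iff] at ha hb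
        rcases ha with rfl|rfl|rfl|rfl <;> rcases hb with rfl|rfl|rfl|rfl <;>
          simp only [t1,t2,t3,t6,t9,t10,t11,t14,t17,t18,t19,t22,t41,t42,t43,t46] <;>
          first
            | exact Submodule.zero_mem _
            | exact me1
            | exact me2
            | exact mu1
            | exact mv1
            | exact neg_mem me1
            | exact neg_mem me2
      | zero_left y hy => rw [zero_mul]; exact Submodule.zero_mem _
      | zero_right x hx => rw [mul_zero]; exact Submodule.zero_mem _
      | add_left x y z hx hy hz h1 h2 => rw [add_mul]; exact add_mem h1 h2
      | add_right x y z hx hy hz h1 h2 => rw [mul_add]; exact add_mem h1 h2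
      | smul_left r x y hx hy h => rw [smul_mul_assoc]; exact Submodule.smul_mem _ _ h
      | smul_right r x y hx hy h => rw [mul_smul_comm]; exact Submodule.smul_mem _ _ h
    refine ⟨fun x hx y hy => hp1 _ (hclosed x hx y hy), ?_, ?_, ?_, ?_, ?_, ?_, ?_, ?_, ?_,
      ?_, ?_, ?_, ?_, ?_, ?_, ?_, ?_, ?_, ?_, ?_, ?_, ?_⟩
    · intro x hx
      rw [← hone, one_mul, mul_one]
      exact ⟨hp1 x hx, hp1 x hx⟩
    · intro x hx
      rw [← hone, one_mul, mul_one]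
      exact ⟨hq1 x hx, hq1 x hx⟩
    · rw [t5]; exact hq1 u3 mu3
    · rw [t13, map_zero]
    · rw [t21, map_neg, hq1 v2 mv2]
    · rw [t45, map_zero]
    · rw [t7, map_zero]
    · rw [t15]; exact hq1 v2 mv2
    · rw [t23, map_zero]
    · rw [t47]; exact hq1 u3 mu3
    · rw [t33, map_zero]
    · rw [t34]; exact hq1 u3 mu3
    · rw [t35]; exact hq1 v2 mv2
    · rw [t38, map_zero]
    · rw [t49]; exact hq1 v2 mv2
    · rw [t50, map_zero]
    · rw [t51, map_zero]
    · rw [t54, map_neg, hq1 u3 mu3]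
    · rw [hδu3, t36, map_neg, hp1 v1 mv1]
    · rw [hδv2, mul_neg, t40, neg_neg]; exact hp1 e1 me1
    · rw [hδu3, t52, map_neg, hp1 e2 me2]
    · rw [hδv2, mul_neg, t56, map_neg, hp1 u1 mu1]
  · rw [hδv2, QuadraticMap.polar_neg_right, b4]
  · rw [hδu3, QuadraticMap.polar_comm]; exact b3
end

section
/- Let F be a field of characteristic 3 and let C be the split Cayley algebra over F. There is a unique algebra automorphism σ of C with σ(u1) = u1, σ(u2) = u2 and σ(u3) = u3 + u2 + v3 − e1 + e2, and it satisfies: σ³ = id, σ ≠ id, (σ − id)² ≠ 0, and σ preserves the norm n. Setting δ = σ − id, one has δ(v1) = u2, δ(v2) = −v3 − u1, and C decomposes as the direct sum of A₀ = F·1 (1 = e1+e2), A₁ = span{v1,v2}, δ(A₁) = span{u2, v3+u1}, and A₂ = span{u3, v3, u2 − e1 + e2}, where A₂ is δ-invariant. The superalgebra with even part A₀, odd part A₁, and product x•y defined by: x•y = proj_{A₀}(xy) for x,y ∈ A₀; x•y = proj_{A₁}(xy) for x ∈ A₀, y ∈ A₁ or x ∈ A₁, y ∈ A₀; and x•y =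 proj_{A₀}(x·δ(y)) for x,y ∈ A₁ (projections along the decomposition C = A₀ ⊕ A₁ ⊕ δ(A₁) ⊕ A₂), is the composition superalgebra B(1,2): 1•1 = 1, 1•vi = vi = vi•1 (i = 1,2), v1•v1 = 0 = v2•v2, v1•v2 = −1, v2•v1 = 1. Furthermore the bilinear form nˢ given by nˢ(1,1) = b(1,1) = 2, nˢ(vi,vj) = b(vi,δ(vj)), nˢ(A₀,A₁) = nˢ(A₁,A₀) = 0 (b the polar form of n) satisfies nˢ(v1,v2) = −1 = −nˢ(v2,v1) and nˢ(v1,v1) = 0 = nˢ(v2,v2). -/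
set_option maxHeartbeats 1600000 in
/-- In the split Cayley algebra over a field of characteristic 3, there is a
unique algebra automorphism `σ` with `σ u1 = u1`, `σ u2 = u2`,
`σ u3 = u3 + u2 + v3 - e1 + e2` (case (4)); it has order 3, `(σ - id)² ≠ 0`, preserves the
norm, satisfies `δ v1 = u2`, `δ v2 = -v3 - u1` (`δ = σ - id`), gives the direct sum
decomposition `C = A₀ ⊕ A₁ ⊕ δ(A₁) ⊕ A₂` with `A₀ = F·1`, `A₁ = span{v1,v2}`,
`δ(A₁) = span{u2, v3+u1}`, `A₂ = span{u3,v3,u2-e1+e2}` δ-invariant, and the recipe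
produces the composition superalgebra `B(1,2)` together with its supersymmetric norm. -/
theorem split_cayley_order3_case4_gives_B12
    {F : Type*} [Field F] [CharP F 3]
    {C : Type*} [NonAssocRing C] [Module F C] [SMulCommClass F C C] [IsScalarTower F C C]
    (e1 e2 u1 u2 u3 v1 v2 v3 : C)
    (hind : LinearIndependent F ![e1, e2, u1, u2, u3, v1, v2, v3])
    (hspan : Submodule.span F {e1, e2, u1, u2, u3, v1, v2, v3} = ⊤)
    (hone : (1 : C) = e1 + e2)
    -- multiplication table of the split Cayley algebra
    (t1 : e1 * e1 = e1) (t2 : e1 * e2 = 0) (t3 : e1 * u1 = u1) (t4 : e1 * u2 = u2)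
    (t5 : e1 * u3 = u3) (t6 : e1 * v1 = 0) (t7 : e1 * v2 = 0) (t8 : e1 * v3 = 0)
    (t9 : e2 * e1 = 0) (t10 : e2 * e2 = e2) (t11 : e2 * u1 = 0) (t12 : e2 * u2 = 0)
    (t13 : e2 * u3 = 0) (t14 : e2 * v1 = v1) (t15 : e2 * v2 = v2) (t16 : e2 * v3 = v3)
    (t17 : u1 * e1 = 0) (t18 : u1 * e2 = u1) (t19 : u1 * u1 = 0) (t20 : u1 * u2 = v3)
    (t21 : u1 * u3 = -v2) (t22 : u1 * v1 = -e1) (t23 : u1 * v2 = 0) (t24 : u1 * v3 = 0)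
    (t25 : u2 * e1 = 0) (t26 : u2 * e2 = u2) (t27 : u2 * u1 = -v3) (t28 : u2 * u2 = 0)
    (t29 : u2 * u3 = v1) (t30 : u2 * v1 = 0) (t31 : u2 * v2 = -e1) (t32 : u2 * v3 = 0)
    (t33 : u3 * e1 = 0) (t34 : u3 * e2 = u3) (t35 : u3 * u1 = v2) (t36 : u3 * u2 = -v1)
    (t37 : u3 * u3 = 0) (t38 : u3 * v1 = 0) (t39 : u3 * v2 = 0) (t40 : u3 * v3 = -e1)
    (t41 : v1 * e1 = v1) (t42 : v1 * e2 = 0) (t43 : v1 * u1 = -e2) (t44 : v1 * u2 = 0)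
    (t45 : v1 * u3 = 0) (t46 : v1 * v1 = 0) (t47 : v1 * v2 = u3) (t48 : v1 * v3 = -u2)
    (t49 : v2 * e1 = v2) (t50 : v2 * e2 = 0) (t51 : v2 * u1 = 0) (t52 : v2 * u2 = -e2)
    (t53 : v2 * u3 = 0) (t54 : v2 * v1 = -u3) (t55 : v2 * v2 = 0) (t56 : v2 * v3 = u1)
    (t57 : v3 * e1 = v3) (t58 : v3 * e2 = 0) (t59 : v3 * u1 = 0) (t60 : v3 * u2 = 0)
    (t61 : v3 * u3 = -e2) (t62 : v3 * v1 = u2) (t63 : v3 * v2 = -u1) (t64 : v3 * v3 = 0)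
    -- the norm: a quadratic form vanishing on the basis, with hyperbolic polar form
    (n : QuadraticForm F C)
    (n1 : n e1 = 0) (n2 : n e2 = 0) (n3 : n u1 = 0) (n4 : n u2 = 0) (n5 : n u3 = 0)
    (n6 : n v1 = 0) (n7 : n v2 = 0) (n8 : n v3 = 0)
    (b1 : QuadraticMap.polar n e1 e2 = 1)
    (b2 : QuadraticMap.polar n u1 v1 = 1)
    (b3 : QuadraticMap.polar n u2 v2 = 1)
    (b4 : QuadraticMap.polar n u3 v3 = 1)
    (z1 : QuadraticMap.polar n e1 u1 = 0) (z2 : QuadraticMap.polar n e1 u2 = 0)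
    (z3 : QuadraticMap.polar n e1 u3 = 0) (z4 : QuadraticMap.polar n e1 v1 = 0)
    (z5 : QuadraticMap.polar n e1 v2 = 0) (z6 : QuadraticMap.polar n e1 v3 = 0)
    (z7 : QuadraticMap.polar n e2 u1 = 0) (z8 : QuadraticMap.polar n e2 u2 = 0)
    (z9 : QuadraticMap.polar n e2 u3 = 0) (z10 : QuadraticMap.polar n e2 v1 = 0)
    (z11 : QuadraticMap.polar n e2 v2 = 0) (z12 : QuadraticMap.polar n e2 v3 = 0)
    (z13 : QuadraticMap.polar n u1 u2 = 0) (z14 : QuadraticMap.polar n u1 u3 = 0)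
    (z15 : QuadraticMap.polar n u2 u3 = 0) (z16 : QuadraticMap.polar n v1 v2 = 0)
    (z17 : QuadraticMap.polar n v1 v3 = 0) (z18 : QuadraticMap.polar n v2 v3 = 0)
    (z19 : QuadraticMap.polar n u1 v2 = 0) (z20 : QuadraticMap.polar n u1 v3 = 0)
    (z21 : QuadraticMap.polar n u2 v1 = 0) (z22 : QuadraticMap.polar n u2 v3 = 0)
    (z23 : QuadraticMap.polar n u3 v1 = 0) (z24 : QuadraticMap.polar n u3 v2 = 0) :
    -- existence and uniqueness of the automorphism
    (∃! σ : C →ₗ[F] C,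
      (∀ x y : C, σ (x * y) = σ x * σ y) ∧ Function.Bijective σ ∧
      σ u1 = u1 ∧ σ u2 = u2 ∧ σ u3 = u3 + u2 + v3 - e1 + e2) ∧
    -- its properties
    (∀ σ : C →ₗ[F] C,
      (∀ x y : C, σ (x * y) = σ x * σ y) → Function.Bijective σ →
      σ u1 = u1 → σ u2 = u2 → σ u3 = u3 + u2 + v3 - e1 + e2 →
      ∀ δ : C →ₗ[F] C, (∀ x : C, δ x = σ x - x) →
      (σ ∘ₗ σ ∘ₗ σ = LinearMap.id ∧
       σ ≠ LinearMap.id ∧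
       δ ∘ₗ δ ≠ 0 ∧
       (∀ x : C, n (σ x) = n x) ∧
       δ v1 = u2 ∧ δ v2 = -v3 - u1 ∧
       (Submodule.span F {v1, v2}).map δ = Submodule.span F {u2, v3 + u1} ∧
       (Submodule.span F {u3, v3, u2 - e1 + e2}).map δ ≤
         Submodule.span F {u3, v3, u2 - e1 + e2} ∧
       DirectSum.IsInternal
         ![Submodule.span F {e1 + e2}, Submodule.span F {v1, v2},
           (Submodule.span F {v1, v2}).map δ, Submodule.span F {u3, v3, u2 - e1 + e2}] ∧
       -- the recipe superalgebra is B(1,2)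
       (∀ p q : C →ₗ[F] C,
         (∀ x ∈ Submodule.span F {e1 + e2}, p x = x) →
         (∀ x ∈ Submodule.span F {v1, v2} ⊔ (Submodule.span F {v1, v2}).map δ ⊔
             Submodule.span F {u3, v3, u2 - e1 + e2}, p x = 0) →
         (∀ x ∈ Submodule.span F {v1, v2}, q x = x) →
         (∀ x ∈ Submodule.span F {e1 + e2} ⊔ (Submodule.span F {v1, v2}).map δ ⊔
             Submodule.span F {u3, v3, u2 - e1 + e2}, q x = 0) →
         (p ((e1 + e2) * (e1 + e2)) = e1 + e2 ∧
          q ((e1 + e2) * v1) = v1 ∧ q (v1 * (e1 + e2)) = v1 ∧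
          q ((e1 + e2) * v2) = v2 ∧ q (v2 * (e1 + e2)) = v2 ∧
          p (v1 * δ v1) = 0 ∧ p (v2 * δ v2) = 0 ∧
          p (v1 * δ v2) = -(e1 + e2) ∧ p (v2 * δ v1) = e1 + e2)) ∧
       -- the super norm
       QuadraticMap.polar n (e1 + e2) (e1 + e2) = 2 ∧
       QuadraticMap.polar n v1 (δ v2) = -1 ∧
       QuadraticMap.polar n v2 (δ v1) = 1 ∧
       QuadraticMap.polar n v1 (δ v1) = 0 ∧
       QuadraticMap.polar n v2 (δ v2) = 0)) := by
  -- scalar facts in characteristic 3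
  have h3F : (3 : F) = 0 := by exact_mod_cast CharP.cast_eq_zero F 3
  have h2F : (2 : F) = -1 := by linear_combination h3F
  have h2ne : (2 : F) ≠ 0 := by rw [h2F]; exact neg_ne_zero.mpr one_ne_zero
  have hv3ne : v3 ≠ 0 := by have := hind.ne_zero 7; simpa using this
  -- the basis
  have hle : ⊤ ≤ Submodule.span F (Set.range ![e1, e2, u1, u2, u3, v1, v2, v3]) := by
    rw [← hspan]
    apply Submodule.span_le.mpr
    intro x hx
    simp only [Set.mem_insert_iff, Set.mem_singleton_iff] at hx
    rcases hx with rfl | rfl | rfl | rfl | rfl | rfl | rfl | rfl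
    · exact Submodule.subset_span ⟨0, rfl⟩
    · exact Submodule.subset_span ⟨1, rfl⟩
    · exact Submodule.subset_span ⟨2, rfl⟩
    · exact Submodule.subset_span ⟨3, rfl⟩
    · exact Submodule.subset_span ⟨4, rfl⟩
    · exact Submodule.subset_span ⟨5, rfl⟩
    · exact Submodule.subset_span ⟨6, rfl⟩
    · exact Submodule.subset_span ⟨7, rfl⟩
  let B : Module.Basis (Fin 8) F C := Module.Basis.mk hind hle
  -- the automorphism σ
  let wσ : Fin 8 → C :=
    ![e1 - v3, e2 + v3, u1, u2, u3 + u2 + v3 - e1 + e2, v1 + u2, v2 - v3 - u1, v3]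
  let σ : C →ₗ[F] C := B.constr F wσ
  have hBv : ∀ k : Fin 8, B k = ![e1, e2, u1, u2, u3, v1, v2, v3] k := fun k =>
    Module.Basis.mk_apply hind hle k
  have hσe1 : σ e1 = e1 - v3 := by have h := B.constr_basis F wσ 0; rw [hBv 0] at h; exact h
  have hσe2 : σ e2 = e2 + v3 := by have h := B.constr_basis F wσ 1; rw [hBv 1] at h; exact h
  have hσu1 : σ u1 = u1 := by have h := B.constr_basis F wσ 2; rw [hBv 2] at h; exact h
  have hσu2 : σ u2 = u2 := by have h := B.constr_basis F wσ 3; rw [hBv 3] at h; exact h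
  have hσu3 : σ u3 = u3 + u2 + v3 - e1 + e2 := by
    have h := B.constr_basis F wσ 4; rw [hBv 4] at h; exact h
  have hσv1 : σ v1 = v1 + u2 := by have h := B.constr_basis F wσ 5; rw [hBv 5] at h; exact h
  have hσv2 : σ v2 = v2 - v3 - u1 := by have h := B.constr_basis F wσ 6; rw [hBv 6] at h; exact h
  have hσv3 : σ v3 = v3 := by have h := B.constr_basis F wσ 7; rw [hBv 7] at h; exact h
  -- multiplicativity
  have hmulσ : ∀ x y : C, σ (x * y) = σ x * σ y := by
    have key : (LinearMap.mul F C).compr₂ σ = (LinearMap.mul F C).compl₁₂ σ σ := by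
      apply LinearMap.ext_on hspan
      intro x hx
      apply LinearMap.ext_on hspan
      intro y hy
      simp only [Set.mem_insert_iff, Set.mem_singleton_iff] at hx hy
      simp only [LinearMap.compr₂_apply, LinearMap.compl₁₂_apply, LinearMap.mul_apply']
      rcases hx with rfl | rfl | rfl | rfl | rfl | rfl | rfl | rfl <;>
        rcases hy with rfl | rfl | rfl | rfl | rfl | rfl | rfl | rfl <;>
        simp only [t1, t2, t3, t4, t5, t6, t7, t8, t9, t10, t11, t12, t13, t14, t15, t16,
          t17, t18, t19, t20, t21, t22, t23, t24, t25, t26, t27, t28, t29, t30, t31, t32,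
          t33, t34, t35, t36, t37, t38, t39, t40, t41, t42, t43, t44, t45, t46, t47, t48,
          t49, t50, t51, t52, t53, t54, t55, t56, t57, t58, t59, t60, t61, t62, t63, t64,
          hσe1, hσe2, hσu1, hσu2, hσu3, hσv1, hσv2, hσv3, map_add, map_sub, map_neg,
          map_zero, sub_eq_add_neg, mul_add, add_mul, neg_mul, mul_neg, neg_neg] <;>
        abel
    intro x y
    have h := LinearMap.congr_fun (LinearMap.congr_fun key x) y
    simpa only [LinearMap.compr₂_apply, LinearMap.compl₁₂_apply, LinearMap.mul_apply'] using h
  -- σ³ = 1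
  have hzp : ∀ x : C, (0 : C) = (3:F) • x := fun x => by rw [h3F, zero_smul]
  have hσ3 : σ ∘ₗ σ ∘ₗ σ = LinearMap.id := by
    apply LinearMap.ext_on hspan
    intro x hx
    simp only [Set.mem_insert_iff, Set.mem_singleton_iff] at hx
    rcases hx with rfl | rfl | rfl | rfl | rfl | rfl | rfl | rfl <;>
      simp only [LinearMap.comp_apply, LinearMap.id_apply, map_add, map_sub, map_neg,
        hσe1, hσe2, hσu1, hσu2, hσu3, hσv1, hσv2, hσv3]
    · conv_rhs => rw [← add_zero x, hzp (-v3)]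
      module
    · conv_rhs => rw [← add_zero x, hzp v3]
      module
    · conv_rhs => rw [← add_zero x, hzp (u2 + v3 + v3 + v3 - e1 + e2)]
      module
    · conv_rhs => rw [← add_zero x, hzp u2]
      module
    · conv_rhs => rw [← add_zero x, hzp (-v3 - u1)]
      module
  have hσbij : Function.Bijective σ := by
    have h' : (σ ∘ₗ σ) ∘ₗ σ = LinearMap.id := by rw [LinearMap.comp_assoc]; exact hσ3
    exact Function.bijective_iff_has_inverse.mpr
      ⟨σ ∘ₗ σ, fun x => LinearMap.congr_fun h' x, fun x => LinearMap.congr_fun hσ3 x⟩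
  -- uniqueness
  have huniq : ∀ τ : C →ₗ[F] C, (∀ x y : C, τ (x * y) = τ x * τ y) →
      τ u1 = u1 → τ u2 = u2 → τ u3 = u3 + u2 + v3 - e1 + e2 → τ = σ := by
    intro τ hm h1 h2 h3
    have hv3' : τ v3 = v3 := by
      have h := hm u1 u2; rw [t20, h1, h2, t20] at h; exact h
    have hv1' : τ v1 = v1 + u2 := by
      have h := hm u2 u3; rw [t29, h2, h3] at h; rw [h]
      simp only [mul_add, mul_sub, t29, t28, t32, t25, t26]
      abel
    have hv2' : τ v2 = v2 - v3 - u1 := by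
      have h := hm u3 u1; rw [t35, h3, h1] at h; rw [h]
      simp only [add_mul, sub_mul, t35, t27, t59, t3, t11]
      abel
    have he1' : τ e1 = e1 - v3 := by
      have h := hm u1 v1
      rw [t22, h1, hv1', map_neg] at h
      have h2' : u1 * (v1 + u2) = -(e1 - v3) := by rw [mul_add, t22, t20]; abel
      rw [h2'] at h
      exact neg_injective h
    have he2' : τ e2 = e2 + v3 := by
      have h := hm v1 u1
      rw [t43, h1, hv1', map_neg] at h
      have h2' : (v1 + u2) * u1 = -(e2 + v3) := by rw [add_mul, t43, t27]; abel
      rw [h2'] at h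
      exact neg_injective h
    apply LinearMap.ext_on hspan
    intro x hx
    simp only [Set.mem_insert_iff, Set.mem_singleton_iff] at hx
    rcases hx with rfl | rfl | rfl | rfl | rfl | rfl | rfl | rfl <;>
      simp only [he1', he2', h1, h2, h3, hv1', hv2', hv3', hσe1, hσe2, hσu1, hσu2, hσu3,
        hσv1, hσv2, hσv3]
  have hneid : σ ≠ LinearMap.id := by
    intro hc
    have h : σ e1 = e1 := by rw [hc]; rfl
    rw [hσe1] at h
    exact hv3ne (sub_eq_self.mp h)

  have cb1 : QuadraticMap.polar n e2 e1 = 1 := by rw [QuadraticMap.polar_comm]; exact b1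
  have cb2 : QuadraticMap.polar n v1 u1 = 1 := by rw [QuadraticMap.polar_comm]; exact b2
  have cb3 : QuadraticMap.polar n v2 u2 = 1 := by rw [QuadraticMap.polar_comm]; exact b3
  have cb4 : QuadraticMap.polar n v3 u3 = 1 := by rw [QuadraticMap.polar_comm]; exact b4
  have cz1 : QuadraticMap.polar n u1 e1 = 0 := by rw [QuadraticMap.polar_comm]; exact z1
  have cz2 : QuadraticMap.polar n u2 e1 = 0 := by rw [QuadraticMap.polar_comm]; exact z2
  have cz3 : QuadraticMap.polar n u3 e1 = 0 := by rw [QuadraticMap.polar_comm]; exact z3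
  have cz4 : QuadraticMap.polar n v1 e1 = 0 := by rw [QuadraticMap.polar_comm]; exact z4
  have cz5 : QuadraticMap.polar n v2 e1 = 0 := by rw [QuadraticMap.polar_comm]; exact z5
  have cz6 : QuadraticMap.polar n v3 e1 = 0 := by rw [QuadraticMap.polar_comm]; exact z6
  have cz7 : QuadraticMap.polar n u1 e2 = 0 := by rw [QuadraticMap.polar_comm]; exact z7
  have cz8 : QuadraticMap.polar n u2 e2 = 0 := by rw [QuadraticMap.polar_comm]; exact z8
  have cz9 : QuadraticMap.polar n u3 e2 = 0 := by rw [QuadraticMap.polar_comm]; exact z9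
  have cz10 : QuadraticMap.polar n v1 e2 = 0 := by rw [QuadraticMap.polar_comm]; exact z10
  have cz11 : QuadraticMap.polar n v2 e2 = 0 := by rw [QuadraticMap.polar_comm]; exact z11
  have cz12 : QuadraticMap.polar n v3 e2 = 0 := by rw [QuadraticMap.polar_comm]; exact z12
  have cz13 : QuadraticMap.polar n u2 u1 = 0 := by rw [QuadraticMap.polar_comm]; exact z13
  have cz14 : QuadraticMap.polar n u3 u1 = 0 := by rw [QuadraticMap.polar_comm]; exact z14
  have cz15 : QuadraticMap.polar n u3 u2 = 0 := by rw [QuadraticMap.polar_comm]; exact z15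
  have cz16 : QuadraticMap.polar n v2 v1 = 0 := by rw [QuadraticMap.polar_comm]; exact z16
  have cz17 : QuadraticMap.polar n v3 v1 = 0 := by rw [QuadraticMap.polar_comm]; exact z17
  have cz18 : QuadraticMap.polar n v3 v2 = 0 := by rw [QuadraticMap.polar_comm]; exact z18
  have cz19 : QuadraticMap.polar n v2 u1 = 0 := by rw [QuadraticMap.polar_comm]; exact z19
  have cz20 : QuadraticMap.polar n v3 u1 = 0 := by rw [QuadraticMap.polar_comm]; exact z20
  have cz21 : QuadraticMap.polar n v1 u2 = 0 := by rw [QuadraticMap.polar_comm]; exact z21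
  have cz22 : QuadraticMap.polar n v3 u2 = 0 := by rw [QuadraticMap.polar_comm]; exact z22
  have cz23 : QuadraticMap.polar n v1 u3 = 0 := by rw [QuadraticMap.polar_comm]; exact z23
  have cz24 : QuadraticMap.polar n v2 u3 = 0 := by rw [QuadraticMap.polar_comm]; exact z24
  have d1 : QuadraticMap.polar n e1 e1 = 0 := by rw [QuadraticMap.polar_self, n1, smul_zero]
  have d2 : QuadraticMap.polar n e2 e2 = 0 := by rw [QuadraticMap.polar_self, n2, smul_zero]
  have d3 : QuadraticMap.polar n u1 u1 = 0 := by rw [QuadraticMap.polar_self, n3, smul_zero]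
  have d4 : QuadraticMap.polar n u2 u2 = 0 := by rw [QuadraticMap.polar_self, n4, smul_zero]
  have d5 : QuadraticMap.polar n u3 u3 = 0 := by rw [QuadraticMap.polar_self, n5, smul_zero]
  have d6 : QuadraticMap.polar n v1 v1 = 0 := by rw [QuadraticMap.polar_self, n6, smul_zero]
  have d7 : QuadraticMap.polar n v2 v2 = 0 := by rw [QuadraticMap.polar_self, n7, smul_zero]
  have d8 : QuadraticMap.polar n v3 v3 = 0 := by rw [QuadraticMap.polar_self, n8, smul_zero]
  -- σ preserves the polar form
  have hpolar : ∀ x y : C, QuadraticMap.polar n (σ x) (σ y) = QuadraticMap.polar n x y := by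
    have key : (QuadraticMap.polarBilin n).compl₁₂ σ σ = QuadraticMap.polarBilin n := by
      apply LinearMap.ext_on hspan
      intro x hx
      apply LinearMap.ext_on hspan
      intro y hy
      simp only [Set.mem_insert_iff, Set.mem_singleton_iff] at hx hy
      rcases hx with rfl | rfl | rfl | rfl | rfl | rfl | rfl | rfl <;>
        rcases hy with rfl | rfl | rfl | rfl | rfl | rfl | rfl | rfl <;>
        simp only [LinearMap.compl₁₂_apply, QuadraticMap.polarBilin_apply_apply,
          hσe1, hσe2, hσu1, hσu2, hσu3, hσv1, hσv2, hσv3,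
          QuadraticMap.polar_add_left, QuadraticMap.polar_add_right,
          QuadraticMap.polar_sub_left, QuadraticMap.polar_sub_right,
          QuadraticMap.polar_neg_left, QuadraticMap.polar_neg_right,
          b1, b2, b3, b4, z1, z2, z3, z4, z5, z6, z7, z8, z9, z10, z11, z12, z13, z14,
          z15, z16, z17, z18, z19, z20, z21, z22, z23, z24, cb1, cb2, cb3, cb4,
          cz1, cz2, cz3, cz4, cz5, cz6, cz7, cz8, cz9, cz10, cz11, cz12, cz13, cz14,
          cz15, cz16, cz17, cz18, cz19, cz20, cz21, cz22, cz23, cz24,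
          d1, d2, d3, d4, d5, d6, d7, d8] <;>
        norm_num
    intro x y
    have h := LinearMap.congr_fun (LinearMap.congr_fun key x) y
    simpa only [LinearMap.compl₁₂_apply, QuadraticMap.polarBilin_apply_apply] using h
  -- σ preserves the norm
  have hnorm : ∀ x : C, n (σ x) = n x := by
    intro x
    have h := hpolar x x
    rw [QuadraticMap.polar_self, QuadraticMap.polar_self] at h
    have h2 : (2 : F) * n (σ x) = (2 : F) * n x := by
      have e : ∀ a : F, 2 • a = (2:F) * a := fun a => by
        rw [nsmul_eq_mul]; norm_num
      rw [e, e] at h; exact h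
    exact mul_left_cancel₀ h2ne h2

  -- the new basis adapted to the decomposition
  haveI : Module.Finite F C := Module.Finite.of_basis B
  have hcard : Fintype.card (Fin 8) = Module.finrank F C := (Module.finrank_eq_card_basis B).symm
  have ce1 : e1 = (2:F) • (e1 + e2) + (2:F) • u2 + (u2 - e1 + e2) - (3:F) • (e2 + u2) := by
    module
  have ce2 : e2 = (2:F) • (e1 + e2) + u2 + (2:F) • (u2 - e1 + e2) - (3:F) • (e2 + u2) := by
    module
  have ce1' : e1 = (2:F) • (e1 + e2) + (2:F) • u2 + (u2 - e1 + e2) := by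
    have h := ce1; rwa [h3F, zero_smul, sub_zero] at h
  have ce2' : e2 = (2:F) • (e1 + e2) + u2 + (2:F) • (u2 - e1 + e2) := by
    have h := ce2; rwa [h3F, zero_smul, sub_zero] at h
  have cu1 : u1 = (v3 + u1) - v3 := by abel
  have hwle : ⊤ ≤ Submodule.span F
      (Set.range ![e1 + e2, v1, v2, u2, v3 + u1, u3, v3, u2 - e1 + e2]) := by
    rw [← hspan]
    apply Submodule.span_le.mpr
    intro x hx
    have m1 : e1 + e2 ∈ Submodule.span F
        (Set.range ![e1 + e2, v1, v2, u2, v3 + u1, u3, v3, u2 - e1 + e2]) :=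
      Submodule.subset_span ⟨0, rfl⟩
    have m2 : v1 ∈ Submodule.span F
        (Set.range ![e1 + e2, v1, v2, u2, v3 + u1, u3, v3, u2 - e1 + e2]) :=
      Submodule.subset_span ⟨1, rfl⟩
    have m3 : v2 ∈ Submodule.span F
        (Set.range ![e1 + e2, v1, v2, u2, v3 + u1, u3, v3, u2 - e1 + e2]) :=
      Submodule.subset_span ⟨2, rfl⟩
    have m4 : u2 ∈ Submodule.span F
        (Set.range ![e1 + e2, v1, v2, u2, v3 + u1, u3, v3, u2 - e1 + e2]) :=
      Submodule.subset_span ⟨3, rfl⟩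
    have m5 : v3 + u1 ∈ Submodule.span F
        (Set.range ![e1 + e2, v1, v2, u2, v3 + u1, u3, v3, u2 - e1 + e2]) :=
      Submodule.subset_span ⟨4, rfl⟩
    have m6 : u3 ∈ Submodule.span F
        (Set.range ![e1 + e2, v1, v2, u2, v3 + u1, u3, v3, u2 - e1 + e2]) :=
      Submodule.subset_span ⟨5, rfl⟩
    have m7 : v3 ∈ Submodule.span F
        (Set.range ![e1 + e2, v1, v2, u2, v3 + u1, u3, v3, u2 - e1 + e2]) :=
      Submodule.subset_span ⟨6, rfl⟩
    have m8 : u2 - e1 + e2 ∈ Submodule.span F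
        (Set.range ![e1 + e2, v1, v2, u2, v3 + u1, u3, v3, u2 - e1 + e2]) :=
      Submodule.subset_span ⟨7, rfl⟩
    simp only [Set.mem_insert_iff, Set.mem_singleton_iff] at hx
    rcases hx with rfl | rfl | rfl | rfl | rfl | rfl | rfl | rfl
    · have hm := add_mem (add_mem (Submodule.smul_mem _ ((2:F)) m1) (Submodule.smul_mem _ ((2:F)) m4)) m8
      rwa [← ce1'] at hm
    · have hm := add_mem (add_mem (Submodule.smul_mem _ ((2:F)) m1) m4) (Submodule.smul_mem _ ((2:F)) m8)
      rwa [← ce2'] at hm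
    · have hm := sub_mem m5 m7
      rwa [← cu1] at hm
    · exact m4
    · exact m6
    · exact m2
    · exact m3
    · exact m7
  let b' : Module.Basis (Fin 8) F C :=
    basisOfTopLeSpanOfCardEqFinrank ![e1 + e2, v1, v2, u2, v3 + u1, u3, v3, u2 - e1 + e2]
      hwle hcard
  have hb' : ⇑b' = ![e1 + e2, v1, v2, u2, v3 + u1, u3, v3, u2 - e1 + e2] :=
    coe_basisOfTopLeSpanOfCardEqFinrank _ _ _
  have hA0 : Submodule.span F {e1 + e2} = Submodule.span F (b' '' {0}) := by
    rw [hb', Set.image_singleton]; rfl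
  have hA1 : Submodule.span F {v1, v2} = Submodule.span F (b' '' {1, 2}) := by
    rw [hb', Set.image_insert_eq, Set.image_singleton]; rfl
  have hA1d : Submodule.span F {u2, v3 + u1} = Submodule.span F (b' '' {3, 4}) := by
    rw [hb', Set.image_insert_eq, Set.image_singleton]; rfl
  have hA2 : Submodule.span F {u3, v3, u2 - e1 + e2} = Submodule.span F (b' '' {5, 6, 7}) := by
    rw [hb', Set.image_insert_eq, Set.image_insert_eq, Set.image_singleton]; rfl
  have hlespan : ∀ (S T : Set (Fin 8)), S ⊆ T →
      Submodule.span F (b' '' S) ≤ Submodule.span F (b' '' T) := fun S T h =>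
    Submodule.span_mono (Set.image_mono h)
  have hint : DirectSum.IsInternal
      ![Submodule.span F {e1 + e2}, Submodule.span F {v1, v2},
        Submodule.span F {u2, v3 + u1}, Submodule.span F {u3, v3, u2 - e1 + e2}] := by
    rw [DirectSum.isInternal_submodule_iff_iSupIndep_and_iSup_eq_top]
    constructor
    · intro i
      fin_cases i
      · refine Disjoint.mono (le_of_eq hA0) ?_
          (b'.linearIndependent.disjoint_span_image (s := {0}) (t := {1, 2, 3, 4, 5, 6, 7})
            (by rw [Set.disjoint_left]; intro a ha hb; simp only [Set.mem_insert_iff, Set.mem_singleton_iff] at ha hb; revert ha hb; revert a; decide))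
        refine iSup_le fun j => iSup_le fun hj => ?_
        fin_cases j
        · simp at hj
        · exact (le_of_eq hA1).trans (hlespan _ _ (by intro t; simp only [Set.mem_insert_iff, Set.mem_singleton_iff]; revert t; decide))
        · exact (le_of_eq hA1d).trans (hlespan _ _ (by intro t; simp only [Set.mem_insert_iff, Set.mem_singleton_iff]; revert t; decide))
        · exact (le_of_eq hA2).trans (hlespan _ _ (by intro t; simp only [Set.mem_insert_iff, Set.mem_singleton_iff]; revert t; decide))
      · refine Disjoint.mono (le_of_eq hA1) ?_
          (b'.linearIndependent.disjoint_span_image (s := {1, 2}) (t := {0, 3, 4, 5, 6, 7})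
            (by rw [Set.disjoint_left]; intro a ha hb; simp only [Set.mem_insert_iff, Set.mem_singleton_iff] at ha hb; revert ha hb; revert a; decide))
        refine iSup_le fun j => iSup_le fun hj => ?_
        fin_cases j
        · exact (le_of_eq hA0).trans (hlespan _ _ (by intro t; simp only [Set.mem_insert_iff, Set.mem_singleton_iff]; revert t; decide))
        · simp at hj
        · exact (le_of_eq hA1d).trans (hlespan _ _ (by intro t; simp only [Set.mem_insert_iff, Set.mem_singleton_iff]; revert t; decide))
        · exact (le_of_eq hA2).trans (hlespan _ _ (by intro t; simp only [Set.mem_insert_iff, Set.mem_singleton_iff]; revert t; decide))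
      · refine Disjoint.mono (le_of_eq hA1d) ?_
          (b'.linearIndependent.disjoint_span_image (s := {3, 4}) (t := {0, 1, 2, 5, 6, 7})
            (by rw [Set.disjoint_left]; intro a ha hb; simp only [Set.mem_insert_iff, Set.mem_singleton_iff] at ha hb; revert ha hb; revert a; decide))
        refine iSup_le fun j => iSup_le fun hj => ?_
        fin_cases j
        · exact (le_of_eq hA0).trans (hlespan _ _ (by intro t; simp only [Set.mem_insert_iff, Set.mem_singleton_iff]; revert t; decide))
        · exact (le_of_eq hA1).trans (hlespan _ _ (by intro t; simp only [Set.mem_insert_iff, Set.mem_singleton_iff]; revert t; decide))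
        · simp at hj
        · exact (le_of_eq hA2).trans (hlespan _ _ (by intro t; simp only [Set.mem_insert_iff, Set.mem_singleton_iff]; revert t; decide))
      · refine Disjoint.mono (le_of_eq hA2) ?_
          (b'.linearIndependent.disjoint_span_image (s := {5, 6, 7}) (t := {0, 1, 2, 3, 4})
            (by rw [Set.disjoint_left]; intro a ha hb; simp only [Set.mem_insert_iff, Set.mem_singleton_iff] at ha hb; revert ha hb; revert a; decide))
        refine iSup_le fun j => iSup_le fun hj => ?_
        fin_cases j
        · exact (le_of_eq hA0).trans (hlespan _ _ (by intro t; simp only [Set.mem_insert_iff, Set.mem_singleton_iff]; revert t; decide))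
        · exact (le_of_eq hA1).trans (hlespan _ _ (by intro t; simp only [Set.mem_insert_iff, Set.mem_singleton_iff]; revert t; decide))
        · exact (le_of_eq hA1d).trans (hlespan _ _ (by intro t; simp only [Set.mem_insert_iff, Set.mem_singleton_iff]; revert t; decide))
        · simp at hj
    · apply le_antisymm le_top
      rw [← hspan]
      apply Submodule.span_le.mpr
      intro x hx
      set f : Fin 4 → Submodule F C :=
        ![Submodule.span F {e1 + e2}, Submodule.span F {v1, v2},
          Submodule.span F {u2, v3 + u1}, Submodule.span F {u3, v3, u2 - e1 + e2}] with hf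
      have m1 : e1 + e2 ∈ ⨆ i, f i :=
        Submodule.mem_iSup_of_mem 0 (Submodule.subset_span rfl)
      have m2 : v1 ∈ ⨆ i, f i :=
        Submodule.mem_iSup_of_mem 1 (Submodule.subset_span (Set.mem_insert _ _))
      have m3 : v2 ∈ ⨆ i, f i :=
        Submodule.mem_iSup_of_mem 1 (Submodule.subset_span (by right; rfl))
      have m4 : u2 ∈ ⨆ i, f i :=
        Submodule.mem_iSup_of_mem 2 (Submodule.subset_span (Set.mem_insert _ _))
      have m5 : v3 + u1 ∈ ⨆ i, f i :=
        Submodule.mem_iSup_of_mem 2 (Submodule.subset_span (by right; rfl))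
      have m6 : u3 ∈ ⨆ i, f i :=
        Submodule.mem_iSup_of_mem 3 (Submodule.subset_span (Set.mem_insert _ _))
      have m7 : v3 ∈ ⨆ i, f i :=
        Submodule.mem_iSup_of_mem 3 (Submodule.subset_span (by right; left; rfl))
      have m8 : u2 - e1 + e2 ∈ ⨆ i, f i :=
        Submodule.mem_iSup_of_mem 3 (Submodule.subset_span (by right; right; rfl))
      simp only [Set.mem_insert_iff, Set.mem_singleton_iff] at hx
      rcases hx with rfl | rfl | rfl | rfl | rfl | rfl | rfl | rfl
      · have hm := add_mem (add_mem (Submodule.smul_mem _ ((2:F)) m1) (Submodule.smul_mem _ ((2:F)) m4)) m8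
        rwa [← ce1'] at hm
      · have hm := add_mem (add_mem (Submodule.smul_mem _ ((2:F)) m1) m4) (Submodule.smul_mem _ ((2:F)) m8)
        rwa [← ce2'] at hm
      · have hm := sub_mem m5 m7
        rwa [← cu1] at hm
      · exact m4
      · exact m6
      · exact m2
      · exact m3
      · exact m7

  -- assemble
  constructor
  · exact ⟨σ, ⟨hmulσ, hσbij, hσu1, hσu2, hσu3⟩,
      fun τ hτ => huniq τ hτ.1 hτ.2.2.1 hτ.2.2.2.1 hτ.2.2.2.2⟩
  · intro σ' hm' hbij' h1' h2' h3' δ hδ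
    have heq : σ' = σ := huniq σ' hm' h1' h2' h3'
    subst heq
    have hδe1 : δ e1 = -v3 := by rw [hδ, hσe1]; abel
    have hδe2 : δ e2 = v3 := by rw [hδ, hσe2]; abel
    have hδu1 : δ u1 = 0 := by rw [hδ, hσu1, sub_self]
    have hδu2 : δ u2 = 0 := by rw [hδ, hσu2, sub_self]
    have hδu3 : δ u3 = u2 + v3 - e1 + e2 := by rw [hδ, hσu3]; abel
    have hδv1 : δ v1 = u2 := by rw [hδ, hσv1]; abel
    have hδv2 : δ v2 = -v3 - u1 := by rw [hδ, hσv2]; abel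
    have hδv3 : δ v3 = 0 := by rw [hδ, hσv3, sub_self]
    have hmapδ : (Submodule.span F {v1, v2}).map δ = Submodule.span F {u2, v3 + u1} := by
      apply le_antisymm
      · refine (Submodule.map_span_le _ _ _).mpr ?_
        intro m hm
        rcases hm with rfl | rfl
        · rw [hδv1]; exact Submodule.subset_span (Set.mem_insert _ _)
        · rw [hδv2]
          have hmem : v3 + u1 ∈ Submodule.span F {u2, v3 + u1} :=
            Submodule.subset_span (by right; rfl)
          have h := neg_mem hmem
          have he : -(v3 + u1) = -v3 - u1 := by abel
          rwa [he] at h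
      · apply Submodule.span_le.mpr
        intro m hm
        rcases hm with rfl | rfl
        · exact ⟨v1, Submodule.subset_span (Set.mem_insert _ _), hδv1⟩
        · refine ⟨-v2, neg_mem (Submodule.subset_span (by right; rfl)), ?_⟩
          rw [map_neg, hδv2]; abel
    refine ⟨hσ3, hneid, ?_, hnorm, hδv1, hδv2, hmapδ, ?_, ?_, ?_, ?_, ?_, ?_, ?_, ?_⟩
    -- δ ∘ δ ≠ 0
    · intro hc
      have h1 : (δ ∘ₗ δ) u3 = 0 := by rw [hc]; rfl
      rw [LinearMap.comp_apply, hδu3] at h1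
      have h2 : δ (u2 + v3 - e1 + e2) = v3 + v3 := by
        rw [map_add, map_sub, map_add, hδu2, hδv3, hδe1, hδe2]; abel
      rw [h2] at h1
      have h3 : (2:F) • v3 = 0 := by rw [← h1]; module
      rcases smul_eq_zero.mp h3 with h | h
      · exact h2ne h
      · exact hv3ne h
    -- A2 is δ-invariant
    · refine (Submodule.map_span_le _ _ _).mpr ?_
      intro m hm
      rcases hm with rfl | rfl | rfl
      · rw [hδu3]
        have hmem : (u2 - e1 + e2) + v3 ∈ Submodule.span F {m, v3, u2 - e1 + e2} :=
          add_mem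
            (Submodule.subset_span (by right; right; rfl))
            (Submodule.subset_span (by right; left; rfl))
        have he : (u2 - e1 + e2) + v3 = u2 + v3 - e1 + e2 := by abel
        rwa [he] at hmem
      · rw [hδv3]; exact zero_mem _
      · have h2 : δ (u2 - e1 + e2) = v3 + v3 := by
          rw [map_add, map_sub, hδu2, hδe1, hδe2]; abel
        rw [h2]
        exact add_mem
          (Submodule.subset_span (by right; left; rfl))
          (Submodule.subset_span (by right; left; rfl))
    -- the direct sum decomposition
    · rw [hmapδ]; exact hint
    -- the recipe gives B(1,2)
    · intro p q hp1 hp0 hq1 hq0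
      rw [hmapδ] at hp0 hq0
      have hpe : p (e1 + e2) = e1 + e2 := hp1 _ (Submodule.mem_span_singleton_self _)
      have hu2m : u2 ∈ (Submodule.span F {v1, v2} ⊔ Submodule.span F {u2, v3 + u1}) ⊔
          Submodule.span F {u3, v3, u2 - e1 + e2} :=
        Submodule.mem_sup_left (Submodule.mem_sup_right
          (Submodule.subset_span (Set.mem_insert _ _)))
      have hw8m : u2 - e1 + e2 ∈ (Submodule.span F {v1, v2} ⊔ Submodule.span F {u2, v3 + u1}) ⊔
          Submodule.span F {u3, v3, u2 - e1 + e2} :=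
        Submodule.mem_sup_right (Submodule.subset_span (by right; right; rfl))
      have hu1m : u1 ∈ (Submodule.span F {v1, v2} ⊔ Submodule.span F {u2, v3 + u1}) ⊔
          Submodule.span F {u3, v3, u2 - e1 + e2} := by
        have hm : (v3 + u1) - v3 ∈ (Submodule.span F {v1, v2} ⊔ Submodule.span F {u2, v3 + u1}) ⊔
            Submodule.span F {u3, v3, u2 - e1 + e2} :=
          sub_mem
            (Submodule.mem_sup_left (Submodule.mem_sup_right
              (Submodule.subset_span (by right; rfl))))
            (Submodule.mem_sup_right (Submodule.subset_span (by right; left; rfl)))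
        rwa [← cu1] at hm
      refine ⟨?_, ?_, ?_, ?_, ?_, ?_, ?_, ?_, ?_⟩
      · have hprod : (e1 + e2) * (e1 + e2) = e1 + e2 := by
          rw [add_mul, mul_add, mul_add, t1, t2, t9, t10]; abel
        rw [hprod]; exact hpe
      · have hprod : (e1 + e2) * v1 = v1 := by rw [add_mul, t6, t14, zero_add]
        rw [hprod]; exact hq1 _ (Submodule.subset_span (Set.mem_insert _ _))
      · have hprod : v1 * (e1 + e2) = v1 := by rw [mul_add, t41, t42, add_zero]
        rw [hprod]; exact hq1 _ (Submodule.subset_span (Set.mem_insert _ _))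
      · have hprod : (e1 + e2) * v2 = v2 := by rw [add_mul, t7, t15, zero_add]
        rw [hprod]; exact hq1 _ (Submodule.subset_span (by right; rfl))
      · have hprod : v2 * (e1 + e2) = v2 := by rw [mul_add, t49, t50, add_zero]
        rw [hprod]; exact hq1 _ (Submodule.subset_span (by right; rfl))
      · rw [hδv1, t44, map_zero]
      · rw [hδv2]
        have hprod : v2 * (-v3 - u1) = -u1 := by
          rw [mul_sub, mul_neg, t56, t51]; abel
        rw [hprod]
        exact hp0 _ (neg_mem hu1m)
      · rw [hδv2]
        have hprod : v1 * (-v3 - u1) = u2 + e2 := by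
          rw [mul_sub, mul_neg, t48, t43]; abel
        rw [hprod]
        have hc8 : u2 + e2 = -(e1 + e2) + ((2:F) • u2 + (2:F) • (u2 - e1 + e2)) +
            ((3:F) • (e1 + e2) - (3:F) • (u2 + e2)) := by module
        rw [hc8, h3F, zero_smul, zero_smul, sub_zero, add_zero, map_add, map_add, map_neg,
          hpe, map_smul, map_smul, hp0 _ hu2m, hp0 _ hw8m, smul_zero]
        simp
      · rw [hδv1, t52, map_neg]
        have hpe2 : p e2 = (2:F) • (e1 + e2) := by
          conv_lhs => rw [ce2']
          rw [map_add, map_add, map_smul, map_smul, hpe, hp0 _ hu2m, hp0 _ hw8m,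
            smul_zero, add_zero, add_zero]
        rw [hpe2, h2F, neg_smul, one_smul, neg_neg]
    -- the supersymmetric norm
    · simp only [QuadraticMap.polar_add_left, QuadraticMap.polar_add_right, d1, d2, b1, cb1]
      norm_num
    · rw [hδv2]
      simp only [QuadraticMap.polar_sub_right, QuadraticMap.polar_neg_right, z17, cb2]
      norm_num
    · rw [hδv1]; exact cb3
    · rw [hδv1]; exact cz21
    · rw [hδv2]
      simp only [QuadraticMap.polar_sub_right, QuadraticMap.polar_neg_right, z18, cz19]
      norm_num
end

section
/- Let F be a field of characteristic 3 and let C be an 8-dimensional unital F-algebra equipped with a quadratic form n whose polar bilinear form b(x,y) = n(x+y) − n(x) − n(y) is nondegenerate and such that n(xy) = n(x)n(y) for all x, y ∈ C (i.e., C is a Cayley algebra over F). If C admits an algebra automorphism σ with σ³ = id and σ ≠ id, then the norm n is isotropic: there exists x ≠ 0 in C with n(x) = 0 (so C is the split Cayley algebra). -/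
/-- A Cayley algebra (8-dimensional unital algebra with a multiplicative
quadratic form whose polar form is nondegenerate) over a field of characteristic 3 that
admits an algebra automorphism `σ` with `σ³ = id`, `σ ≠ id`, has isotropic norm
(hence is the split Cayley algebra). -/
theorem norm_isotropic_of_order_three_automorphism {F : Type*} [Field F] [CharP F 3]
    {C : Type*} [NonAssocRing C] [Module F C] [SMulCommClass F C C] [IsScalarTower F C C]
    [FiniteDimensional F C] (hdim : Module.finrank F C = 8)
    (n : QuadraticForm F C)
    (hmul : ∀ x y : C, n (x * y) = n x * n y)
    (hnd : ∀ x : C, (∀ y : C, QuadraticMap.polar n x y = 0) → x = 0)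
    (σ : C →ₗ[F] C) (hσmul : ∀ x y : C, σ (x * y) = σ x * σ y)
    (hσ3 : σ ∘ₗ σ ∘ₗ σ = LinearMap.id) (hσne : σ ≠ LinearMap.id) :
    ∃ x : C, x ≠ 0 ∧ n x = 0 := by
  classical
  -- C is nontrivial
  have hone : (1 : C) ≠ 0 := by
    intro h
    have hsub : Subsingleton C := subsingleton_of_zero_eq_one h.symm
    rw [Module.finrank_zero_of_subsingleton] at hdim
    norm_num at hdim
  -- linearized composition law in the right slot
  have key1 : ∀ x y z : C, QuadraticMap.polar n (x * y) (x * z)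
      = n x * QuadraticMap.polar n y z := by
    intro x y z
    simp only [QuadraticMap.polar, ← mul_add, hmul]
    ring
  -- n 1 is idempotent
  have hn1sq : n 1 * n 1 = n 1 := by
    have := hmul 1 1
    rw [one_mul] at this
    exact this.symm
  by_cases hn1 : n 1 = 0
  · exact ⟨1, hone, hn1⟩
  have hn1one : n (1 : C) = 1 := by
    have := mul_left_cancel₀ hn1 (by rw [hn1sq, mul_one] : n 1 * n 1 = n 1 * 1)
    exact this
  -- key quadratic identity
  have keyquad : ∀ x z : C, QuadraticMap.polar n (x * x) z
      = QuadraticMap.polar n x 1 * QuadraticMap.polar n x z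
        - n x * QuadraticMap.polar n 1 z := by
    intro x z
    have h := key1 (x + 1) x z
    rw [add_mul, add_mul, one_mul, one_mul, QuadraticMap.polar_add_left,
      QuadraticMap.polar_add_right, QuadraticMap.polar_add_right] at h
    have h1 := key1 x x z
    have h2 : QuadraticMap.polar n x (x * z) = n x * QuadraticMap.polar n 1 z := by
      have := key1 x 1 z
      rwa [mul_one] at this
    have hnx1 : n (x + 1) = n x + n 1 + QuadraticMap.polar n x 1 := by
      simp only [QuadraticMap.polar]; ring
    rw [h1, h2, hnx1, hn1one] at h
    linear_combination h
  -- Cayley-Hamilton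
  have CH : ∀ x : C, x * x = QuadraticMap.polar n x 1 • x - n x • (1 : C) := by
    intro x
    have h : ∀ z : C, QuadraticMap.polar n
        (x * x - (QuadraticMap.polar n x 1 • x - n x • (1 : C))) z = 0 := by
      intro z
      rw [QuadraticMap.polar_sub_left, QuadraticMap.polar_sub_left,
        QuadraticMap.polar_smul_left, QuadraticMap.polar_smul_left, keyquad x z,
        smul_eq_mul, smul_eq_mul]
      ring
    have := hnd _ h
    exact sub_eq_zero.mp this
  -- σ is surjective and fixes 1
  have hσ3' : ∀ x : C, σ (σ (σ x)) = x := by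
    intro x
    have := LinearMap.ext_iff.mp hσ3 x
    simpa using this
  have hσsurj : Function.Surjective σ := fun y => ⟨σ (σ y), hσ3' y⟩
  have hσ1 : σ 1 = 1 := by
    have hid : ∀ z : C, σ 1 * z = z := by
      intro z
      obtain ⟨w, rfl⟩ := hσsurj z
      rw [← hσmul, one_mul]
    have := hid 1
    rwa [mul_one] at this
  -- σ preserves the norm
  have hiso : ∀ x : C, n (σ x) = n x := by
    intro x
    by_contra hne
    have e1 : σ x * σ x = QuadraticMap.polar n x 1 • σ x - n x • (1 : C) := by
      rw [← hσmul]
      rw [CH x, map_sub, map_smul, map_smul, hσ1]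
    have e2 := CH (σ x)
    have h4 : (QuadraticMap.polar n (σ x) 1 - QuadraticMap.polar n x 1) • σ x
        = (n (σ x) - n x) • (1 : C) := by
      rw [sub_smul, sub_smul]
      have e1' : QuadraticMap.polar n x 1 • σ x = σ x * σ x + n x • (1 : C) :=
        sub_eq_iff_eq_add.mp e1.symm
      have e2' : QuadraticMap.polar n (σ x) 1 • σ x = σ x * σ x + n (σ x) • (1 : C) :=
        sub_eq_iff_eq_add.mp e2.symm
      rw [e1', e2']
      abel
    set a := QuadraticMap.polar n (σ x) 1 - QuadraticMap.polar n x 1 with ha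
    set d := n (σ x) - n x with hdd
    have hd : d ≠ 0 := sub_ne_zero.mpr hne
    have hane : a ≠ 0 := by
      intro h0
      rw [h0, zero_smul] at h4
      rcases smul_eq_zero.mp h4.symm with h | h
      · exact hd h
      · exact hone h
    have hx1 : σ x = (a⁻¹ * d) • (1 : C) := by
      calc σ x = a⁻¹ • (a • σ x) := by rw [smul_smul, inv_mul_cancel₀ hane, one_smul]
        _ = a⁻¹ • (d • (1 : C)) := by rw [h4]
        _ = (a⁻¹ * d) • (1 : C) := by rw [smul_smul]
    have hfix : σ x = x := by
      calc σ x = (a⁻¹ * d) • (1 : C) := hx1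
        _ = σ (σ ((a⁻¹ * d) • (1 : C))) := by rw [map_smul, hσ1, map_smul, hσ1]
        _ = σ (σ (σ x)) := by rw [← hx1]
        _ = x := hσ3' x
    exact hne (by rw [hfix])
  -- σ preserves the polar form
  have biso : ∀ x y : C, QuadraticMap.polar n (σ x) (σ y) = QuadraticMap.polar n x y := by
    intro x y
    simp only [QuadraticMap.polar, ← map_add, hiso]
  -- the "difference" map
  set Nf : C → C := fun x => σ x - x with hNf
  have hkey : ∀ x y : C, QuadraticMap.polar n (Nf x) (Nf y)
      + QuadraticMap.polar n (Nf x) y + QuadraticMap.polar n x (Nf y) = 0 := by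
    intro x y
    have h := biso x y
    have hx : σ x = Nf x + x := by simp [hNf]
    have hy : σ y = Nf y + y := by simp [hNf]
    rw [hx, hy, QuadraticMap.polar_add_left, QuadraticMap.polar_add_right,
      QuadraticMap.polar_add_right] at h
    linear_combination h
  -- char 3: y + y + y = 0
  have hsmul3 : ∀ y : C, y + y + y = 0 := by
    intro y
    have h3 : ((3 : ℕ) : F) = 0 := CharP.cast_eq_zero F 3
    have : (3 : ℕ) • y = y + y + y := by
      rw [succ_nsmul, two_nsmul]
    rw [← this, ← Nat.cast_smul_eq_nsmul F 3 y, h3, zero_smul]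
  -- N³ = 0
  have comp3 : ∀ x : C, Nf (Nf (Nf x)) = 0 := by
    intro x
    have : Nf (Nf (Nf x)) = (σ x - σ (σ x)) + (σ x - σ (σ x)) + (σ x - σ (σ x)) := by
      simp only [hNf, map_sub]
      rw [hσ3' x]
      abel
    rw [this, hsmul3]
  -- 2 ≠ 0 in F
  have h2F : (2 : F) ≠ 0 := by
    intro h
    have : ((2 : ℕ) : F) = 0 := by exact_mod_cast h
    have := (CharP.cast_eq_zero_iff F 3 2).mp this
    norm_num at this
  have nzero_of_polar : ∀ u : C, QuadraticMap.polar n u u = 0 → n u = 0 := by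
    intro u hu
    rw [QuadraticMap.polar_self, two_nsmul] at hu
    have : (2 : F) * n u = 0 := by rw [two_mul]; exact hu
    rcases mul_eq_zero.mp this with h | h
    · exact absurd h h2F
    · exact h
  by_cases hN2 : ∀ x : C, Nf (Nf x) = 0
  · -- N² = 0, take u = N x₀ ≠ 0
    have hx0 : ∃ x : C, σ x ≠ x := by
      by_contra h
      push_neg at h
      exact hσne (LinearMap.ext fun x => by simpa using h x)
    obtain ⟨x0, hx0⟩ := hx0
    have hu : Nf x0 ≠ 0 := sub_ne_zero.mpr hx0
    refine ⟨Nf x0, hu, ?_⟩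
    have h := hkey x0 (Nf x0)
    rw [hN2 x0, QuadraticMap.polar_zero_right, QuadraticMap.polar_zero_right] at h
    have hpol : QuadraticMap.polar n (Nf x0) (Nf x0) = 0 := by linear_combination h
    exact nzero_of_polar _ hpol
  · push_neg at hN2
    obtain ⟨x1, hx1⟩ := hN2
    refine ⟨Nf (Nf x1), hx1, ?_⟩
    have h := hkey (Nf x1) (Nf (Nf x1))
    rw [comp3 x1, QuadraticMap.polar_zero_right, QuadraticMap.polar_zero_right] at h
    have hpol : QuadraticMap.polar n (Nf (Nf x1)) (Nf (Nf x1)) = 0 := by linear_combination h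
    exact nzero_of_polar _ hpol
end

section
/- Let F be a field of characteristic 3 and let C be the split Cayley algebra over F. The F-linear map σ on C fixing e1 and e2 and with σ(ui) = u_{i+1} and σ(vi) = v_{i+1} (indices mod 3) is an algebra automorphism of C with σ³ = id and σ ≠ id, it preserves the norm n (n(σ(x)) = n(x) for all x), it fixes the two-dimensional subalgebra F·e1 + F·e2 elementwise, and (σ − id)² ≠ 0. -/
/-- In the split Cayley algebra over a field of characteristic 3, the linear
map fixing `e1, e2` and permuting `u_i ↦ u_{i+1}`, `v_i ↦ v_{i+1}` cyclically is an algebra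
automorphism with `σ³ = id`, `σ ≠ id`, preserving the norm, fixing the two-dimensional
subalgebra `F e1 + F e2` elementwise, and with `(σ - id)² ≠ 0`. -/
theorem split_cayley_cyclic_automorphism
    {F : Type*} [Field F] [CharP F 3]
    {C : Type*} [NonAssocRing C] [Module F C] [SMulCommClass F C C] [IsScalarTower F C C]
    (e1 e2 u1 u2 u3 v1 v2 v3 : C)
    (hind : LinearIndependent F ![e1, e2, u1, u2, u3, v1, v2, v3])
    (hspan : Submodule.span F {e1, e2, u1, u2, u3, v1, v2, v3} = ⊤)
    (hone : (1 : C) = e1 + e2)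
    -- multiplication table of the split Cayley algebra
    (t1 : e1 * e1 = e1) (t2 : e1 * e2 = 0) (t3 : e1 * u1 = u1) (t4 : e1 * u2 = u2)
    (t5 : e1 * u3 = u3) (t6 : e1 * v1 = 0) (t7 : e1 * v2 = 0) (t8 : e1 * v3 = 0)
    (t9 : e2 * e1 = 0) (t10 : e2 * e2 = e2) (t11 : e2 * u1 = 0) (t12 : e2 * u2 = 0)
    (t13 : e2 * u3 = 0) (t14 : e2 * v1 = v1) (t15 : e2 * v2 = v2) (t16 : e2 * v3 = v3)
    (t17 : u1 * e1 = 0) (t18 : u1 * e2 = u1) (t19 : u1 * u1 = 0) (t20 : u1 * u2 = v3)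
    (t21 : u1 * u3 = -v2) (t22 : u1 * v1 = -e1) (t23 : u1 * v2 = 0) (t24 : u1 * v3 = 0)
    (t25 : u2 * e1 = 0) (t26 : u2 * e2 = u2) (t27 : u2 * u1 = -v3) (t28 : u2 * u2 = 0)
    (t29 : u2 * u3 = v1) (t30 : u2 * v1 = 0) (t31 : u2 * v2 = -e1) (t32 : u2 * v3 = 0)
    (t33 : u3 * e1 = 0) (t34 : u3 * e2 = u3) (t35 : u3 * u1 = v2) (t36 : u3 * u2 = -v1)
    (t37 : u3 * u3 = 0) (t38 : u3 * v1 = 0) (t39 : u3 * v2 = 0) (t40 : u3 * v3 = -e1)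
    (t41 : v1 * e1 = v1) (t42 : v1 * e2 = 0) (t43 : v1 * u1 = -e2) (t44 : v1 * u2 = 0)
    (t45 : v1 * u3 = 0) (t46 : v1 * v1 = 0) (t47 : v1 * v2 = u3) (t48 : v1 * v3 = -u2)
    (t49 : v2 * e1 = v2) (t50 : v2 * e2 = 0) (t51 : v2 * u1 = 0) (t52 : v2 * u2 = -e2)
    (t53 : v2 * u3 = 0) (t54 : v2 * v1 = -u3) (t55 : v2 * v2 = 0) (t56 : v2 * v3 = u1)
    (t57 : v3 * e1 = v3) (t58 : v3 * e2 = 0) (t59 : v3 * u1 = 0) (t60 : v3 * u2 = 0)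
    (t61 : v3 * u3 = -e2) (t62 : v3 * v1 = u2) (t63 : v3 * v2 = -u1) (t64 : v3 * v3 = 0)
    -- the norm: a quadratic form vanishing on the basis, with hyperbolic polar form
    (n : QuadraticForm F C)
    (n1 : n e1 = 0) (n2 : n e2 = 0) (n3 : n u1 = 0) (n4 : n u2 = 0) (n5 : n u3 = 0)
    (n6 : n v1 = 0) (n7 : n v2 = 0) (n8 : n v3 = 0)
    (b1 : QuadraticMap.polar n e1 e2 = 1)
    (b2 : QuadraticMap.polar n u1 v1 = 1)
    (b3 : QuadraticMap.polar n u2 v2 = 1)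
    (b4 : QuadraticMap.polar n u3 v3 = 1)
    (z1 : QuadraticMap.polar n e1 u1 = 0) (z2 : QuadraticMap.polar n e1 u2 = 0)
    (z3 : QuadraticMap.polar n e1 u3 = 0) (z4 : QuadraticMap.polar n e1 v1 = 0)
    (z5 : QuadraticMap.polar n e1 v2 = 0) (z6 : QuadraticMap.polar n e1 v3 = 0)
    (z7 : QuadraticMap.polar n e2 u1 = 0) (z8 : QuadraticMap.polar n e2 u2 = 0)
    (z9 : QuadraticMap.polar n e2 u3 = 0) (z10 : QuadraticMap.polar n e2 v1 = 0)
    (z11 : QuadraticMap.polar n e2 v2 = 0) (z12 : QuadraticMap.polar n e2 v3 = 0)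
    (z13 : QuadraticMap.polar n u1 u2 = 0) (z14 : QuadraticMap.polar n u1 u3 = 0)
    (z15 : QuadraticMap.polar n u2 u3 = 0) (z16 : QuadraticMap.polar n v1 v2 = 0)
    (z17 : QuadraticMap.polar n v1 v3 = 0) (z18 : QuadraticMap.polar n v2 v3 = 0)
    (z19 : QuadraticMap.polar n u1 v2 = 0) (z20 : QuadraticMap.polar n u1 v3 = 0)
    (z21 : QuadraticMap.polar n u2 v1 = 0) (z22 : QuadraticMap.polar n u2 v3 = 0)
    (z23 : QuadraticMap.polar n u3 v1 = 0) (z24 : QuadraticMap.polar n u3 v2 = 0)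
    (σ : C →ₗ[F] C)
    (hs1 : σ e1 = e1) (hs2 : σ e2 = e2)
    (hs3 : σ u1 = u2) (hs4 : σ u2 = u3) (hs5 : σ u3 = u1)
    (hs6 : σ v1 = v2) (hs7 : σ v2 = v3) (hs8 : σ v3 = v1) :
    (∀ x y : C, σ (x * y) = σ x * σ y) ∧
    σ ∘ₗ σ ∘ₗ σ = LinearMap.id ∧
    σ ≠ LinearMap.id ∧
    (∀ x : C, n (σ x) = n x) ∧
    (∀ x ∈ Submodule.span F {e1, e2}, σ x = x) ∧
    (σ - LinearMap.id) ∘ₗ (σ - LinearMap.id) ≠ 0 := by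
    classical
  set S : Set C := {e1, e2, u1, u2, u3, v1, v2, v3} with hS
  -- multiplicativity on basis elements
  have key : ∀ x ∈ S, ∀ y ∈ S, σ (x * y) = σ x * σ y := by
    intro x hx y hy
    simp only [hS, Set.mem_insert_iff, Set.mem_singleton_iff] at hx hy
    rcases hx with rfl|rfl|rfl|rfl|rfl|rfl|rfl|rfl <;>
      rcases hy with rfl|rfl|rfl|rfl|rfl|rfl|rfl|rfl <;>
      simp [t1,t2,t3,t4,t5,t6,t7,t8,t9,t10,t11,t12,t13,t14,t15,t16,t17,t18,t19,t20,
        t21,t22,t23,t24,t25,t26,t27,t28,t29,t30,t31,t32,t33,t34,t35,t36,t37,t38,t39,t40,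
        t41,t42,t43,t44,t45,t46,t47,t48,t49,t50,t51,t52,t53,t54,t55,t56,t57,t58,t59,t60,
        t61,t62,t63,t64, hs1,hs2,hs3,hs4,hs5,hs6,hs7,hs8]
  have key1 : ∀ y ∈ S, ∀ x : C, σ (x * y) = σ x * σ y := by
    intro y hy x
    have h : σ ∘ₗ LinearMap.mulRight F y = LinearMap.mulRight F (σ y) ∘ₗ σ := by
      apply LinearMap.ext_on hspan
      intro z hz
      simpa using key z hz y hy
    simpa using LinearMap.congr_fun h x
  have hmul : ∀ x y : C, σ (x * y) = σ x * σ y := by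
    intro x y
    have h : σ ∘ₗ LinearMap.mulLeft F x = LinearMap.mulLeft F (σ x) ∘ₗ σ := by
      apply LinearMap.ext_on hspan
      intro z hz
      simpa using key1 z hz x
    simpa using LinearMap.congr_fun h y
  -- σ³ = id
  have hcube : σ ∘ₗ σ ∘ₗ σ = LinearMap.id := by
    apply LinearMap.ext_on hspan
    intro z hz
    simp only [hS, Set.mem_insert_iff, Set.mem_singleton_iff] at hz
    rcases hz with rfl|rfl|rfl|rfl|rfl|rfl|rfl|rfl <;>
      simp [hs1,hs2,hs3,hs4,hs5,hs6,hs7,hs8]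
  -- distinctness from linear independence
  have hdistinct : u1 ≠ u2 := by
    intro h
    have h2 : (![e1, e2, u1, u2, u3, v1, v2, v3] : Fin 8 → C) 2
        = ![e1, e2, u1, u2, u3, v1, v2, v3] 3 := by simpa using h
    have := hind.injective h2
    simp at this
  have hne : σ ≠ LinearMap.id := by
    intro h
    have := LinearMap.congr_fun h u1
    rw [hs3] at this
    exact hdistinct (id this.symm)
  -- norm preservation
  have dself : ∀ x : C, n x = 0 → QuadraticMap.polar n x x = 0 := by
    intro x hx
    rw [QuadraticMap.polar_self, hx, smul_zero]
  have b1' : QuadraticMap.polar n e2 e1 = 1 := by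
    rw [QuadraticMap.polar_comm]; exact b1
  have b2' : QuadraticMap.polar n v1 u1 = 1 := by
    rw [QuadraticMap.polar_comm]; exact b2
  have b3' : QuadraticMap.polar n v2 u2 = 1 := by
    rw [QuadraticMap.polar_comm]; exact b3
  have b4' : QuadraticMap.polar n v3 u3 = 1 := by
    rw [QuadraticMap.polar_comm]; exact b4
  have z1' : QuadraticMap.polar n u1 e1 = 0 := by
    rw [QuadraticMap.polar_comm]; exact z1
  have z2' : QuadraticMap.polar n u2 e1 = 0 := by
    rw [QuadraticMap.polar_comm]; exact z2
  have z3' : QuadraticMap.polar n u3 e1 = 0 := by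
    rw [QuadraticMap.polar_comm]; exact z3
  have z4' : QuadraticMap.polar n v1 e1 = 0 := by
    rw [QuadraticMap.polar_comm]; exact z4
  have z5' : QuadraticMap.polar n v2 e1 = 0 := by
    rw [QuadraticMap.polar_comm]; exact z5
  have z6' : QuadraticMap.polar n v3 e1 = 0 := by
    rw [QuadraticMap.polar_comm]; exact z6
  have z7' : QuadraticMap.polar n u1 e2 = 0 := by
    rw [QuadraticMap.polar_comm]; exact z7
  have z8' : QuadraticMap.polar n u2 e2 = 0 := by
    rw [QuadraticMap.polar_comm]; exact z8
  have z9' : QuadraticMap.polar n u3 e2 = 0 := by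
    rw [QuadraticMap.polar_comm]; exact z9
  have z10' : QuadraticMap.polar n v1 e2 = 0 := by
    rw [QuadraticMap.polar_comm]; exact z10
  have z11' : QuadraticMap.polar n v2 e2 = 0 := by
    rw [QuadraticMap.polar_comm]; exact z11
  have z12' : QuadraticMap.polar n v3 e2 = 0 := by
    rw [QuadraticMap.polar_comm]; exact z12
  have z13' : QuadraticMap.polar n u2 u1 = 0 := by
    rw [QuadraticMap.polar_comm]; exact z13
  have z14' : QuadraticMap.polar n u3 u1 = 0 := by
    rw [QuadraticMap.polar_comm]; exact z14
  have z15' : QuadraticMap.polar n u3 u2 = 0 := by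
    rw [QuadraticMap.polar_comm]; exact z15
  have z16' : QuadraticMap.polar n v2 v1 = 0 := by
    rw [QuadraticMap.polar_comm]; exact z16
  have z17' : QuadraticMap.polar n v3 v1 = 0 := by
    rw [QuadraticMap.polar_comm]; exact z17
  have z18' : QuadraticMap.polar n v3 v2 = 0 := by
    rw [QuadraticMap.polar_comm]; exact z18
  have z19' : QuadraticMap.polar n v2 u1 = 0 := by
    rw [QuadraticMap.polar_comm]; exact z19
  have z20' : QuadraticMap.polar n v3 u1 = 0 := by
    rw [QuadraticMap.polar_comm]; exact z20
  have z21' : QuadraticMap.polar n v1 u2 = 0 := by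
    rw [QuadraticMap.polar_comm]; exact z21
  have z22' : QuadraticMap.polar n v3 u2 = 0 := by
    rw [QuadraticMap.polar_comm]; exact z22
  have z23' : QuadraticMap.polar n v1 u3 = 0 := by
    rw [QuadraticMap.polar_comm]; exact z23
  have z24' : QuadraticMap.polar n v2 u3 = 0 := by
    rw [QuadraticMap.polar_comm]; exact z24
  have key2 : ∀ x ∈ S, ∀ y ∈ S,
      QuadraticMap.polar n (σ x) (σ y) = QuadraticMap.polar n x y := by
    intro x hx y hy
    simp only [hS, Set.mem_insert_iff, Set.mem_singleton_iff] at hx hy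
    rcases hx with rfl|rfl|rfl|rfl|rfl|rfl|rfl|rfl <;>
      rcases hy with rfl|rfl|rfl|rfl|rfl|rfl|rfl|rfl <;>
      simp [hs1,hs2,hs3,hs4,hs5,hs6,hs7,hs8, b1,b2,b3,b4,
        z1,z2,z3,z4,z5,z6,z7,z8,z9,z10,z11,z12,z13,z14,z15,z16,z17,z18,z19,z20,z21,z22,z23,z24,
        n1,n2,n3,n4,n5,n6,n7,n8, b1',b2',b3',b4',z1',z2',z3',z4',z5',z6',z7',z8',z9',z10',z11',z12',z13',z14',z15',z16',z17',z18',z19',z20',z21',z22',z23',z24']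
  have key3 : ∀ y ∈ S, ∀ x : C,
      QuadraticMap.polar n (σ x) (σ y) = QuadraticMap.polar n x y := by
    intro y hy x
    have h : ((QuadraticMap.polarBilin n).flip (σ y)) ∘ₗ σ
        = (QuadraticMap.polarBilin n).flip y := by
      apply LinearMap.ext_on hspan
      intro z hz
      simpa using key2 z hz y hy
    simpa using LinearMap.congr_fun h x
  have hpol : ∀ x y : C,
      QuadraticMap.polar n (σ x) (σ y) = QuadraticMap.polar n x y := by
    intro x y
    have h : ((QuadraticMap.polarBilin n) (σ x)) ∘ₗ σ = (QuadraticMap.polarBilin n) x := by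
      apply LinearMap.ext_on hspan
      intro z hz
      simpa using key3 z hz x
    simpa using LinearMap.congr_fun h y
  have htwo : (2 : F) ≠ 0 := by
    have h3 : (3 : F) = 0 := by exact_mod_cast CharP.cast_eq_zero F 3
    intro h
    have : (1 : F) = 0 := by linear_combination h3 - h
    exact one_ne_zero this
  have hnorm : ∀ x : C, n (σ x) = n x := by
    intro x
    have h := hpol x x
    rw [QuadraticMap.polar_self, QuadraticMap.polar_self] at h
    have h' : (2 : F) * n (σ x) = (2 : F) * n x := by
      simpa [two_smul, two_mul] using h
    exact mul_left_cancel₀ htwo h'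
  -- fixes span {e1, e2}
  have hfix : ∀ x ∈ Submodule.span F {e1, e2}, σ x = x := by
    intro x hx
    obtain ⟨a, b, rfl⟩ := Submodule.mem_span_pair.mp hx
    simp [map_add, map_smul, hs1, hs2]
  -- (σ - id)² ≠ 0
  have hsq : (σ - LinearMap.id) ∘ₗ (σ - LinearMap.id) ≠ 0 := by
    intro h
    have h1 := LinearMap.congr_fun h u1
    simp only [LinearMap.comp_apply, LinearMap.sub_apply, LinearMap.id_apply,
      LinearMap.zero_apply, map_sub, hs3, hs4] at h1
    -- h1 : u3 - u2 - (u2 - u1) = 0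
    have hcomb : (1 : F) • u1 + (-2 : F) • u2 + (1 : F) • u3 = 0 := by
      rw [sub_sub, sub_eq_zero] at h1
      rw [one_smul, one_smul, neg_smul, two_smul, h1]
      abel
    have := Fintype.linearIndependent_iff.mp hind
        ![0, 0, 1, -2, 1, 0, 0, 0] ?_ 2
    · exact one_ne_zero this
    · simpa [Fin.sum_univ_succ, add_assoc] using hcomb
  exact ⟨hmul, hcube, hne, hnorm, hfix, hsq⟩
end

section
/- Let F be a field of characteristic 3, let A be a finite-dimensional F-algebra, and let σ be an algebra automorphism of A with σ³ = id; write δ = σ − id. Suppose A = A₀ ⊕ A₁ ⊕ δ(A₁) ⊕ A₂ and A = A₀′ ⊕ A₁′ ⊕ δ(A₁′) ⊕ A₂′ are two splittings of A (as defined in the context). Then the associated superalgebras (A₀ ⊕ A₁, •) and (A₀′ ⊕ A₁′, •′) obtained by the recipe are isomorphic as superalgebras: there is a linear bijection φ: A₀ ⊕ A₁ → A₀′ ⊕ A₁′ with φ(A₀) = A₀′, φ(A₁) = A₁′, and φ(x•y) = φ(x)•′φ(y) for all x, y. -/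
set_option maxHeartbeats 2000000
set_option synthInstance.maxHeartbeats 1000000

namespace SuperSplitAux

open DirectSum

variable {F : Type*} [Field F] {A : Type*} [NonUnitalNonAssocRing A] [Module F A]

lemma decomp6 (M : Fin 6 → Submodule F A) (h : DirectSum.IsInternal M) (x : A) :
    ∃ a : Fin 6 → A, (∀ i, a i ∈ M i) ∧ x = a 0 + a 1 + a 2 + a 3 + a 4 + a 5 := by
  obtain ⟨d, hd⟩ := h.surjective x
  refine ⟨fun i => (d i : A), fun i => (d i).2, ?_⟩
  rw [← hd, ← DirectSum.sum_univ_of d, map_sum]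
  simp only [DirectSum.coeAddMonoidHom_of]
  rw [Fin.sum_univ_six]
  simp [DirectSum.sum_univ_of]

lemma indep6 (M : Fin 6 → Submodule F A) (h : DirectSum.IsInternal M) (a : Fin 6 → A)
    (ha : ∀ i, a i ∈ M i) (hz : a 0 + a 1 + a 2 + a 3 + a 4 + a 5 = 0) : ∀ i, a i = 0 := by
  have hd : (∑ i, DirectSum.of (fun i => (M i : Type _)) i ⟨a i, ha i⟩) = 0 := by
    apply h.injective
    rw [map_sum, map_zero]
    simp only [DirectSum.coeAddMonoidHom_of]
    rw [Fin.sum_univ_six]; exact hz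
  intro i
  have h2 := congrArg (fun d => ((d i : M i) : A)) hd
  simp only at h2
  rw [DFinsupp.finset_sum_apply] at h2
  rw [Fin.sum_univ_six] at h2
  fin_cases i <;>
    simpa (config := { decide := true }) [DirectSum.of_apply] using h2

structure Spl (F : Type*) (A : Type*) [Field F] [NonUnitalNonAssocRing A] [Module F A]
    (δ : A →ₗ[F] A) where
  (A₀ A₁ U : Submodule F A)
  (p₀ p₁ : A →ₗ[F] A)
  (h₀ : ∀ x ∈ A₀, δ x = 0)
  (h₁inj : ∀ x ∈ A₁, δ x = 0 → x = 0)
  (h₁ker : ∀ x ∈ A₁, δ (δ x) = 0)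
  (hUinj : ∀ x ∈ U, δ (δ x) = 0 → x = 0)
  (hint : DirectSum.IsInternal ![A₀, A₁, A₁.map δ, U, U.map δ, U.map (δ ∘ₗ δ)])
  (hp₀ : ∀ x ∈ A₀, p₀ x = x)
  (hp₀0 : ∀ x ∈ A₁ ⊔ A₁.map δ ⊔ U ⊔ U.map δ ⊔ U.map (δ ∘ₗ δ), p₀ x = 0)
  (hp₁ : ∀ x ∈ A₁, p₁ x = x)
  (hp₁0 : ∀ x ∈ A₀ ⊔ A₁.map δ ⊔ U ⊔ U.map δ ⊔ U.map (δ ∘ₗ δ), p₁ x = 0)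

namespace Spl

variable {F : Type*} [Field F] {A : Type*} [NonUnitalNonAssocRing A] [Module F A]
  {δ : A →ₗ[F] A} (S : Spl F A δ)

lemma decomp (x : A) : ∃ a₀ ∈ S.A₀, ∃ b₁ ∈ S.A₁, ∃ c₁ ∈ S.A₁, ∃ u ∈ S.U, ∃ v ∈ S.U,
    ∃ w ∈ S.U, x = a₀ + b₁ + δ c₁ + u + δ v + δ (δ w) := by
  obtain ⟨a, ha, hsum⟩ := decomp6 _ S.hint x
  have h0 : a 0 ∈ S.A₀ := by simpa using ha 0
  have h1 : a 1 ∈ S.A₁ := by simpa using ha 1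
  have h2 : a 2 ∈ S.A₁.map δ := by simpa using ha 2
  have h3 : a 3 ∈ S.U := by simpa using ha 3
  have h4 : a 4 ∈ S.U.map δ := by simpa using ha 4
  have h5 : a 5 ∈ S.U.map (δ ∘ₗ δ) := by simpa using ha 5
  obtain ⟨c₁, hc₁, hc₁'⟩ := h2
  obtain ⟨v, hv, hv'⟩ := h4
  obtain ⟨w, hw, hw'⟩ := h5
  refine ⟨a 0, h0, a 1, h1, c₁, hc₁, a 3, h3, v, hv, w, hw, ?_⟩
  rw [hsum, hc₁', hv', ← hw']
  rfl

lemma indep {a₀ b₁ q2 u q4 q5 : A} (h₀m : a₀ ∈ S.A₀) (h₁m : b₁ ∈ S.A₁)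
    (h2 : q2 ∈ S.A₁.map δ) (hu : u ∈ S.U) (h4 : q4 ∈ S.U.map δ)
    (h5 : q5 ∈ S.U.map (δ ∘ₗ δ)) (hsum : a₀ + b₁ + q2 + u + q4 + q5 = 0) :
    a₀ = 0 ∧ b₁ = 0 ∧ q2 = 0 ∧ u = 0 ∧ q4 = 0 ∧ q5 = 0 := by
  have := indep6 _ S.hint ![a₀, b₁, q2, u, q4, q5]
    (fun i => by fin_cases i <;> simpa) (by simpa using hsum)
  exact ⟨by simpa using this 0, by simpa using this 1, by simpa using this 2,
    by simpa using this 3, by simpa using this 4, by simpa using this 5⟩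

section kills

lemma p₀_A₁ {x : A} (hx : x ∈ S.A₁) : S.p₀ x = 0 :=
  S.hp₀0 _ (Submodule.mem_sup_left (Submodule.mem_sup_left
    (Submodule.mem_sup_left (Submodule.mem_sup_left hx))))

lemma p₀_m2 {x : A} (hx : x ∈ S.A₁.map δ) : S.p₀ x = 0 :=
  S.hp₀0 _ (Submodule.mem_sup_left (Submodule.mem_sup_left
    (Submodule.mem_sup_left (Submodule.mem_sup_right hx))))

lemma p₀_mU {x : A} (hx : x ∈ S.U) : S.p₀ x = 0 :=
  S.hp₀0 _ (Submodule.mem_sup_left (Submodule.mem_sup_left (Submodule.mem_sup_right hx)))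

lemma p₀_m4 {x : A} (hx : x ∈ S.U.map δ) : S.p₀ x = 0 :=
  S.hp₀0 _ (Submodule.mem_sup_left (Submodule.mem_sup_right hx))

lemma p₀_m5 {x : A} (hx : x ∈ S.U.map (δ ∘ₗ δ)) : S.p₀ x = 0 :=
  S.hp₀0 _ (Submodule.mem_sup_right hx)

lemma p₁_A₀ {x : A} (hx : x ∈ S.A₀) : S.p₁ x = 0 :=
  S.hp₁0 _ (Submodule.mem_sup_left (Submodule.mem_sup_left
    (Submodule.mem_sup_left (Submodule.mem_sup_left hx))))

lemma p₁_m2 {x : A} (hx : x ∈ S.A₁.map δ) : S.p₁ x = 0 :=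
  S.hp₁0 _ (Submodule.mem_sup_left (Submodule.mem_sup_left
    (Submodule.mem_sup_left (Submodule.mem_sup_right hx))))

lemma p₁_mU {x : A} (hx : x ∈ S.U) : S.p₁ x = 0 :=
  S.hp₁0 _ (Submodule.mem_sup_left (Submodule.mem_sup_left (Submodule.mem_sup_right hx)))

lemma p₁_m4 {x : A} (hx : x ∈ S.U.map δ) : S.p₁ x = 0 :=
  S.hp₁0 _ (Submodule.mem_sup_left (Submodule.mem_sup_right hx))

lemma p₁_m5 {x : A} (hx : x ∈ S.U.map (δ ∘ₗ δ)) : S.p₁ x = 0 :=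
  S.hp₁0 _ (Submodule.mem_sup_right hx)

end kills

variable (hδ3 : ∀ x : A, δ (δ (δ x)) = 0)
include hδ3

lemma delta_decomp (x : A) : ∃ b₁ ∈ S.A₁, ∃ u ∈ S.U, ∃ v ∈ S.U,
    δ x = δ b₁ + δ u + δ (δ v) := by
  obtain ⟨a₀, ha₀, b₁, hb₁, c₁, hc₁, u, hu, v, hv, w, hw, hx⟩ := S.decomp x
  refine ⟨b₁, hb₁, u, hu, v, hv, ?_⟩
  rw [hx]
  simp only [map_add, S.h₀ a₀ ha₀, S.h₁ker c₁ hc₁, hδ3 w, zero_add, add_zero]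

lemma p₀_im (x : A) : S.p₀ (δ x) = 0 := by
  obtain ⟨b₁, hb₁, u, hu, v, hv, hx⟩ := S.delta_decomp hδ3 x
  rw [hx, map_add, map_add,
    S.p₀_m2 (Submodule.mem_map_of_mem hb₁),
    S.p₀_m4 (Submodule.mem_map_of_mem hu),
    S.p₀_m5 (x := δ (δ v)) ⟨v, hv, rfl⟩]
  simp

lemma p₁_im (x : A) : S.p₁ (δ x) = 0 := by
  obtain ⟨b₁, hb₁, u, hu, v, hv, hx⟩ := S.delta_decomp hδ3 x
  rw [hx, map_add, map_add,
    S.p₁_m2 (Submodule.mem_map_of_mem hb₁),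
    S.p₁_m4 (Submodule.mem_map_of_mem hu),
    S.p₁_m5 (x := δ (δ v)) ⟨v, hv, rfl⟩]
  simp

lemma p₀_mem (x : A) : S.p₀ x ∈ S.A₀ := by
  obtain ⟨a₀, ha₀, b₁, hb₁, c₁, hc₁, u, hu, v, hv, w, hw, hx⟩ := S.decomp x
  rw [hx]
  simp only [map_add, S.hp₀ a₀ ha₀, S.p₀_A₁ hb₁,
    S.p₀_m2 (Submodule.mem_map_of_mem hc₁), S.p₀_mU hu,
    S.p₀_m4 (Submodule.mem_map_of_mem hv), S.p₀_m5 (x := δ (δ w)) ⟨w, hw, rfl⟩,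
    add_zero]
  exact ha₀

lemma p₁_mem (x : A) : S.p₁ x ∈ S.A₁ := by
  obtain ⟨a₀, ha₀, b₁, hb₁, c₁, hc₁, u, hu, v, hv, w, hw, hx⟩ := S.decomp x
  rw [hx]
  simp only [map_add, S.hp₁ b₁ hb₁, S.p₁_A₀ ha₀,
    S.p₁_m2 (Submodule.mem_map_of_mem hc₁), S.p₁_mU hu,
    S.p₁_m4 (Submodule.mem_map_of_mem hv), S.p₁_m5 (x := δ (δ w)) ⟨w, hw, rfl⟩,
    add_zero, zero_add]
  exact hb₁

lemma mem_ker₁ {z : A} (hz : δ z = 0) :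
    ∃ a ∈ S.A₀, ∃ c, δ (δ c) = 0 ∧ z = a + δ c := by
  obtain ⟨a₀, ha₀, b₁, hb₁, c₁, hc₁, u, hu, v, hv, w, hw, hx⟩ := S.decomp z
  have hδz : δ b₁ + δ u + δ (δ v) = 0 := by
    have : δ z = δ b₁ + δ u + δ (δ v) := by
      rw [hx]
      simp only [map_add, S.h₀ a₀ ha₀, S.h₁ker c₁ hc₁, hδ3 w, zero_add, add_zero]
    rw [← this, hz]
  have hind := S.indep (S.A₀.zero_mem) (S.A₁.zero_mem)
    (Submodule.mem_map_of_mem (f := δ) hb₁) (S.U.zero_mem)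
    (Submodule.mem_map_of_mem (f := δ) hu) (⟨v, hv, rfl⟩ : δ (δ v) ∈ S.U.map (δ ∘ₗ δ))
    (by simpa using hδz)
  obtain ⟨-, -, hb, -, huz, hvz⟩ := hind
  have hb₁0 : b₁ = 0 := S.h₁inj b₁ hb₁ hb
  have hu0 : u = 0 := S.hUinj u hu (by rw [huz, map_zero])
  have hv0 : v = 0 := S.hUinj v hv hvz
  refine ⟨a₀, ha₀, c₁ + δ w, ?_, ?_⟩
  · rw [map_add, map_add, S.h₁ker c₁ hc₁, hδ3 w, add_zero]
  · rw [hx, hb₁0, hu0, hv0]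
    simp only [map_zero, map_add]
    abel

lemma mem_ker₂ {z : A} (hz : δ (δ z) = 0) :
    ∃ a ∈ S.A₁, ∃ k ∈ S.A₀, ∃ c, z = a + k + δ c := by
  obtain ⟨a₀, ha₀, b₁, hb₁, c₁, hc₁, u, hu, v, hv, w, hw, hx⟩ := S.decomp z
  have hu0 : u = 0 := by
    apply S.hUinj u hu
    have : δ (δ z) = δ (δ u) := by
      rw [hx]
      simp only [map_add, S.h₀ a₀ ha₀, S.h₁ker c₁ hc₁, hδ3 w, hδ3 v,
        S.h₁ker b₁ hb₁, map_zero, zero_add, add_zero]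
    rw [← this, hz]
  refine ⟨b₁, hb₁, a₀, ha₀, c₁ + v + δ w, ?_⟩
  rw [hx, hu0]
  simp only [map_add]
  abel

lemma p₀_eq {z : A} (hz : δ z = 0) :
    S.p₀ z ∈ S.A₀ ∧ ∃ c, δ (δ c) = 0 ∧ z = S.p₀ z + δ c := by
  obtain ⟨a, ha, c, hc, hzeq⟩ := S.mem_ker₁ hδ3 hz
  have hp : S.p₀ z = a := by
    rw [hzeq, map_add, S.hp₀ a ha, S.p₀_im hδ3, add_zero]
  exact ⟨hp ▸ ha, c, hc, by rw [hp, hzeq]⟩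

lemma p₁_ker₁ {z : A} (hz : δ z = 0) : S.p₁ z = 0 := by
  obtain ⟨a, ha, c, hc, hzeq⟩ := S.mem_ker₁ hδ3 hz
  rw [hzeq, map_add, S.p₁_A₀ ha, S.p₁_im hδ3, add_zero]

lemma p₁_eq {z : A} (hz : δ (δ z) = 0) :
    S.p₁ z ∈ S.A₁ ∧ ∃ k, k ∈ S.A₀ ∧ ∃ c, z = S.p₁ z + k + δ c := by
  obtain ⟨a, ha, k, hk, c, hzeq⟩ := S.mem_ker₂ hδ3 hz
  have hp : S.p₁ z = a := by
    rw [hzeq, map_add, map_add, S.hp₁ a ha, S.p₁_A₀ hk, S.p₁_im hδ3, add_zero, add_zero]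
  exact ⟨hp ▸ ha, k, hk, c, by rw [hp, hzeq]⟩

end Spl

section MulLemmas

variable {F : Type*} [Field F] {A : Type*} [NonUnitalNonAssocRing A] [Module F A]
  (δ : A →ₗ[F] A)
  (key : ∀ z : A, z + z + z = 0)
  (prod : ∀ x y : A, δ (x * y) = δ x * y + δ x * δ y + x * δ y)

include prod

lemma M1 (x y : A) (hx : δ x = 0) : δ (x * y) = x * δ y := by
  rw [prod, hx, zero_mul, zero_mul, zero_add, zero_add]

lemma M2 (x y : A) (hy : δ y = 0) : δ (x * y) = δ x * y := by
  rw [prod, hy, mul_zero, mul_zero, add_zero, add_zero]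

include key

lemma M3 (a b : A) (ha : δ (δ a) = 0) (hb : δ (δ b) = 0) :
    δ a * δ b + δ (δ (a * b)) = 0 := by
  have h : δ a * δ b + δ (δ (a * b)) = δ a * δ b + δ a * δ b + δ a * δ b := by
    simp only [prod, map_add, ha, hb, zero_mul, mul_zero, add_zero, zero_add]
    abel
  rw [h]; exact key _

omit key in
lemma M4 (y u : A) (hy : δ (δ y) = 0) :
    y * δ (δ u) = δ (y * δ u + y * δ u - δ (y * u)) := by
  simp only [map_add, map_sub, prod, hy, zero_mul, mul_zero, add_zero, zero_add]
  abel

lemma M6L (y u : A) (hy : δ (δ y) = 0) (h3u : δ (δ (δ u)) = 0) :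
    δ u * δ y = δ (δ (u * y) + δ (δ u * y) + δ u * y + δ u * y) := by
  have h : δ (δ (u * y) + δ (δ u * y) + δ u * y + δ u * y)
      = δ u * δ y + ((δ (δ u) * y + δ (δ u) * y + δ (δ u) * y)
        + ((δ (δ u) * δ y + δ (δ u) * δ y + δ (δ u) * δ y)
          + (δ (δ u) * δ y + δ (δ u) * δ y + δ (δ u) * δ y))
        + (δ u * δ y + δ u * δ y + δ u * δ y)) := by
    simp only [map_add, prod, hy, h3u, zero_mul, mul_zero, add_zero, zero_add]
    abel
  rw [h, key, key, key]
  simp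

end MulLemmas

end SuperSplitAux

set_option linter.unusedSectionVars false

open SuperSplitAux

/-- Over a field of characteristic 3, let `A` be a finite-dimensional algebra
with an automorphism `σ` of order dividing 3, `δ = σ - id`.  Given two splittings
`A = A₀ ⊕ A₁ ⊕ δ(A₁) ⊕ A₂` and `A = A₀' ⊕ A₁' ⊕ δ(A₁') ⊕ A₂'` (with
`A₂ = U ⊕ δ(U) ⊕ δ²(U)`, etc.), the associated superalgebras obtained by the recipe
(via the projections `p₀, p₁` resp. `p₀', p₁'`) are isomorphic: there is a linear
bijection `φ` from `A₀ ⊕ A₁` onto `A₀' ⊕ A₁'` with `φ(A₀) = A₀'`, `φ(A₁) = A₁'`,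
multiplicative for the recipe products. -/
theorem superalgebra_independent_of_splitting {F : Type*} [Field F] [CharP F 3]
    {A : Type*} [NonUnitalNonAssocRing A] [Module F A]
    [SMulCommClass F A A] [IsScalarTower F A A] [FiniteDimensional F A]
    (σ : A →ₗ[F] A) (hσmul : ∀ x y : A, σ (x * y) = σ x * σ y)
    (hσ3 : σ ∘ₗ σ ∘ₗ σ = LinearMap.id)
    (δ : A →ₗ[F] A) (hδ : ∀ x : A, δ x = σ x - x)
    -- first splitting
    (A₀ A₁ U : Submodule F A)
    (h₀ : ∀ x ∈ A₀, δ x = 0)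
    (h₁inj : ∀ x ∈ A₁, δ x = 0 → x = 0)
    (h₁ker : ∀ x ∈ A₁, δ (δ x) = 0)
    (hUinj : ∀ x ∈ U, δ (δ x) = 0 → x = 0)
    (hint : DirectSum.IsInternal ![A₀, A₁, A₁.map δ, U, U.map δ, U.map (δ ∘ₗ δ)])
    -- second splitting
    (A₀' A₁' U' : Submodule F A)
    (h₀' : ∀ x ∈ A₀', δ x = 0)
    (h₁inj' : ∀ x ∈ A₁', δ x = 0 → x = 0)
    (h₁ker' : ∀ x ∈ A₁', δ (δ x) = 0)
    (hUinj' : ∀ x ∈ U', δ (δ x) = 0 → x = 0)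
    (hint' : DirectSum.IsInternal ![A₀', A₁', A₁'.map δ, U', U'.map δ, U'.map (δ ∘ₗ δ)])
    -- projections onto A₀ and A₁ along the first splitting
    (p₀ p₁ : A →ₗ[F] A)
    (hp₀ : ∀ x ∈ A₀, p₀ x = x)
    (hp₀0 : ∀ x ∈ A₁ ⊔ A₁.map δ ⊔ U ⊔ U.map δ ⊔ U.map (δ ∘ₗ δ), p₀ x = 0)
    (hp₁ : ∀ x ∈ A₁, p₁ x = x)
    (hp₁0 : ∀ x ∈ A₀ ⊔ A₁.map δ ⊔ U ⊔ U.map δ ⊔ U.map (δ ∘ₗ δ), p₁ x = 0)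
    -- projections onto A₀' and A₁' along the second splitting
    (p₀' p₁' : A →ₗ[F] A)
    (hp₀' : ∀ x ∈ A₀', p₀' x = x)
    (hp₀0' : ∀ x ∈ A₁' ⊔ A₁'.map δ ⊔ U' ⊔ U'.map δ ⊔ U'.map (δ ∘ₗ δ), p₀' x = 0)
    (hp₁' : ∀ x ∈ A₁', p₁' x = x)
    (hp₁0' : ∀ x ∈ A₀' ⊔ A₁'.map δ ⊔ U' ⊔ U'.map δ ⊔ U'.map (δ ∘ₗ δ), p₁' x = 0)
    -- the recipe products
    (m m' : A → A → A)
    (hm : ∀ x y : A, m x y =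
      p₀ (p₀ x * p₀ y) + p₁ (p₀ x * p₁ y + p₁ x * p₀ y) + p₀ (p₁ x * δ (p₁ y)))
    (hm' : ∀ x y : A, m' x y =
      p₀' (p₀' x * p₀' y) + p₁' (p₀' x * p₁' y + p₁' x * p₀' y) + p₀' (p₁' x * δ (p₁' y))) :
    ∃ φ : A →ₗ[F] A,
      A₀.map φ = A₀' ∧ A₁.map φ = A₁' ∧
      (∀ x ∈ A₀ ⊔ A₁, φ x = 0 → x = 0) ∧
      (∀ x ∈ A₀ ⊔ A₁, ∀ y ∈ A₀ ⊔ A₁, φ (m x y) = m' (φ x) (φ y)) := by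
  -- characteristic 3 facts
  have key : ∀ z : A, z + z + z = 0 := by
    intro z
    have h1 : ((3 : F)) • z = z + z + z := by
      rw [show (3 : F) = 1 + 1 + 1 by norm_num, add_smul, add_smul, one_smul]
    have h2 : (3 : F) = 0 := by exact_mod_cast CharP.cast_eq_zero F 3
    rw [← h1, h2, zero_smul]
  have hσ3x : ∀ x : A, σ (σ (σ x)) = x := fun x => by
    have := LinearMap.ext_iff.mp hσ3 x
    simpa using this
  have hδ3 : ∀ x : A, δ (δ (δ x)) = 0 := by
    intro x
    have h : δ (δ (δ x)) = (σ x + σ x + σ x) - (σ (σ x) + σ (σ x) + σ (σ x)) := by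
      simp only [hδ, map_sub, hσ3x]
      abel
    rw [h, key, key, sub_zero]
  have prod : ∀ x y : A, δ (x * y) = δ x * y + δ x * δ y + x * δ y := by
    intro x y
    have hs : ∀ z : A, σ z = δ z + z := fun z => by rw [hδ]; abel
    rw [hδ, hσmul, hs x, hs y, add_mul, mul_add, mul_add]
    abel
  -- the two splittings
  let S : Spl F A δ := ⟨A₀, A₁, U, p₀, p₁, h₀, h₁inj, h₁ker, hUinj, hint, hp₀, hp₀0, hp₁, hp₁0⟩
  let S' : Spl F A δ := ⟨A₀', A₁', U', p₀', p₁', h₀', h₁inj', h₁ker', hUinj', hint',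
    hp₀', hp₀0', hp₁', hp₁0'⟩
  -- aliases for the derived facts, unprimed splitting
  have dec : ∀ x : A, ∃ a₀ ∈ A₀, ∃ b₁ ∈ A₁, ∃ c₁ ∈ A₁, ∃ u ∈ U, ∃ v ∈ U,
      ∃ w ∈ U, x = a₀ + b₁ + δ c₁ + u + δ v + δ (δ w) := S.decomp
  have ddec : ∀ x : A, ∃ b₁ ∈ A₁, ∃ u ∈ U, ∃ v ∈ U, δ x = δ b₁ + δ u + δ (δ v) :=
    S.delta_decomp hδ3
  have ind : ∀ {a₀ b₁ q2 u q4 q5 : A}, a₀ ∈ A₀ → b₁ ∈ A₁ → q2 ∈ A₁.map δ → u ∈ U →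
      q4 ∈ U.map δ → q5 ∈ U.map (δ ∘ₗ δ) → a₀ + b₁ + q2 + u + q4 + q5 = 0 →
      a₀ = 0 ∧ b₁ = 0 ∧ q2 = 0 ∧ u = 0 ∧ q4 = 0 ∧ q5 = 0 := @fun _ _ _ _ _ _ => S.indep
  have q₀A₁ : ∀ x ∈ A₁, p₀ x = 0 := fun x hx => S.p₀_A₁ hx
  have q₁A₀ : ∀ x ∈ A₀, p₁ x = 0 := fun x hx => S.p₁_A₀ hx
  have q₀im : ∀ x : A, p₀ (δ x) = 0 := S.p₀_im hδ3
  have q₁im : ∀ x : A, p₁ (δ x) = 0 := S.p₁_im hδ3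
  have q₀mem : ∀ x : A, p₀ x ∈ A₀ := S.p₀_mem hδ3
  have q₁mem : ∀ x : A, p₁ x ∈ A₁ := S.p₁_mem hδ3
  have mem_ker₁ : ∀ z : A, δ z = 0 → ∃ a ∈ A₀, ∃ c, δ (δ c) = 0 ∧ z = a + δ c :=
    fun z hz => S.mem_ker₁ hδ3 hz
  have mem_ker₂ : ∀ z : A, δ (δ z) = 0 → ∃ a ∈ A₁, ∃ k ∈ A₀, ∃ c, z = a + k + δ c :=
    fun z hz => S.mem_ker₂ hδ3 hz
  have p₀eq : ∀ z : A, δ z = 0 → p₀ z ∈ A₀ ∧ ∃ c, δ (δ c) = 0 ∧ z = p₀ z + δ c :=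
    fun z hz => S.p₀_eq hδ3 hz
  have p₁ker : ∀ z : A, δ z = 0 → p₁ z = 0 := fun z hz => S.p₁_ker₁ hδ3 hz
  have p₁eq : ∀ z : A, δ (δ z) = 0 → p₁ z ∈ A₁ ∧ ∃ k, k ∈ A₀ ∧ ∃ c, z = p₁ z + k + δ c :=
    fun z hz => S.p₁_eq hδ3 hz
  -- aliases, primed splitting
  have dec' : ∀ x : A, ∃ a₀ ∈ A₀', ∃ b₁ ∈ A₁', ∃ c₁ ∈ A₁', ∃ u ∈ U', ∃ v ∈ U',
      ∃ w ∈ U', x = a₀ + b₁ + δ c₁ + u + δ v + δ (δ w) := S'.decomp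
  have ddec' : ∀ x : A, ∃ b₁ ∈ A₁', ∃ u ∈ U', ∃ v ∈ U', δ x = δ b₁ + δ u + δ (δ v) :=
    S'.delta_decomp hδ3
  have ind' : ∀ {a₀ b₁ q2 u q4 q5 : A}, a₀ ∈ A₀' → b₁ ∈ A₁' → q2 ∈ A₁'.map δ → u ∈ U' →
      q4 ∈ U'.map δ → q5 ∈ U'.map (δ ∘ₗ δ) → a₀ + b₁ + q2 + u + q4 + q5 = 0 →
      a₀ = 0 ∧ b₁ = 0 ∧ q2 = 0 ∧ u = 0 ∧ q4 = 0 ∧ q5 = 0 := @fun _ _ _ _ _ _ => S'.indep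
  have q₀A₁' : ∀ x ∈ A₁', p₀' x = 0 := fun x hx => S'.p₀_A₁ hx
  have q₁A₀' : ∀ x ∈ A₀', p₁' x = 0 := fun x hx => S'.p₁_A₀ hx
  have q₀im' : ∀ x : A, p₀' (δ x) = 0 := S'.p₀_im hδ3
  have q₁im' : ∀ x : A, p₁' (δ x) = 0 := S'.p₁_im hδ3
  have q₀mem' : ∀ x : A, p₀' x ∈ A₀' := S'.p₀_mem hδ3
  have q₁mem' : ∀ x : A, p₁' x ∈ A₁' := S'.p₁_mem hδ3
  have mem_ker₁' : ∀ z : A, δ z = 0 → ∃ a ∈ A₀', ∃ c, δ (δ c) = 0 ∧ z = a + δ c :=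
    fun z hz => S'.mem_ker₁ hδ3 hz
  have p₀eq' : ∀ z : A, δ z = 0 → p₀' z ∈ A₀' ∧ ∃ c, δ (δ c) = 0 ∧ z = p₀' z + δ c :=
    fun z hz => S'.p₀_eq hδ3 hz
  have p₁ker' : ∀ z : A, δ z = 0 → p₁' z = 0 := fun z hz => S'.p₁_ker₁ hδ3 hz
  have p₁eq' : ∀ z : A, δ (δ z) = 0 → p₁' z ∈ A₁' ∧ ∃ k, k ∈ A₀' ∧ ∃ c, z = p₁' z + k + δ c :=
    fun z hz => S'.p₁_eq hδ3 hz
  -- the isomorphism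
  refine ⟨p₀' ∘ₗ p₀ + p₁' ∘ₗ p₁, ?_, ?_, ?_, ?_⟩
  · -- A₀.map φ = A₀'
    apply le_antisymm
    · rintro _ ⟨x, hx, rfl⟩
      have h1 : (p₀' ∘ₗ p₀ + p₁' ∘ₗ p₁) x = p₀' x := by
        show p₀' (p₀ x) + p₁' (p₁ x) = p₀' x
        rw [hp₀ x hx, q₁A₀ x hx, map_zero, add_zero]
      rw [h1]
      exact q₀mem' x
    · intro a' ha'
      obtain ⟨a, ha, c, hc, haeq⟩ := mem_ker₁ a' (h₀' a' ha')
      refine ⟨a, ha, ?_⟩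
      show p₀' (p₀ a) + p₁' (p₁ a) = a'
      rw [hp₀ a ha, q₁A₀ a ha, map_zero, add_zero]
      have h2 : a = a' - δ c := by rw [haeq]; abel
      rw [h2, map_sub, hp₀' a' ha', q₀im' c, sub_zero]
  · -- A₁.map φ = A₁'
    apply le_antisymm
    · rintro _ ⟨x, hx, rfl⟩
      have h1 : (p₀' ∘ₗ p₀ + p₁' ∘ₗ p₁) x = p₁' x := by
        show p₀' (p₀ x) + p₁' (p₁ x) = p₁' x
        rw [hp₁ x hx, q₀A₁ x hx, map_zero, zero_add]
      rw [h1]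
      exact q₁mem' x
    · intro a' ha'
      obtain ⟨a, ha, k, hk, c, haeq⟩ := mem_ker₂ a' (h₁ker' a' ha')
      refine ⟨a, ha, ?_⟩
      show p₀' (p₀ a) + p₁' (p₁ a) = a'
      rw [hp₁ a ha, q₀A₁ a ha, map_zero, zero_add]
      have h2 : a = a' - k - δ c := by rw [haeq]; abel
      rw [h2, map_sub, map_sub, hp₁' a' ha', p₁ker' k (h₀ k hk), q₁im' c, sub_zero, sub_zero]
  · -- injectivity
    intro x hx hφx
    obtain ⟨x₀, hx₀, x₁, hx₁, rfl⟩ := Submodule.mem_sup.mp hx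
    have e0 : p₀ (x₀ + x₁) = x₀ := by rw [map_add, hp₀ _ hx₀, q₀A₁ _ hx₁, add_zero]
    have e1 : p₁ (x₀ + x₁) = x₁ := by rw [map_add, q₁A₀ _ hx₀, hp₁ _ hx₁, zero_add]
    have hsum : p₀' x₀ + p₁' x₁ = 0 := by
      have h := hφx
      rw [show (p₀' ∘ₗ p₀ + p₁' ∘ₗ p₁) (x₀ + x₁) = p₀' (p₀ (x₀ + x₁)) + p₁' (p₁ (x₀ + x₁))
        from rfl, e0, e1] at h
      exact h
    obtain ⟨hz0, hz1, -, -, -, -⟩ := ind' (q₀mem' x₀) (q₁mem' x₁)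
      ((A₁'.map δ).zero_mem) (U'.zero_mem) ((U'.map δ).zero_mem)
      ((U'.map (δ ∘ₗ δ)).zero_mem) (by simpa using hsum)
    -- x₀ = 0
    obtain ⟨-, c, hc, hx₀eq⟩ := p₀eq' x₀ (h₀ _ hx₀)
    rw [hz0, zero_add] at hx₀eq
    obtain ⟨b₁, hb₁, u, hu, v, hv, hdc⟩ := ddec c
    have hx₀0 : x₀ = 0 := by
      have hs : x₀ + 0 + (-(δ b₁)) + 0 + (-(δ u)) + (-(δ (δ v))) = 0 := by
        rw [hx₀eq, hdc]; abel
      exact (ind hx₀ A₁.zero_mem ((A₁.map δ).neg_mem (Submodule.mem_map_of_mem hb₁))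
        U.zero_mem ((U.map δ).neg_mem (Submodule.mem_map_of_mem hu))
        ((U.map (δ ∘ₗ δ)).neg_mem (⟨v, hv, rfl⟩ : δ (δ v) ∈ U.map (δ ∘ₗ δ))) hs).1
    -- x₁ = 0
    obtain ⟨-, k, hk, d, hx₁eq⟩ := p₁eq' x₁ (h₁ker _ hx₁)
    rw [hz1, zero_add] at hx₁eq
    obtain ⟨a, haA₀, c', hc', hkeq⟩ := mem_ker₁ k (h₀' k hk)
    obtain ⟨b₁', hb₁', u', hu', v', hv', hdc'⟩ := ddec (d + c')
    have hx₁0 : x₁ = 0 := by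
      have hx₁e2 : x₁ = a + (δ b₁' + δ u' + δ (δ v')) := by
        rw [← hdc', map_add, hx₁eq, hkeq]; abel
      have hs : a + (-x₁) + δ b₁' + 0 + δ u' + δ (δ v') = 0 := by
        rw [hx₁e2]; abel
      have h := (ind haA₀ (A₁.neg_mem hx₁) (Submodule.mem_map_of_mem hb₁')
        U.zero_mem (Submodule.mem_map_of_mem hu')
        (⟨v', hv', rfl⟩ : δ (δ v') ∈ U.map (δ ∘ₗ δ)) hs).2.1
      simpa using h
    rw [hx₀0, hx₁0, add_zero]
  · -- multiplicativity
    intro x hx y hy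
    obtain ⟨x₀, hx₀, x₁, hx₁, rfl⟩ := Submodule.mem_sup.mp hx
    obtain ⟨y₀, hy₀, y₁, hy₁, rfl⟩ := Submodule.mem_sup.mp hy
    have hdx₀ : δ x₀ = 0 := h₀ _ hx₀
    have hdy₀ : δ y₀ = 0 := h₀ _ hy₀
    have hdx₁ : δ (δ x₁) = 0 := h₁ker _ hx₁
    have hdy₁ : δ (δ y₁) = 0 := h₁ker _ hy₁
    have ex₀ : p₀ (x₀ + x₁) = x₀ := by rw [map_add, hp₀ _ hx₀, q₀A₁ _ hx₁, add_zero]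
    have ex₁ : p₁ (x₀ + x₁) = x₁ := by rw [map_add, q₁A₀ _ hx₀, hp₁ _ hx₁, zero_add]
    have ey₀ : p₀ (y₀ + y₁) = y₀ := by rw [map_add, hp₀ _ hy₀, q₀A₁ _ hy₁, add_zero]
    have ey₁ : p₁ (y₀ + y₁) = y₁ := by rw [map_add, q₁A₀ _ hy₀, hp₁ _ hy₁, zero_add]
    obtain ⟨hx₀'m, c, hc, hx₀e⟩ := p₀eq' x₀ hdx₀
    obtain ⟨hy₀'m, e, he, hy₀e⟩ := p₀eq' y₀ hdy₀
    obtain ⟨hx₁'m, k, hkm, d, hx₁e⟩ := p₁eq' x₁ hdx₁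
    obtain ⟨hy₁'m, l, hlm, f, hy₁e⟩ := p₁eq' y₁ hdy₁
    have hdx₀' : δ (p₀' x₀) = 0 := h₀' _ hx₀'m
    have hdy₀' : δ (p₀' y₀) = 0 := h₀' _ hy₀'m
    have hdx₁' : δ (δ (p₁' x₁)) = 0 := h₁ker' _ hx₁'m
    have hdy₁' : δ (δ (p₁' y₁)) = 0 := h₁ker' _ hy₁'m
    have hdk : δ k = 0 := h₀' _ hkm
    have hdl : δ l = 0 := h₀' _ hlm
    -- φ values
    have hφx : (p₀' ∘ₗ p₀ + p₁' ∘ₗ p₁) (x₀ + x₁) = p₀' x₀ + p₁' x₁ := by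
      show p₀' (p₀ (x₀ + x₁)) + p₁' (p₁ (x₀ + x₁)) = _
      rw [ex₀, ex₁]
    have hφy : (p₀' ∘ₗ p₀ + p₁' ∘ₗ p₁) (y₀ + y₁) = p₀' y₀ + p₁' y₁ := by
      show p₀' (p₀ (y₀ + y₁)) + p₁' (p₁ (y₀ + y₁)) = _
      rw [ey₀, ey₁]
    -- LHS expansion
    have hmxy : m (x₀ + x₁) (y₀ + y₁) =
        p₀ (x₀ * y₀) + p₁ (x₀ * y₁ + x₁ * y₀) + p₀ (x₁ * δ y₁) := by
      rw [hm, ex₀, ex₁, ey₀, ey₁]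
    have hφm : (p₀' ∘ₗ p₀ + p₁' ∘ₗ p₁) (m (x₀ + x₁) (y₀ + y₁)) =
        p₀' (p₀ (x₀ * y₀)) + p₁' (p₁ (x₀ * y₁ + x₁ * y₀)) + p₀' (p₀ (x₁ * δ y₁)) := by
      show p₀' (p₀ (m (x₀ + x₁) (y₀ + y₁))) + p₁' (p₁ (m (x₀ + x₁) (y₀ + y₁))) = _
      have hT0 : p₀ (p₀ (x₀ * y₀) + p₁ (x₀ * y₁ + x₁ * y₀) + p₀ (x₁ * δ y₁)) =
          p₀ (x₀ * y₀) + p₀ (x₁ * δ y₁) := by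
        rw [map_add, map_add, hp₀ _ (q₀mem (x₀ * y₀)), hp₀ _ (q₀mem (x₁ * δ y₁)),
          q₀A₁ _ (q₁mem (x₀ * y₁ + x₁ * y₀)), add_zero]
      have hT1 : p₁ (p₀ (x₀ * y₀) + p₁ (x₀ * y₁ + x₁ * y₀) + p₀ (x₁ * δ y₁)) =
          p₁ (x₀ * y₁ + x₁ * y₀) := by
        rw [map_add, map_add, q₁A₀ _ (q₀mem (x₀ * y₀)), q₁A₀ _ (q₀mem (x₁ * δ y₁)),
          hp₁ _ (q₁mem (x₀ * y₁ + x₁ * y₀)), zero_add, add_zero]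
      rw [hmxy, hT0, hT1, map_add]
      abel
    -- RHS expansion
    have hp₀'φx : p₀' ((p₀' ∘ₗ p₀ + p₁' ∘ₗ p₁) (x₀ + x₁)) = p₀' x₀ := by
      rw [hφx, map_add, hp₀' _ hx₀'m, q₀A₁' _ hx₁'m, add_zero]
    have hp₁'φx : p₁' ((p₀' ∘ₗ p₀ + p₁' ∘ₗ p₁) (x₀ + x₁)) = p₁' x₁ := by
      rw [hφx, map_add, q₁A₀' _ hx₀'m, hp₁' _ hx₁'m, zero_add]
    have hp₀'φy : p₀' ((p₀' ∘ₗ p₀ + p₁' ∘ₗ p₁) (y₀ + y₁)) = p₀' y₀ := by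
      rw [hφy, map_add, hp₀' _ hy₀'m, q₀A₁' _ hy₁'m, add_zero]
    have hp₁'φy : p₁' ((p₀' ∘ₗ p₀ + p₁' ∘ₗ p₁) (y₀ + y₁)) = p₁' y₁ := by
      rw [hφy, map_add, q₁A₀' _ hy₀'m, hp₁' _ hy₁'m, zero_add]
    -- the three key identities
    have hE : p₀' (p₀ (x₀ * y₀)) = p₀' (p₀' x₀ * p₀' y₀) := by
      have h1 : δ (x₀ * y₀) = 0 := by rw [M2 δ prod _ _ hdy₀, hdx₀, zero_mul]
      obtain ⟨-, c₂, hc₂, hpe⟩ := p₀eq (x₀ * y₀) h1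
      have h2 : p₀ (x₀ * y₀) = x₀ * y₀ - δ c₂ := by conv_rhs => rw [hpe]; rw [add_sub_cancel_right]
      rw [h2, map_sub, q₀im' c₂, sub_zero]
      have h3 : x₀ * y₀ = p₀' x₀ * p₀' y₀ + δ (c * p₀' y₀) + δ (x₀ * e) := by
        calc x₀ * y₀ = x₀ * p₀' y₀ + x₀ * δ e := by rw [← mul_add, ← hy₀e]
          _ = p₀' x₀ * p₀' y₀ + δ c * p₀' y₀ + x₀ * δ e := by rw [← add_mul, ← hx₀e]
          _ = p₀' x₀ * p₀' y₀ + δ (c * p₀' y₀) + δ (x₀ * e) := by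
              rw [M2 δ prod c _ hdy₀', M1 δ prod x₀ e hdx₀]
      rw [h3, map_add, map_add, q₀im', q₀im', add_zero, add_zero]
    have hO : p₁' (p₁ (x₀ * y₁ + x₁ * y₀)) = p₁' (p₀' x₀ * p₁' y₁ + p₁' x₁ * p₀' y₀) := by
      have hk2 : δ (δ (x₀ * y₁ + x₁ * y₀)) = 0 := by
        rw [map_add, M1 δ prod _ _ hdx₀, M2 δ prod _ _ hdy₀, map_add,
          M1 δ prod _ _ hdx₀, M2 δ prod _ _ hdy₀, hdy₁, hdx₁, mul_zero, zero_mul, add_zero]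
      obtain ⟨-, k₂, hk₂m, c₂, hpe⟩ := p₁eq _ hk2
      have h2 : p₁ (x₀ * y₁ + x₁ * y₀) = (x₀ * y₁ + x₁ * y₀) - k₂ - δ c₂ := by
        conv_rhs => rw [hpe]
        abel
      rw [h2, map_sub, map_sub, p₁ker' k₂ (h₀ k₂ hk₂m), q₁im' c₂, sub_zero, sub_zero]
      have hx0y1 : x₀ * y₁ = p₀' x₀ * p₁' y₁ + δ c * p₁' y₁ + x₀ * l + x₀ * δ f := by
        calc x₀ * y₁ = x₀ * (p₁' y₁ + l + δ f) := by rw [← hy₁e]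
          _ = x₀ * p₁' y₁ + x₀ * l + x₀ * δ f := by rw [mul_add, mul_add]
          _ = (p₀' x₀ + δ c) * p₁' y₁ + x₀ * l + x₀ * δ f := by rw [← hx₀e]
          _ = _ := by rw [add_mul]
      have hx1y0 : x₁ * y₀ = p₁' x₁ * p₀' y₀ + k * p₀' y₀ + δ d * p₀' y₀ + x₁ * δ e := by
        calc x₁ * y₀ = x₁ * p₀' y₀ + x₁ * δ e := by rw [← mul_add, ← hy₀e]
          _ = (p₁' x₁ + k + δ d) * p₀' y₀ + x₁ * δ e := by rw [← hx₁e]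
          _ = _ := by rw [add_mul, add_mul]
      have t1 : p₁' (δ c * p₁' y₁) = 0 := by
        have hM : δ (δ c * p₁' y₁) = δ c * δ (p₁' y₁) := by
          rw [prod, hc, zero_mul, zero_mul, zero_add, zero_add]
        have hδ0 : δ (δ c * p₁' y₁ + δ (c * p₁' y₁)) = 0 := by
          rw [map_add, hM]
          exact M3 δ key prod c (p₁' y₁) hc hdy₁'
        have h4 : p₁' (δ c * p₁' y₁) =
            p₁' (δ c * p₁' y₁ + δ (c * p₁' y₁)) - p₁' (δ (c * p₁' y₁)) := by
          rw [map_add]; abel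
        rw [h4, p₁ker' _ hδ0, q₁im', sub_zero]
      have t2 : p₁' (x₁ * δ e) = 0 := by
        have hM : δ (x₁ * δ e) = δ x₁ * δ e := by
          rw [prod, he, mul_zero, mul_zero, add_zero, add_zero]
        have hδ0 : δ (x₁ * δ e + δ (x₁ * e)) = 0 := by
          rw [map_add, hM]
          exact M3 δ key prod x₁ e hdx₁ he
        have h4 : p₁' (x₁ * δ e) = p₁' (x₁ * δ e + δ (x₁ * e)) - p₁' (δ (x₁ * e)) := by
          rw [map_add]; abel
        rw [h4, p₁ker' _ hδ0, q₁im', sub_zero]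
      have t3 : p₁' (x₀ * l) = 0 :=
        p₁ker' _ (by rw [M1 δ prod _ _ hdx₀, hdl, mul_zero])
      have t4 : p₁' (x₀ * δ f) = 0 := by
        rw [← M1 δ prod x₀ f hdx₀]; exact q₁im' _
      have t5 : p₁' (k * p₀' y₀) = 0 :=
        p₁ker' _ (by rw [M2 δ prod _ _ hdy₀', hdk, zero_mul])
      have t6 : p₁' (δ d * p₀' y₀) = 0 := by
        rw [← M2 δ prod d _ hdy₀']; exact q₁im' _
      rw [hx0y1, hx1y0]
      simp only [map_add, t1, t2, t3, t4, t5, t6, add_zero, zero_add]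
    have hOO : p₀' (p₀ (x₁ * δ y₁)) = p₀' (p₁' x₁ * δ (p₁' y₁)) := by
      have hM : δ (x₁ * δ y₁) = δ x₁ * δ y₁ := by
        rw [prod, hdy₁, mul_zero, mul_zero, add_zero, add_zero]
      have hz1 : δ (x₁ * δ y₁ + δ (x₁ * y₁)) = 0 := by
        rw [map_add, hM]
        exact M3 δ key prod x₁ y₁ hdx₁ hdy₁
      obtain ⟨-, c₃, hc₃, hpe⟩ := p₀eq _ hz1
      have hp₀z : p₀ (x₁ * δ y₁) = (x₁ * δ y₁ + δ (x₁ * y₁)) - δ c₃ := by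
        have e2 : p₀ (x₁ * δ y₁ + δ (x₁ * y₁)) = p₀ (x₁ * δ y₁) := by
          rw [map_add, q₀im, add_zero]
        rw [← e2]
        conv_rhs => rw [hpe]
        rw [add_sub_cancel_right]
      rw [hp₀z, map_sub, map_add, q₀im', q₀im', add_zero, sub_zero]
      have hδy₁ : δ y₁ = δ (p₁' y₁) + δ (δ f) := by
        conv_lhs => rw [hy₁e]
        rw [map_add, map_add, hdl, add_zero]
      have hdecomp : x₁ * δ y₁ =
          p₁' x₁ * δ (p₁' y₁) + k * δ (p₁' y₁) + δ d * δ (p₁' y₁) + x₁ * δ (δ f) := by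
        calc x₁ * δ y₁ = x₁ * δ (p₁' y₁) + x₁ * δ (δ f) := by rw [← mul_add, ← hδy₁]
          _ = (p₁' x₁ + k + δ d) * δ (p₁' y₁) + x₁ * δ (δ f) := by rw [← hx₁e]
          _ = _ := by rw [add_mul, add_mul]
      have t1 : p₀' (k * δ (p₁' y₁)) = 0 := by
        rw [← M1 δ prod k _ hdk]; exact q₀im' _
      have t2 : p₀' (δ d * δ (p₁' y₁)) = 0 := by
        rw [M6L δ key prod (p₁' y₁) d hdy₁' (hδ3 d)]; exact q₀im' _
      have t3 : p₀' (x₁ * δ (δ f)) = 0 := by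
        rw [M4 δ prod x₁ f hdx₁]; exact q₀im' _
      rw [hdecomp, map_add, map_add, map_add, t1, t2, t3, add_zero, add_zero, add_zero]
    rw [hm', hp₀'φx, hp₁'φx, hp₀'φy, hp₁'φy, hφm, hE, hO, hOO]
end

section
/- Let F be a field of characteristic 3, let C be an F-algebra with a quadratic form n such that n(xy) = n(x)n(y) for all x,y, let b be the polar form of n, and let σ be an algebra automorphism of C with σ³ = id and n(σ(x)) = n(x) for all x. Write δ = σ − id. Then: (1) if x ∈ C satisfies δ(x) = 0, then b(x, δ(y)) = 0 for all y ∈ C; (2) if x ∈ C satisfies δ²(x) = 0, then b(δ(x), δ(y)) = 0 for all y ∈ C; (3) if x ∈ C satisfies δ²(x) = 0, then b(δ(x), y) + b(x, δ(y)) = 0 for all y ∈ C. -/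
/-- Let `F` have characteristic 3, `C` an `F`-algebra with a multiplicative
quadratic form `n` (polar form `b`), and `σ` an algebra automorphism with `σ³ = id`
preserving `n`; write `δ = σ - id`.  Then:
(1) if `δ x = 0` then `b x (δ y) = 0` for all `y`;
(2) if `δ² x = 0` then `b (δ x) (δ y) = 0` for all `y`;
(3) if `δ² x = 0` then `b (δ x) y + b x (δ y) = 0` for all `y`. -/
theorem norm_lemma_for_composition {F : Type*} [Field F] [CharP F 3]
    {C : Type*} [NonUnitalNonAssocRing C] [Module F C]
    [SMulCommClass F C C] [IsScalarTower F C C]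
    (n : QuadraticForm F C) (hn : ∀ x y : C, n (x * y) = n x * n y)
    (σ : C →ₗ[F] C) (hσmul : ∀ x y : C, σ (x * y) = σ x * σ y)
    (hσ3 : σ ∘ₗ σ ∘ₗ σ = LinearMap.id)
    (hσn : ∀ x : C, n (σ x) = n x)
    (δ : C →ₗ[F] C) (hδ : ∀ x : C, δ x = σ x - x) :
    (∀ x : C, δ x = 0 → ∀ y : C, QuadraticMap.polar n x (δ y) = 0) ∧
    (∀ x : C, δ (δ x) = 0 → ∀ y : C, QuadraticMap.polar n (δ x) (δ y) = 0) ∧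
    (∀ x : C, δ (δ x) = 0 →
      ∀ y : C, QuadraticMap.polar n (δ x) y + QuadraticMap.polar n x (δ y) = 0) := by
  have hpol : ∀ a c : C, QuadraticMap.polar n (σ a) (σ c) = QuadraticMap.polar n a c := by
    intro a c
    simp [QuadraticMap.polar, ← map_add, hσn]
  have hσ3' : ∀ x : C, σ (σ (σ x)) = x := fun x => congrArg (· x) hσ3 |>.trans rfl
  have part1 : ∀ x : C, δ x = 0 → ∀ y : C, QuadraticMap.polar n x (δ y) = 0 := by
    intro x hx y
    have hσx : σ x = x := by have := hδ x; rw [hx] at this; exact (sub_eq_zero.mp this.symm)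
    rw [hδ, QuadraticMap.polar_sub_right]
    rw [show QuadraticMap.polar n x (σ y) = QuadraticMap.polar n x y from by
      rw [← hpol x y, hσx]]
    ring
  refine ⟨part1, fun x hx y => part1 (δ x) hx y, ?_⟩
  intro x hx y
  have h3 : (3 : F) = 0 := by exact_mod_cast CharP.cast_eq_zero F 3
  have hσδ : σ (δ x) = δ x := by
    have := hδ (δ x); rw [hx] at this; exact (sub_eq_zero.mp this.symm)
  have h2 : σ (σ x) = σ x + σ x - x := by
    have h : σ (σ x) - σ x = σ x - x := by rw [← map_sub, ← hδ x, hσδ, hδ x]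
    rw [sub_eq_iff_eq_add] at h
    rw [h]; abel
  have hkey : QuadraticMap.polar n x (σ y) = QuadraticMap.polar n (σ (σ x)) y := by
    rw [← hpol (σ (σ x)) y, hσ3' x]
  rw [hδ x, hδ y, QuadraticMap.polar_sub_left, QuadraticMap.polar_sub_right, hkey, h2,
    QuadraticMap.polar_sub_left, QuadraticMap.polar_add_left]
  linear_combination QuadraticMap.polar n (σ x) y * h3 - QuadraticMap.polar n x y * h3
end

section
/- Let F be a field of characteristic 3, V a finite-dimensional F-vector space, and σ: V → V a linear map with σ³ = id such that ker(σ − id) ⊆ im((σ − id)²) (equivalently, V is a free module over the group algebra of the cyclic group of order 3). Then every linear endomorphism f of V commuting with σ has trace zero. In particular, every equivariant endomorphism of such a representation of the cyclic group of order 3 is negligible. -/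
open Module


/-- Over a field of characteristic 3, if `σ : V → V` satisfies `σ³ = id` and
`ker (σ - id) ⊆ im ((σ - id)²)` (i.e. `V` is a free module over the group algebra of the
cyclic group of order 3), then every endomorphism of `V` commuting with `σ` has trace zero;
in particular the composition of two commuting-with-`σ` endomorphisms has trace zero
(every equivariant endomorphism is negligible). -/
theorem trace_eq_zero_of_comm_of_free {F : Type*} [Field F] [CharP F 3]
    {V : Type*} [AddCommGroup V] [Module F V] [FiniteDimensional F V]
    (σ : V →ₗ[F] V) (hσ3 : σ ∘ₗ σ ∘ₗ σ = LinearMap.id)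
    (hfree : LinearMap.ker (σ - LinearMap.id) ≤
      LinearMap.range ((σ - LinearMap.id) ∘ₗ (σ - LinearMap.id))) :
    (∀ f : V →ₗ[F] V, f ∘ₗ σ = σ ∘ₗ f → LinearMap.trace F V f = 0) ∧
    (∀ f g : V →ₗ[F] V, f ∘ₗ σ = σ ∘ₗ f → g ∘ₗ σ = σ ∘ₗ g →
      LinearMap.trace F V (f ∘ₗ g) = 0) := by
  classical
  have h3F : (3 : F) = 0 := by exact_mod_cast CharP.cast_eq_zero F 3
  set δ : Module.End F V := σ - LinearMap.id with hδdef
  -- σ^3 = 1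
  have hσp : σ ^ 3 = 1 := by
    rw [pow_succ, pow_succ, pow_one, mul_assoc]
    exact hσ3
  have h3E : ∀ x : Module.End F V, x + x + x = 0 := by
    intro x
    have : x + x + x = (3 : F) • x := by
      rw [show (3:F) = 1 + 1 + 1 by norm_num, add_smul, add_smul, one_smul]
    rw [this, h3F, zero_smul]
  have hδ3 : δ ^ 3 = 0 := by
    have expand : (σ - 1) ^ 3 = σ ^ 3 - (σ^2 + σ^2 + σ^2) + (σ + σ + σ) - 1 := by
      noncomm_ring
    have h1 : δ = σ - 1 := by rw [hδdef, Module.End.one_eq_id]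
    rw [h1, expand, hσp, h3E (σ^2), h3E σ]
    abel
  have hδ3app : ∀ v : V, δ (δ (δ v)) = 0 := by
    intro v
    have := LinearMap.ext_iff.mp hδ3 v
    simpa [pow_succ, Module.End.mul_apply] using this
  have hdd : δ ^ 2 = δ ∘ₗ δ := by rw [pow_two, Module.End.mul_eq_comp]
  have hp2 : ∀ v : V, (δ ^ 2) v = δ (δ v) := fun v => by rw [hdd]; rfl
  have hker_le : LinearMap.ker δ ≤ LinearMap.range (δ ^ 2) := by
    rw [hdd]; exact hfree
  have hr1k : LinearMap.range δ ≤ LinearMap.ker (δ ^ 2) := by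
    rintro x ⟨y, rfl⟩
    rw [LinearMap.mem_ker, hp2, hδ3app]
  have hfr : finrank F (LinearMap.ker (δ ^ 2)) ≤ finrank F (LinearMap.range δ) := by
    have e1 := LinearMap.finrank_range_add_finrank_ker δ
    have e2 := LinearMap.finrank_range_add_finrank_ker (δ ^ 2)
    have e3 : finrank F (LinearMap.ker δ) ≤ finrank F (LinearMap.range (δ ^ 2)) :=
      Submodule.finrank_mono hker_le
    omega
  have hker2 : LinearMap.ker (δ ^ 2) = LinearMap.range δ :=
    (Submodule.eq_of_le_of_finrank_le hr1k hfr).symm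
  -- the quotient and lifted basis
  set Q := V ⧸ LinearMap.range δ with hQ
  set π : V →ₗ[F] Q := (LinearMap.range δ).mkQ with hπdef
  have hπ : Function.Surjective π := Submodule.mkQ_surjective _
  set w : Basis (Fin (finrank F Q)) F Q := Module.finBasis F Q with hw
  set e : Fin (finrank F Q) → V := fun i => (hπ (w i)).choose with he_def
  have he : ∀ i, π (e i) = w i := fun i => (hπ (w i)).choose_spec
  have hA : ∀ c : Fin (finrank F Q) → F, (∑ i, c i • e i) ∈ LinearMap.ker (δ ^ 2) →
      ∀ i, c i = 0 := by
    intro c hc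
    rw [hker2] at hc
    have hc0 : π (∑ i, c i • e i) = 0 := by
      rwa [hπdef, Submodule.mkQ_apply, Submodule.Quotient.mk_eq_zero]
    have hc' : (∑ i, c i • w i) = 0 := by
      rw [← hc0, map_sum]
      simp_rw [map_smul, he]
    exact Fintype.linearIndependent_iff.mp w.linearIndependent c hc'
  -- decomposition
  have hdec : ∀ v : V, ∃ u : V, v = (∑ i, w.repr (π v) i • e i) + δ u := by
    intro v
    have hv : π (v - ∑ i, w.repr (π v) i • e i) = 0 := by
      rw [map_sub, map_sum]
      simp_rw [map_smul, he]
      rw [w.sum_repr (π v), sub_self]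
    obtain ⟨u, hu⟩ : v - ∑ i, w.repr (π v) i • e i ∈ LinearMap.range δ := by
      rwa [hπdef, Submodule.mkQ_apply, Submodule.Quotient.mk_eq_zero] at hv
    exact ⟨u, by rw [hu]; abel⟩
  set b0 : Fin 3 × Fin (finrank F Q) → V := fun p => (δ ^ (p.1 : ℕ)) (e p.2) with hb0
  set S := Submodule.span F (Set.range b0) with hS
  have hmem : ∀ p, b0 p ∈ S := fun p => Submodule.subset_span ⟨p, rfl⟩
  have hmem0 : ∀ i, e i ∈ S := by
    intro i
    have := hmem (0, i)
    simpa [hb0] using this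
  have hmem1 : ∀ i, δ (e i) ∈ S := by
    intro i
    have := hmem (1, i)
    simpa [hb0] using this
  have hmem2 : ∀ i, δ (δ (e i)) ∈ S := by
    intro i
    have := hmem (2, i)
    simpa [hb0, hp2] using this
  have hs2 : ∀ v : V, δ (δ v) ∈ S := by
    intro v
    obtain ⟨u, hu⟩ := hdec v
    rw [hu, map_add, map_add, map_sum, map_sum]
    simp_rw [map_smul]
    rw [hδ3app u]
    refine Submodule.add_mem _ (Submodule.sum_mem _ fun i _ => Submodule.smul_mem _ _ (hmem2 i)) (Submodule.zero_mem _)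
  have hs1 : ∀ v : V, δ v ∈ S := by
    intro v
    obtain ⟨u, hu⟩ := hdec v
    rw [hu, map_add, map_sum]
    simp_rw [map_smul]
    exact Submodule.add_mem _ (Submodule.sum_mem _ fun i _ => Submodule.smul_mem _ _ (hmem1 i)) (hs2 u)
  have hspan : ⊤ ≤ S := by
    intro v _
    obtain ⟨u, hu⟩ := hdec v
    rw [hu]
    exact Submodule.add_mem _ (Submodule.sum_mem _ fun i _ => Submodule.smul_mem _ _ (hmem0 i)) (hs1 u)
  have hli : LinearIndependent F b0 := by
    rw [Fintype.linearIndependent_iff]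
    intro g hg
    rw [Fintype.sum_prod_type, Fin.sum_univ_three] at hg
    have e0 : ∀ i, b0 ((0 : Fin 3), i) = e i := fun i => by simp [hb0]
    have e1 : ∀ i, b0 ((1 : Fin 3), i) = δ (e i) := fun i => by simp [hb0]
    have e2 : ∀ i, b0 ((2 : Fin 3), i) = δ (δ (e i)) := fun i => by simp [hb0, hp2]
    simp_rw [e0, e1, e2] at hg
    set v0 := ∑ i, g (0, i) • e i with hv0
    set v1 := ∑ i, g (1, i) • e i with hv1
    set v2 := ∑ i, g (2, i) • e i with hv2
    have hsum1 : ∑ i, g (1, i) • δ (e i) = δ v1 := by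
      rw [hv1, map_sum]; simp_rw [map_smul]
    have hsum2 : ∑ i, g (2, i) • δ (δ (e i)) = δ (δ v2) := by
      rw [hv2, map_sum, map_sum]; simp_rw [map_smul]
    rw [hsum1, hsum2] at hg
    -- hg : v0 + δ v1 + δ (δ v2) = 0
    have hg2 := congrArg (fun x => δ (δ x)) hg
    simp only [map_add, map_zero, hδ3app] at hg2
    -- hg2 : δ (δ v0) + 0 + δ (δ (δ (δ v2))) = 0 ... need care
    have hz1 : δ (δ (δ v1)) = 0 := hδ3app v1
    have hz2 : δ (δ (δ (δ v2))) = 0 := by rw [hδ3app v2, map_zero]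
    have hgv0 : δ (δ v0) = 0 := by simpa [hz1, hz2] using hg2
    have h0 : ∀ i, g (0, i) = 0 := hA _ (by rw [LinearMap.mem_ker, hp2]; exact hgv0)
    have hv0z : v0 = 0 := by
      rw [hv0]
      exact Finset.sum_eq_zero fun i _ => by rw [h0 i, zero_smul]
    rw [hv0z, zero_add] at hg
    have hg1 := congrArg δ hg
    simp only [map_add, map_zero] at hg1
    have hgv1 : δ (δ v1) = 0 := by
      have : δ (δ v1) + δ (δ (δ v2)) = 0 := hg1
      rwa [hδ3app v2, add_zero] at this
    have h1 : ∀ i, g (1, i) = 0 := hA _ (by rw [LinearMap.mem_ker, hp2]; exact hgv1)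
    have hv1z : v1 = 0 := by
      rw [hv1]
      exact Finset.sum_eq_zero fun i _ => by rw [h1 i, zero_smul]
    rw [hv1z, map_zero, zero_add] at hg
    have h2 : ∀ i, g (2, i) = 0 := hA _ (by rw [LinearMap.mem_ker, hp2]; exact hg)
    rintro ⟨j, i⟩
    fin_cases j
    · exact h0 i
    · exact h1 i
    · exact h2 i
  set b : Basis (Fin 3 × Fin (finrank F Q)) F V := Basis.mk hli hspan with hbdef
  have hbmk : ∀ p, b p = b0 p := fun p => Basis.mk_apply hli hspan p
  have hb0' : ∀ l, b (0, l) = e l := fun l => by rw [hbmk]; simp [hb0]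
  have hb1' : ∀ l, b (1, l) = δ (e l) := fun l => by rw [hbmk]; simp [hb0]
  have hb2' : ∀ l, b (2, l) = δ (δ (e l)) := fun l => by rw [hbmk]; simp [hb0, hp2]
  -- coordinate functional identities
  have hd0 : ∀ l, δ (b (0, l)) = b (1, l) := fun l => by rw [hb0', hb1']
  have hd1 : ∀ l, δ (b (1, l)) = b (2, l) := fun l => by rw [hb1', hb2']
  have hd2 : ∀ l, δ (b (2, l)) = 0 := fun l => by rw [hb2']; exact hδ3app _
  have hK1 : ∀ i, (b.coord (1, i)) ∘ₗ δ = b.coord (0, i) := by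
    intro i
    apply b.ext
    rintro ⟨k, l⟩
    fin_cases k <;>
      simp [hd0, hd1, hd2, Basis.coord_apply, Basis.repr_self, Finsupp.single_apply,
        Prod.ext_iff]
  have hK2 : ∀ i, (b.coord (2, i)) ∘ₗ (δ ∘ₗ δ) = b.coord (0, i) := by
    intro i
    apply b.ext
    rintro ⟨k, l⟩
    fin_cases k <;>
      simp [hd0, hd1, hd2, Basis.coord_apply, Basis.repr_self, Finsupp.single_apply,
        Prod.ext_iff]
  have main : ∀ f : V →ₗ[F] V, f ∘ₗ σ = σ ∘ₗ f → LinearMap.trace F V f = 0 := by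
    intro f hf
    have hfδ : f ∘ₗ δ = δ ∘ₗ f := by
      rw [hδdef, LinearMap.comp_sub, LinearMap.sub_comp, hf, LinearMap.comp_id,
        LinearMap.id_comp]
    have hfδv : ∀ v, f (δ v) = δ (f v) := fun v => by
      have := LinearMap.ext_iff.mp hfδ v
      simpa using this
    have htr : LinearMap.trace F V f = ∑ p : Fin 3 × Fin (finrank F Q), b.repr (f (b p)) p := by
      rw [LinearMap.trace_eq_matrix_trace F b f]
      simp [Matrix.trace, Matrix.diag, LinearMap.toMatrix_apply]
    have key1 : ∀ i, b.repr (f (b (1, i))) (1, i) = b.repr (f (b (0, i))) (0, i) := by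
      intro i
      rw [hb1', hb0', hfδv]
      have := LinearMap.ext_iff.mp (hK1 i) (f (e i))
      simpa [Basis.coord_apply] using this
    have key2 : ∀ i, b.repr (f (b (2, i))) (2, i) = b.repr (f (b (0, i))) (0, i) := by
      intro i
      rw [hb2', hb0', hfδv, hfδv]
      have := LinearMap.ext_iff.mp (hK2 i) (f (e i))
      simpa [Basis.coord_apply] using this
    rw [htr, Fintype.sum_prod_type, Fin.sum_univ_three]
    simp_rw [key1, key2]
    rw [← Finset.sum_add_distrib, ← Finset.sum_add_distrib]
    refine Finset.sum_eq_zero fun i _ => ?_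
    have : ∀ x : F, x + x + x = 0 := by
      intro x
      have : x + x + x = (3 : F) * x := by ring
      rw [this, h3F, zero_mul]
    exact this _
  refine ⟨main, fun f g hf hg => main (f ∘ₗ g) ?_⟩
  rw [LinearMap.comp_assoc, hg, ← LinearMap.comp_assoc, hf, LinearMap.comp_assoc]
end

section
/- Let F be a field of characteristic different from 2, let C be an F-algebra, and let n be a quadratic form on C with polar form b(x,y) = n(x+y) − n(x) − n(y). Then n is multiplicative, i.e., n(xy) = n(x)n(y) for all x,y ∈ C, if and only if the identity b(xy, zt) + b(zy, xt) = b(x,z)·b(y,t) holds for all x, y, z, t ∈ C. -/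
/-- Over a field of characteristic ≠ 2, a quadratic form `n` on an `F`-algebra
`C` is multiplicative (`n (x*y) = n x * n y`) iff its polar form `b` satisfies
`b (x*y) (z*t) + b (z*y) (x*t) = b x z * b y t` for all `x y z t`. -/
theorem multiplicative_iff_polar_identity {F : Type*} [Field F] (h2 : (2 : F) ≠ 0)
    {C : Type*} [NonUnitalNonAssocRing C] [Module F C]
    [SMulCommClass F C C] [IsScalarTower F C C]
    (n : QuadraticForm F C) :
    (∀ x y : C, n (x * y) = n x * n y) ↔
    (∀ x y z t : C,
      QuadraticMap.polar n (x * y) (z * t) + QuadraticMap.polar n (z * y) (x * t) =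
        QuadraticMap.polar n x z * QuadraticMap.polar n y t) := by
  constructor
  · intro hm x y z t
    have key : ∀ a b c : C,
        QuadraticMap.polar n (a * c) (b * c) = QuadraticMap.polar n a b * n c := by
      intro a b c
      unfold QuadraticMap.polar
      rw [← add_mul, hm, hm, hm]; ring
    have h := key x z (y + t)
    rw [mul_add, mul_add, QuadraticMap.polar_add_left, QuadraticMap.polar_add_right,
      QuadraticMap.polar_add_right] at h
    have hyt : n (y + t) = n y + n t + QuadraticMap.polar n y t := by
      unfold QuadraticMap.polar; ring
    rw [hyt, key x z y, key x z t,
      QuadraticMap.polar_comm n (x * t) (z * y)] at h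
    linear_combination h
  · intro hb x y
    have h := hb x y x y
    rw [QuadraticMap.polar_self, QuadraticMap.polar_self, QuadraticMap.polar_self] at h
    simp only [two_smul] at h
    have h' : (2 * 2) * n (x * y) = (2 * 2) * (n x * n y) := by linear_combination h
    exact mul_left_cancel₀ (mul_ne_zero h2 h2) h'
end

section
/- Let F be a field of characteristic different from 2 and let (C, n) be a unital composition algebra over F (n a multiplicative quadratic form with nondegenerate polar form b). Define the conjugation x̄ = b(x,1)·1 − x and the para-Hurwitz product x•y = x̄·ȳ, and for x ∈ C let l_x: z ↦ x•z and r_x: z ↦ z•x. For x, y ∈ C define s_{x,y}: z ↦ b(x,z)y − b(y,z)x. Then the triple t_{x,y} = (s_{x,y}, ½(r_y∘l_x − r_x∘l_y), ½(l_y∘r_x − l_x∘r_y)) belongs to the triality Lie algebra tri(C,•,n): each of its three components d satisfies b(d(u),v) + b(u,d(v)) = 0 for all u,v ∈ C, and s_{x,y}(u•v) = (½(r_y∘l_x − r_x∘l_y))(u)•v + u•(½(l_y∘r_x − l_x∘r_y))(v) for all u, v ∈ C. -/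
set_option linter.unusedSectionVars false

section AuxTriality

open QuadraticMap

variable {F : Type*} [Field F] {C : Type*} [NonAssocRing C] [Module F C]
  [SMulCommClass F C C] [IsScalarTower F C C]

/-- conjugation -/
private def cnj (n : QuadraticForm F C) (p : C) : C :=
  QuadraticMap.polar n p 1 • (1 : C) - p

private lemma lscale (n : QuadraticForm F C) (hmul : ∀ x y : C, n (x * y) = n x * n y)
    (p q w : C) : polar n (p * q) (p * w) = n p * polar n q w := by
  simp only [polar, ← mul_add, hmul]; ring

private lemma rscale (n : QuadraticForm F C) (hmul : ∀ x y : C, n (x * y) = n x * n y)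
    (p w q : C) : polar n (p * q) (w * q) = polar n p w * n q := by
  simp only [polar, ← add_mul, hmul]; ring

private lemma fullLin (n : QuadraticForm F C) (hmul : ∀ x y : C, n (x * y) = n x * n y)
    (p q r s : C) :
    polar n (p * q) (r * s) + polar n (p * s) (r * q) = polar n p r * polar n q s := by
  have h1 := rscale n hmul p r (q + s)
  rw [mul_add, mul_add, polar_add_left, polar_add_right, polar_add_right,
    QuadraticMap.map_add (⇑n) q s, rscale n hmul p r q, rscale n hmul p r s] at h1
  linear_combination h1

private lemma adjoint1 (n : QuadraticForm F C) (hmul : ∀ x y : C, n (x * y) = n x * n y)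
    (p q r : C) : polar n (p * q) r = polar n q (cnj n p * r) := by
  have h := fullLin n hmul p q 1 r
  rw [one_mul, one_mul] at h
  have hc : cnj n p * r = polar n p 1 • r - p * r := by
    rw [cnj, sub_mul, smul_mul_assoc, one_mul]
  rw [hc, polar_sub_right, polar_smul_right, smul_eq_mul]
  rw [polar_comm n (p * r) q] at h
  linear_combination h

private lemma adjoint2 (n : QuadraticForm F C) (hmul : ∀ x y : C, n (x * y) = n x * n y)
    (p q r : C) : polar n (p * q) r = polar n p (r * cnj n q) := by
  have h := fullLin n hmul p q r 1
  rw [mul_one, mul_one] at h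
  have hc : r * cnj n q = polar n q 1 • r - r * q := by
    rw [cnj, mul_sub, mul_smul_comm, mul_one]
  rw [hc, polar_sub_right, polar_smul_right, smul_eq_mul]
  linear_combination h

variable (n : QuadraticForm F C)

private lemma cnj_add (p q : C) : cnj n (p + q) = cnj n p + cnj n q := by
  simp only [cnj, polar_add_left, add_smul]; abel

private lemma cnj_sub (p q : C) : cnj n (p - q) = cnj n p - cnj n q := by
  simp only [cnj, polar_sub_left, sub_smul]; abel

private lemma cnj_smul (a : F) (p : C) : cnj n (a • p) = a • cnj n p := by
  simp only [cnj, polar_smul_left, smul_eq_mul, mul_smul, smul_sub]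

section One
variable (hone : n 1 = 1)
include hone

private lemma polar_one_one : polar n (1 : C) 1 = 2 := by
  rw [polar_self, hone]; norm_num

private lemma polar_cnj_one (p : C) : polar n (cnj n p) 1 = polar n p 1 := by
  rw [cnj, polar_sub_left, polar_smul_left, polar_one_one n hone, smul_eq_mul]; ring

private lemma cnj_cnj (p : C) : cnj n (cnj n p) = p := by
  rw [cnj, polar_cnj_one n hone, cnj, sub_sub_cancel]

private lemma polar_cnj_cnj (p q : C) : polar n (cnj n p) (cnj n q) = polar n p q := by
  simp only [cnj, polar_sub_left, polar_sub_right, polar_smul_left, polar_smul_right,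
    smul_eq_mul, polar_one_one n hone]
  rw [polar_comm n (1 : C) q]
  ring

private lemma map_cnj (p : C) : n (cnj n p) = n p := by
  rw [cnj, sub_eq_add_neg, QuadraticMap.map_add (⇑n) (polar n p 1 • (1 : C)) (-p),
    QuadraticMap.map_neg,
    QuadraticMap.map_smul, polar_neg_right, polar_smul_left, hone, smul_eq_mul,
    smul_eq_mul, polar_comm n 1 p]
  ring

end One

variable (bul : C → C → C)
variable (hbul : ∀ x y : C, bul x y =
  (QuadraticMap.polar n x 1 • (1 : C) - x) * (QuadraticMap.polar n y 1 • (1 : C) - y))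
include hbul

private lemma bul_eq (p q : C) : bul p q = cnj n p * cnj n q := hbul p q

private lemma bul_add_left (p q r : C) : bul (p + q) r = bul p r + bul q r := by
  simp only [bul_eq n bul hbul, cnj_add, add_mul]

private lemma bul_add_right (p q r : C) : bul p (q + r) = bul p q + bul p r := by
  simp only [bul_eq n bul hbul, cnj_add, mul_add]

private lemma bul_sub_left (p q r : C) : bul (p - q) r = bul p r - bul q r := by
  simp only [bul_eq n bul hbul, cnj_sub, sub_mul]

private lemma bul_sub_right (p q r : C) : bul p (q - r) = bul p q - bul p r := by
  simp only [bul_eq n bul hbul, cnj_sub, mul_sub]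

private lemma bul_smul_left (a : F) (p r : C) : bul (a • p) r = a • bul p r := by
  simp only [bul_eq n bul hbul, cnj_smul, smul_mul_assoc]

private lemma bul_smul_right (a : F) (p r : C) : bul p (a • r) = a • bul p r := by
  simp only [bul_eq n bul hbul, cnj_smul, mul_smul_comm]

variable (hmul : ∀ x y : C, n (x * y) = n x * n y) (hone : n 1 = 1)
include hmul hone

private lemma assocForm (p q r : C) : polar n (bul p q) r = polar n p (bul q r) := by
  rw [bul_eq n bul hbul, bul_eq n bul hbul]
  rw [adjoint1 n hmul, cnj_cnj n hone]
  rw [polar_comm n p, adjoint2 n hmul, cnj_cnj n hone, polar_comm]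

private lemma bul_scaleL (p q w : C) :
    polar n (bul p q) (bul p w) = n p * polar n q w := by
  rw [bul_eq n bul hbul, bul_eq n bul hbul, lscale n hmul, map_cnj n hone,
    polar_cnj_cnj n hone]

private lemma bul_scaleR (p w q : C) :
    polar n (bul p q) (bul w q) = polar n p w * n q := by
  rw [bul_eq n bul hbul, bul_eq n bul hbul, rscale n hmul, map_cnj n hone,
    polar_cnj_cnj n hone]

variable (hnd : ∀ x : C, (∀ y : C, QuadraticMap.polar n x y = 0) → x = 0)
include hnd

private lemma S1a (p q : C) : bul (bul p q) p = n p • q := by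
  have key : ∀ w : C, polar n (bul (bul p q) p - n p • q) w = 0 := by
    intro w
    rw [polar_sub_left, assocForm n bul hbul hmul hone,
      bul_scaleL n bul hbul hmul hone, polar_smul_left, smul_eq_mul, sub_self]
  have := hnd _ key
  rwa [sub_eq_zero] at this

private lemma S1b (p q : C) : bul p (bul q p) = n p • q := by
  have key : ∀ w : C, polar n (bul p (bul q p) - n p • q) w = 0 := by
    intro w
    rw [polar_sub_left, polar_comm n (bul p (bul q p)) w,
      ← assocForm n bul hbul hmul hone w p (bul q p),
      bul_scaleR n bul hbul hmul hone, polar_smul_left, smul_eq_mul,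
      polar_comm n w q]
    ring
  have := hnd _ key
  rwa [sub_eq_zero] at this

private lemma L2 (p q r : C) :
    bul (bul p q) r + bul (bul r q) p = polar n p r • q := by
  have h := S1a n bul hbul hmul hone hnd (p + r) q
  simp only [bul_add_left n bul hbul, bul_add_right n bul hbul] at h
  rw [QuadraticMap.map_add (⇑n) p r, S1a n bul hbul hmul hone hnd p q,
    S1a n bul hbul hmul hone hnd r q, add_smul, add_smul] at h
  calc bul (bul p q) r + bul (bul r q) p
      = n p • q + bul (bul p q) r + (bul (bul r q) p + n r • q)
        - n p • q - n r • q := by abel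
    _ = (n p • q + n r • q + polar n p r • q) - n p • q - n r • q := by rw [h]
    _ = polar n p r • q := by abel

private lemma L1 (p q r : C) :
    bul p (bul q r) + bul r (bul q p) = polar n p r • q := by
  have h := S1b n bul hbul hmul hone hnd (p + r) q
  simp only [bul_add_left n bul hbul, bul_add_right n bul hbul] at h
  rw [QuadraticMap.map_add (⇑n) p r, S1b n bul hbul hmul hone hnd p q,
    S1b n bul hbul hmul hone hnd r q, add_smul, add_smul] at h
  calc bul p (bul q r) + bul r (bul q p)
      = n p • q + bul p (bul q r) + (bul r (bul q p) + n r • q)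
        - n p • q - n r • q := by abel
    _ = (n p • q + n r • q + polar n p r • q) - n p • q - n r • q := by rw [h]
    _ = polar n p r • q := by abel

end AuxTriality

/-- In a unital composition algebra `(C, n)` over a field of characteristic
≠ 2, with para-Hurwitz product `x • y = x̄ * ȳ` (where `x̄ = b(x,1)·1 − x`), the triple
`t_{x,y} = (s_{x,y}, ½(r_y l_x − r_x l_y), ½(l_y r_x − l_x r_y))` lies in the triality Lie
algebra: each component is skew relative to the polar form `b`, and
`s_{x,y}(u • v) = (½(r_y l_x − r_x l_y))(u) • v + u • (½(l_y r_x − l_x r_y))(v)`. -/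
theorem t_xy_mem_triality {F : Type*} [Field F] (h2 : (2 : F) ≠ 0)
    {C : Type*} [NonAssocRing C] [Module F C] [SMulCommClass F C C] [IsScalarTower F C C]
    (n : QuadraticForm F C)
    (hmul : ∀ x y : C, n (x * y) = n x * n y)
    (hnd : ∀ x : C, (∀ y : C, QuadraticMap.polar n x y = 0) → x = 0)
    (bul : C → C → C)
    (hbul : ∀ x y : C, bul x y =
      (QuadraticMap.polar n x 1 • (1 : C) - x) * (QuadraticMap.polar n y 1 • (1 : C) - y)) :
    ∀ x y : C, ∀ d0 d1 d2 : C → C,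
      (∀ z : C, d0 z = QuadraticMap.polar n x z • y - QuadraticMap.polar n y z • x) →
      (∀ z : C, d1 z = (2⁻¹ : F) • (bul (bul x z) y - bul (bul y z) x)) →
      (∀ z : C, d2 z = (2⁻¹ : F) • (bul y (bul z x) - bul x (bul z y))) →
      ((∀ u v : C, QuadraticMap.polar n (d0 u) v + QuadraticMap.polar n u (d0 v) = 0) ∧
       (∀ u v : C, QuadraticMap.polar n (d1 u) v + QuadraticMap.polar n u (d1 v) = 0) ∧
       (∀ u v : C, QuadraticMap.polar n (d2 u) v + QuadraticMap.polar n u (d2 v) = 0) ∧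
       (∀ u v : C, d0 (bul u v) = bul (d1 u) v + bul u (d2 v))) := by
  intro x y d0 d1 d2 hd0 hd1 hd2
  by_cases htriv : ∀ z : C, z = 0
  · refine ⟨fun u v => ?_, fun u v => ?_, fun u v => ?_, fun u v => ?_⟩
    · rw [htriv (d0 u), htriv (d0 v), QuadraticMap.polar_zero_left,
        QuadraticMap.polar_zero_right, add_zero]
    · rw [htriv (d1 u), htriv (d1 v), QuadraticMap.polar_zero_left,
        QuadraticMap.polar_zero_right, add_zero]
    · rw [htriv (d2 u), htriv (d2 v), QuadraticMap.polar_zero_left,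
        QuadraticMap.polar_zero_right, add_zero]
    · rw [htriv (d0 (bul u v)), htriv (bul (d1 u) v), htriv (bul u (d2 v)), add_zero]
  · -- the algebra is nontrivial, hence `n 1 = 1`
    push_neg at htriv
    obtain ⟨z, hz⟩ := htriv
    have hone : n 1 = 1 := by
      by_contra hn1
      have hz0 : ∀ w : C, n w = 0 := by
        intro w
        by_contra hw
        have h := hmul w 1
        rw [mul_one] at h
        exact hn1 (mul_left_cancel₀ hw (by rw [← h, mul_one]))
      have hp : ∀ a b : C, QuadraticMap.polar n a b = 0 := by
        intro a b
        simp [QuadraticMap.polar, hz0]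
      exact hz (hnd z (fun w => hp z w))
    have hS2 := assocForm n bul hbul hmul hone
    have hL1 := L1 n bul hbul hmul hone hnd
    have hL2 := L2 n bul hbul hmul hone hnd
    refine ⟨fun u v => ?_, fun u v => ?_, fun u v => ?_, fun u v => ?_⟩
    · -- skewness of d0
      rw [hd0 u, hd0 v]
      simp only [QuadraticMap.polar_sub_left, QuadraticMap.polar_sub_right,
        QuadraticMap.polar_smul_left, QuadraticMap.polar_smul_right, smul_eq_mul]
      rw [QuadraticMap.polar_comm n u y, QuadraticMap.polar_comm n u x]
      ring
    · -- skewness of d1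
      rw [hd1 u, hd1 v]
      simp only [QuadraticMap.polar_smul_left, QuadraticMap.polar_smul_right,
        QuadraticMap.polar_sub_left, QuadraticMap.polar_sub_right, smul_eq_mul]
      have e1 := hS2 (bul x u) y v
      have e2 := hS2 (bul y u) x v
      have e3 : QuadraticMap.polar n u (bul (bul x v) y) =
          QuadraticMap.polar n (bul x v) (bul y u) := by
        rw [QuadraticMap.polar_comm, hS2 (bul x v) y u]
      have e4 : QuadraticMap.polar n u (bul (bul y v) x) =
          QuadraticMap.polar n (bul y v) (bul x u) := by
        rw [QuadraticMap.polar_comm, hS2 (bul y v) x u]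
      rw [e1, e2, e3, e4, QuadraticMap.polar_comm n (bul x v) (bul y u),
        QuadraticMap.polar_comm n (bul y v) (bul x u)]
      ring
    · -- skewness of d2
      rw [hd2 u, hd2 v]
      simp only [QuadraticMap.polar_smul_left, QuadraticMap.polar_smul_right,
        QuadraticMap.polar_sub_left, QuadraticMap.polar_sub_right, smul_eq_mul]
      have e1 : QuadraticMap.polar n (bul y (bul u x)) v =
          QuadraticMap.polar n (bul v y) (bul u x) := by
        rw [QuadraticMap.polar_comm, ← hS2 v y (bul u x)]
      have e2 : QuadraticMap.polar n (bul x (bul u y)) v =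
          QuadraticMap.polar n (bul v x) (bul u y) := by
        rw [QuadraticMap.polar_comm, ← hS2 v x (bul u y)]
      have e3 : QuadraticMap.polar n u (bul y (bul v x)) =
          QuadraticMap.polar n (bul u y) (bul v x) := by
        rw [← hS2 u y (bul v x)]
      have e4 : QuadraticMap.polar n u (bul x (bul v y)) =
          QuadraticMap.polar n (bul u x) (bul v y) := by
        rw [← hS2 u x (bul v y)]
      rw [e1, e2, e3, e4, QuadraticMap.polar_comm n (bul u y) (bul v x),
        QuadraticMap.polar_comm n (bul u x) (bul v y)]
      ring
    · -- the triality identity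
      rw [hd0 (bul u v), hd1 u, hd2 v, bul_smul_left n bul hbul,
        bul_smul_right n bul hbul, bul_sub_left n bul hbul, bul_sub_right n bul hbul]
      have hhalf : ∀ w : C, (2⁻¹ : F) • (w + w) = w := by
        intro w
        rw [← two_smul F w, smul_smul, inv_mul_cancel₀ h2, one_smul]
      have key1 : bul (bul (bul y u) x) v =
          QuadraticMap.polar n x y • bul u v - bul (bul (bul x u) y) v := by
        have h := eq_sub_of_add_eq' (hL2 x u y)
        rw [h, bul_sub_left n bul hbul, bul_smul_left n bul hbul]
      have key2 : bul u (bul x (bul v y)) =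
          QuadraticMap.polar n x y • bul u v - bul u (bul y (bul v x)) := by
        have h := eq_sub_of_add_eq (hL1 x v y)
        rw [h, bul_sub_right n bul hbul, bul_smul_right n bul hbul]
      have a5 : bul u (bul x (bul v y)) + bul u (bul y (bul v x)) =
          QuadraticMap.polar n x y • bul u v := by
        rw [← bul_add_right n bul hbul, hL1 x v y, bul_smul_right n bul hbul]
      have a1 := eq_sub_of_add_eq (hL2 (bul x u) y v)
      have a2 := eq_sub_of_add_eq (hL1 u y (bul v x))
      have a3 := eq_sub_of_add_eq (hL1 (bul v y) x u)
      have a4 := eq_sub_of_add_eq (hL1 (bul v x) y u)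
      have f1 : QuadraticMap.polar n (bul x u) v =
          QuadraticMap.polar n x (bul u v) := hS2 x u v
      have f2 : QuadraticMap.polar n u (bul v x) =
          QuadraticMap.polar n x (bul u v) := by
        rw [← hS2 u v x, QuadraticMap.polar_comm]
      have f3 : QuadraticMap.polar n (bul v y) u =
          QuadraticMap.polar n y (bul u v) := by
        rw [hS2 v y u, QuadraticMap.polar_comm, hS2 y u v]
      have f4 : QuadraticMap.polar n (bul v x) u =
          QuadraticMap.polar n x (bul u v) := by
        rw [hS2 v x u, QuadraticMap.polar_comm, hS2 x u v]
      have keyT : bul (bul (bul x u) y) v + bul u (bul y (bul v x)) =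
          QuadraticMap.polar n x (bul u v) • y - QuadraticMap.polar n y (bul u v) • x +
            QuadraticMap.polar n x y • bul u v := by
        rw [a1, a2, a3, a4, f1, f2, f3, f4, ← a5]
        abel
      rw [key1, key2, ← smul_add]
      have hsum : (bul (bul (bul x u) y) v -
            (QuadraticMap.polar n x y • bul u v - bul (bul (bul x u) y) v)) +
          (bul u (bul y (bul v x)) -
            (QuadraticMap.polar n x y • bul u v - bul u (bul y (bul v x)))) =
          (QuadraticMap.polar n x (bul u v) • y - QuadraticMap.polar n y (bul u v) • x) +
          (QuadraticMap.polar n x (bul u v) • y - QuadraticMap.polar n y (bul u v) • x) := by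
        calc (bul (bul (bul x u) y) v -
            (QuadraticMap.polar n x y • bul u v - bul (bul (bul x u) y) v)) +
          (bul u (bul y (bul v x)) -
            (QuadraticMap.polar n x y • bul u v - bul u (bul y (bul v x))))
            = (bul (bul (bul x u) y) v + bul u (bul y (bul v x))) +
              (bul (bul (bul x u) y) v + bul u (bul y (bul v x))) -
              QuadraticMap.polar n x y • bul u v -
              QuadraticMap.polar n x y • bul u v := by abel
          _ = _ := by rw [keyT]; abel
      rw [hsum, hhalf]
end

section
/- Let F be a field of characteristic different from 2 and let (C, n) be a unital composition algebra over F with para-Hurwitz product x•y = x̄·ȳ (x̄ = b(x,1)·1 − x, b the polar form of n). If (d₀, d₁, d₂) belongs to the triality Lie algebra tri(C,•,n), then so does the cyclically shifted triple (d₂, d₀, d₁). Consequently the map θ: (d₀,d₁,d₂) ↦ (d₂,d₀,d₁) is a Lie algebra automorphism of tri(C,•,n) with θ³ = id. -/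
/-- The cyclic shift `(d₀, d₁, d₂) ↦ (d₂, d₀, d₁)` on triples. -/
def cyclicShift {E : Type*} (t : E × E × E) : E × E × E := (t.2.2, t.1, t.2.1)

section Aux

open QuadraticMap

variable {F : Type*} [Field F] {C : Type*} [NonAssocRing C] [Module F C]
  [SMulCommClass F C C] [IsScalarTower F C C] (n : QuadraticForm F C)

private lemma auxL1 (hmul : ∀ x y : C, n (x * y) = n x * n y) (x z y : C) :
    polar n (x * y) (z * y) = polar n x z * n y := by
  simp only [polar, ← add_mul, hmul]
  ring

private lemma auxL2 (hmul : ∀ x y : C, n (x * y) = n x * n y) (x y z w : C) :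
    polar n (x * y) (z * w) + polar n (x * w) (z * y) = polar n x z * polar n y w := by
  have h := auxL1 n hmul x z (y + w)
  simp only [mul_add, polar_add_left, polar_add_right] at h
  rw [auxL1 n hmul x z y, auxL1 n hmul x z w] at h
  have hp : n (y + w) = polar n y w + n y + n w := by simp [polar]; ring
  rw [hp] at h
  linear_combination h

/-- conjugation -/
private def conj (x : C) : C := polar n x 1 • (1 : C) - x

private lemma auxL3 (hmul : ∀ x y : C, n (x * y) = n x * n y) (x y z : C) :
    polar n (x * y) z = polar n x (z * conj n y) := by
  have h := auxL2 n hmul x y z 1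
  rw [mul_one, mul_one] at h
  have : z * conj n y = polar n y 1 • z - z * y := by
    simp [conj, mul_sub, mul_smul_comm]
  rw [this, polar_sub_right, polar_smul_right, smul_eq_mul]
  linear_combination h

private lemma auxL4 (hmul : ∀ x y : C, n (x * y) = n x * n y) (x y z : C) :
    polar n (x * y) z = polar n y (conj n x * z) := by
  have h := auxL2 n hmul x y 1 z
  rw [one_mul, one_mul] at h
  have : conj n x * z = polar n x 1 • z - x * z := by
    simp [conj, sub_mul, smul_mul_assoc]
  rw [this, polar_sub_right, polar_smul_right, smul_eq_mul]
  have hc : polar n (x * z) y = polar n y (x * z) := polar_comm n _ _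
  linear_combination h - hc

private lemma aux_conj_conj (hmul : ∀ x y : C, n (x * y) = n x * n y) (hn1 : n 1 = 1) (x : C) :
    conj n (conj n x) = x := by
  have h11 : polar n (1 : C) 1 = 2 := by
    have : ((1 : C) + 1) = (2 : F) • (1 : C) := by
      rw [show (2 : F) = 1 + 1 by norm_num, add_smul, one_smul]
    simp [polar, this, QuadraticMap.map_smul, hn1]
    norm_num
  have hcx : polar n (conj n x) 1 = polar n x 1 := by
    rw [conj, polar_sub_left, polar_smul_left, h11, smul_eq_mul]
    ring
  have e : conj n (conj n x) = polar n (conj n x) 1 • (1 : C) - conj n x := rfl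
  rw [e, hcx, conj, sub_sub_cancel]

/-- cyclicity of the trilinear form `polar n (conj x * conj y) z`. -/
private lemma aux_cyc (hmul : ∀ x y : C, n (x * y) = n x * n y) (hn1 : n 1 = 1) (x y z : C) :
    polar n (conj n x * conj n y) z = polar n (conj n y * conj n z) x := by
  rw [auxL4 n hmul (conj n x) (conj n y) z, aux_conj_conj n hmul hn1,
    auxL3 n hmul (conj n y) (conj n z) x, aux_conj_conj n hmul hn1]

end Aux

/-- In a unital composition algebra `(C, n)` over a field of characteristic
≠ 2, with para-Hurwitz product `bul x y = x̄ * ȳ`, if `(d₀, d₁, d₂)` lies in the triality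
Lie algebra `tri(C, •, n)`, then so does `(d₂, d₀, d₁)`.  Consequently the cyclic shift
`θ` is a Lie algebra automorphism of `tri(C, •, n)` with `θ³ = id`. -/
theorem cyclicShift_mem_triality {F : Type*} [Field F] (h2 : (2 : F) ≠ 0)
    {C : Type*} [NonAssocRing C] [Module F C] [SMulCommClass F C C] [IsScalarTower F C C]
    (n : QuadraticForm F C)
    (hmul : ∀ x y : C, n (x * y) = n x * n y)
    (hnd : ∀ x : C, (∀ y : C, QuadraticMap.polar n x y = 0) → x = 0)
    (bul : C → C → C)
    (hbul : ∀ x y : C, bul x y =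
      (QuadraticMap.polar n x 1 • (1 : C) - x) * (QuadraticMap.polar n y 1 • (1 : C) - y))
    (Tri : Set ((C →ₗ[F] C) × (C →ₗ[F] C) × (C →ₗ[F] C)))
    (hTri : ∀ t, t ∈ Tri ↔
      ((∀ u v : C, QuadraticMap.polar n (t.1 u) v + QuadraticMap.polar n u (t.1 v) = 0) ∧
       (∀ u v : C, QuadraticMap.polar n (t.2.1 u) v + QuadraticMap.polar n u (t.2.1 v) = 0) ∧
       (∀ u v : C, QuadraticMap.polar n (t.2.2 u) v + QuadraticMap.polar n u (t.2.2 v) = 0) ∧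
       (∀ x y : C, t.1 (bul x y) = bul (t.2.1 x) y + bul x (t.2.2 y)))) :
    (∀ t ∈ Tri, cyclicShift t ∈ Tri) ∧
    (∀ t : (C →ₗ[F] C) × (C →ₗ[F] C) × (C →ₗ[F] C),
      cyclicShift (cyclicShift (cyclicShift t)) = t) ∧
    (∀ t s : (C →ₗ[F] C) × (C →ₗ[F] C) × (C →ₗ[F] C),
      cyclicShift (t + s) = cyclicShift t + cyclicShift s) ∧
    (∀ (a : F) (t : (C →ₗ[F] C) × (C →ₗ[F] C) × (C →ₗ[F] C)),
      cyclicShift (a • t) = a • cyclicShift t) ∧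
    (∀ t s : (C →ₗ[F] C) × (C →ₗ[F] C) × (C →ₗ[F] C),
      cyclicShift (t.1 ∘ₗ s.1 - s.1 ∘ₗ t.1, t.2.1 ∘ₗ s.2.1 - s.2.1 ∘ₗ t.2.1,
          t.2.2 ∘ₗ s.2.2 - s.2.2 ∘ₗ t.2.2) =
        ((cyclicShift t).1 ∘ₗ (cyclicShift s).1 - (cyclicShift s).1 ∘ₗ (cyclicShift t).1,
         (cyclicShift t).2.1 ∘ₗ (cyclicShift s).2.1 - (cyclicShift s).2.1 ∘ₗ (cyclicShift t).2.1,
         (cyclicShift t).2.2 ∘ₗ (cyclicShift s).2.2 - (cyclicShift s).2.2 ∘ₗ (cyclicShift t).2.2)) := by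
  refine ⟨?_, fun t => rfl, fun t s => rfl, fun a t => rfl, fun t s => rfl⟩
  intro t ht
  rw [hTri] at ht
  obtain ⟨h0, h1, h2', hT⟩ := ht
  rw [hTri]
  -- either C is trivial or n 1 = 1
  have hbul' : ∀ x y : C, bul x y = conj n x * conj n y := by
    intro x y; rw [hbul]; rfl
  by_cases hn1 : n 1 = 1
  · -- main case
    refine ⟨h2', h0, h1, ?_⟩
    -- trilinear form identity from hT
    have hcyc : ∀ x y z : C, QuadraticMap.polar n (bul x y) z =
        QuadraticMap.polar n (bul y z) x := by
      intro x y z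
      rw [hbul' x y, hbul' y z]
      exact aux_cyc n hmul hn1 x y z
    have hstar : ∀ x y z : C, QuadraticMap.polar n (bul (t.2.1 x) y) z +
        QuadraticMap.polar n (bul x (t.2.2 y)) z +
        QuadraticMap.polar n (bul x y) (t.1 z) = 0 := by
      intro x y z
      have e1 : QuadraticMap.polar n (t.1 (bul x y)) z =
          QuadraticMap.polar n (bul (t.2.1 x) y) z +
          QuadraticMap.polar n (bul x (t.2.2 y)) z := by
        rw [hT x y, QuadraticMap.polar_add_left]
      have e2 : QuadraticMap.polar n (t.1 (bul x y)) z +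
          QuadraticMap.polar n (bul x y) (t.1 z) = 0 := h0 _ _
      linear_combination e2 - e1
    -- shifted identity
    have hstar2 : ∀ x y z : C, QuadraticMap.polar n (bul (t.1 x) y) z +
        QuadraticMap.polar n (bul x (t.2.1 y)) z +
        QuadraticMap.polar n (bul x y) (t.2.2 z) = 0 := by
      intro x y z
      have h := hstar y z x
      rw [hcyc (t.2.1 y) z x, hcyc z x (t.2.1 y),
        hcyc y (t.2.2 z) x, hcyc (t.2.2 z) x y,
        hcyc y z (t.1 x), hcyc z (t.1 x) y] at h
      linear_combination h
    intro x y
    have key : ∀ z : C, QuadraticMap.polar n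
        (t.2.2 (bul x y) - (bul (t.1 x) y + bul x (t.2.1 y))) z = 0 := by
      intro z
      rw [QuadraticMap.polar_sub_left, QuadraticMap.polar_add_left]
      have e2 : QuadraticMap.polar n (t.2.2 (bul x y)) z +
          QuadraticMap.polar n (bul x y) (t.2.2 z) = 0 := h2' _ _
      have h := hstar2 x y z
      linear_combination e2 - h
    have := hnd _ key
    rw [sub_eq_zero] at this
    exact this
  · -- degenerate case: n ≡ 0, so C is trivial
    have hn0 : n 1 = 0 := by
      have h := hmul 1 1
      rw [mul_one] at h
      have hz : n 1 * (n 1 - 1) = 0 := by linear_combination h.symm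
      rcases mul_eq_zero.mp hz with h' | h'
      · exact h'
      · exact absurd (sub_eq_zero.mp h') hn1
    have hnx : ∀ x : C, n x = 0 := by
      intro x
      have := hmul x 1
      rw [mul_one, hn0, mul_zero] at this
      exact this
    have htriv : ∀ x : C, x = 0 := by
      intro x
      refine hnd x fun y => ?_
      simp [QuadraticMap.polar, hnx]
    refine ⟨?_, ?_, ?_, ?_⟩ <;> intro u v
    · rw [htriv u, htriv v]; simp
    · rw [htriv u, htriv v]; simp
    · rw [htriv u, htriv v]; simp
    · rw [htriv (Prod.fst (cyclicShift t) (bul u v)),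
        htriv (bul ((cyclicShift t).2.1 u) v + bul u ((cyclicShift t).2.2 v))]
end
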